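/- arXiv:2212.06355 — 5 statements merged into one kernel-verified Lean document; each statement's English description precedes it below -/
import Mathlib

section
/- Let (Ω, P) be a probability space carrying random variables S ∈ 𝒮, A ∈ 𝒜 (finite sets) and potential rewards {R(a)}_{a∈𝒜} (real-valued, integrable), and set R = R(A) (consistency). Assume for each a ∈ 𝒜 that A and R(a) are conditionally independent given S (unconfoundedness), and that π^b(a|s) := P(A=a | S=s) > 0 whenever π^e(a|s) > 0 and P(S=s) > 0 (weak positivity). Then E[Σ_{a∈𝒜} π^e(a|S) R(a)] = E[(π^e(A|S)/π^b(A|S))·R]. -/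
open MeasureTheory

/-- Potential-outcome framework on a probability space `(Ω, P)` with finite
state space `𝒮` and finite action space `𝒜`, integrable potential rewards `R(a)`, observed
reward `R = R(A)` (consistency), conditional independence of `A` and `R(a)` given `S`
(unconfoundedness), behavior policy `π^b(a|s) = P(A = a | S = s)` and weak positivity.
Then `E[Σ_a π^e(a|S) R(a)] = E[(π^e(A|S)/π^b(A|S)) · R(A)]`. -/
theorem potential_outcome_ipw_identification
    {Ω : Type} [MeasurableSpace Ω] (P : Measure Ω) [IsProbabilityMeasure P]
    {𝒮 𝒜 : Type} [Fintype 𝒮] [Fintype 𝒜]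
    (S : Ω → 𝒮) (A : Ω → 𝒜) (R : 𝒜 → Ω → ℝ)
    (hSmeas : ∀ s, MeasurableSet {ω | S ω = s})
    (hAmeas : ∀ a, MeasurableSet {ω | A ω = a})
    (hRmeas : ∀ a, Measurable (R a))
    (hRint : ∀ a, Integrable (R a) P)
    (pie : 𝒮 → 𝒜 → ℝ)
    (hpie0 : ∀ s a, 0 ≤ pie s a) (hpie1 : ∀ s, ∑ a, pie s a = 1)
    (pib : 𝒮 → 𝒜 → ℝ)
    (hpib : ∀ s a,
      (P {ω | A ω = a ∧ S ω = s}).toReal = pib s a * (P {ω | S ω = s}).toReal)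
    (hunconf : ∀ (a : 𝒜) (s : 𝒮) (B : Set ℝ), MeasurableSet B →
      P {ω | A ω = a ∧ R a ω ∈ B ∧ S ω = s} * P {ω | S ω = s}
        = P {ω | A ω = a ∧ S ω = s} * P {ω | R a ω ∈ B ∧ S ω = s})
    (hpos : ∀ s a, 0 < pie s a → 0 < (P {ω | S ω = s}).toReal → 0 < pib s a) :
    ∫ ω, (∑ a, pie (S ω) a * R a ω) ∂P
      = ∫ ω, (pie (S ω) (A ω) / pib (S ω) (A ω)) * R (A ω) ω ∂P := by
  classical
  have hmeasAS : ∀ a s, MeasurableSet {ω | A ω = a ∧ S ω = s} := fun a s =>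
    (hAmeas a).inter (hSmeas s)
  have key : ∀ a s, pie s a * ∫ ω in {ω | S ω = s}, R a ω ∂P
      = (pie s a / pib s a) * ∫ ω in {ω | A ω = a ∧ S ω = s}, R a ω ∂P := by
    intro a s
    by_cases hpie : pie s a = 0
    · simp [hpie]
    by_cases hs : P {ω | S ω = s} = 0
    · have h2 : P {ω | A ω = a ∧ S ω = s} = 0 :=
        measure_mono_null (fun ω hω => hω.2) hs
      have r1 : P.restrict {ω | S ω = s} = 0 := Measure.restrict_eq_zero.mpr hs
      have r2 : P.restrict {ω | A ω = a ∧ S ω = s} = 0 := Measure.restrict_eq_zero.mpr h2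
      rw [r1, r2]
      simp
    · have hmeq : (P {ω | S ω = s}) • Measure.map (R a) (P.restrict {ω | A ω = a ∧ S ω = s})
          = (P {ω | A ω = a ∧ S ω = s}) • Measure.map (R a) (P.restrict {ω | S ω = s}) := by
        ext B hB
        rw [Measure.smul_apply, Measure.smul_apply,
          Measure.map_apply (hRmeas a) hB, Measure.map_apply (hRmeas a) hB,
          Measure.restrict_apply ((hRmeas a) hB), Measure.restrict_apply ((hRmeas a) hB)]
        have h1 : R a ⁻¹' B ∩ {ω | A ω = a ∧ S ω = s}
            = {ω | A ω = a ∧ R a ω ∈ B ∧ S ω = s} := by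
          ext ω; simp [Set.mem_preimage]; tauto
        have h2 : R a ⁻¹' B ∩ {ω | S ω = s} = {ω | R a ω ∈ B ∧ S ω = s} := by
          ext ω; simp [Set.mem_preimage]
        rw [h1, h2, smul_eq_mul, smul_eq_mul, mul_comm]
        exact hunconf a s B hB
      have hint := congrArg (fun μ : Measure ℝ => ∫ x, x ∂μ) hmeq
      simp only [integral_smul_measure] at hint
      have hmap : ∀ (T : Set Ω), (∫ x, x ∂(Measure.map (R a) (P.restrict T)))
          = ∫ ω in T, R a ω ∂P := fun T =>
        integral_map (hRmeas a).aemeasurable aestronglyMeasurable_id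
      rw [hmap, hmap] at hint
      set cs := (P {ω | S ω = s}).toReal with hcs
      set Ias := ∫ ω in {ω | A ω = a ∧ S ω = s}, R a ω ∂P
      set Is := ∫ ω in {ω | S ω = s}, R a ω ∂P
      have hcspos : 0 < cs := ENNReal.toReal_pos hs (measure_ne_top P _)
      have hpibpos : 0 < pib s a :=
        hpos s a ((hpie0 s a).lt_of_ne (Ne.symm hpie)) hcspos
      have hcas : (P {ω | A ω = a ∧ S ω = s}).toReal = pib s a * cs := hpib s a
      rw [hcas] at hint
      -- hint : cs • Ias = (pib s a * cs) • Is
      have hIas : Ias = pib s a * Is := by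
        have : cs * Ias = cs * (pib s a * Is) := by
          rw [smul_eq_mul, smul_eq_mul] at hint; linarith [hint]
        exact mul_left_cancel₀ (ne_of_gt hcspos) this
      rw [hIas]
      field_simp
  -- decomposition of both integrands
  have hLpt : ∀ ω, (∑ a, pie (S ω) a * R a ω)
      = ∑ a, ∑ s, Set.indicator {ω | S ω = s} (fun ω => pie s a * R a ω) ω := by
    intro ω
    refine Finset.sum_congr rfl fun a _ => ?_
    rw [Finset.sum_eq_single (S ω)]
    · simp [Set.indicator_apply]
    · intro s _ hne
      simp only [Set.indicator_apply, Set.mem_setOf_eq]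
      rw [if_neg (fun h => hne h.symm)]
    · simp
  have hRpt : ∀ ω, (pie (S ω) (A ω) / pib (S ω) (A ω)) * R (A ω) ω
      = ∑ a, ∑ s, Set.indicator {ω | A ω = a ∧ S ω = s}
          (fun ω => (pie s a / pib s a) * R a ω) ω := by
    intro ω
    rw [Finset.sum_eq_single (A ω)]
    · rw [Finset.sum_eq_single (S ω)]
      · simp [Set.indicator_apply]
      · intro s _ hne
        simp only [Set.indicator_apply, Set.mem_setOf_eq]
        rw [if_neg (fun h => hne h.2.symm)]
      · simp
    · intro a _ hne
      refine Finset.sum_eq_zero fun s _ => ?_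
      simp only [Set.indicator_apply, Set.mem_setOf_eq]
      rw [if_neg (fun h => hne h.1.symm)]
    · simp
  have hintL : ∀ a s, Integrable
      (Set.indicator {ω | S ω = s} (fun ω => pie s a * R a ω)) P :=
    fun a s => (((hRint a).const_mul _).indicator (hSmeas s))
  have hintR : ∀ a s, Integrable
      (Set.indicator {ω | A ω = a ∧ S ω = s} (fun ω => (pie s a / pib s a) * R a ω)) P :=
    fun a s => (((hRint a).const_mul _).indicator (hmeasAS a s))
  calc ∫ ω, (∑ a, pie (S ω) a * R a ω) ∂P
      = ∫ ω, ∑ a, ∑ s, Set.indicator {ω | S ω = s} (fun ω => pie s a * R a ω) ω ∂P := by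
        exact integral_congr_ae (Filter.Eventually.of_forall hLpt)
    _ = ∑ a, ∑ s, ∫ ω, Set.indicator {ω | S ω = s} (fun ω => pie s a * R a ω) ω ∂P := by
        rw [integral_finset_sum _ (fun a _ => integrable_finset_sum _ (fun s _ => hintL a s))]
        exact Finset.sum_congr rfl fun a _ => integral_finset_sum _ (fun s _ => hintL a s)
    _ = ∑ a, ∑ s, pie s a * ∫ ω in {ω | S ω = s}, R a ω ∂P := by
        refine Finset.sum_congr rfl fun a _ => Finset.sum_congr rfl fun s _ => ?_
        rw [integral_indicator (hSmeas s), integral_const_mul]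
    _ = ∑ a, ∑ s, (pie s a / pib s a) * ∫ ω in {ω | A ω = a ∧ S ω = s}, R a ω ∂P := by
        exact Finset.sum_congr rfl fun a _ => Finset.sum_congr rfl fun s _ => key a s
    _ = ∑ a, ∑ s, ∫ ω, Set.indicator {ω | A ω = a ∧ S ω = s}
          (fun ω => (pie s a / pib s a) * R a ω) ω ∂P := by
        refine Finset.sum_congr rfl fun a _ => Finset.sum_congr rfl fun s _ => ?_
        rw [integral_indicator (hmeasAS a s), integral_const_mul]
    _ = ∫ ω, ∑ a, ∑ s, Set.indicator {ω | A ω = a ∧ S ω = s}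
          (fun ω => (pie s a / pib s a) * R a ω) ω ∂P := by
        rw [integral_finset_sum _ (fun a _ => integrable_finset_sum _ (fun s _ => hintR a s))]
        exact Finset.sum_congr rfl fun a _ => (integral_finset_sum _ (fun s _ => hintR a s)).symm
    _ = ∫ ω, (pie (S ω) (A ω) / pib (S ω) (A ω)) * R (A ω) ω ∂P := by
        exact integral_congr_ae (Filter.Eventually.of_forall fun ω => (hRpt ω).symm)
end

section
/- Let q(s,a) = E_{P_{π^b}}[r | S=s, A=a] be the true outcome regression (defined wherever p_S(s)π^b(a|s) > 0). For any function π̂^b with π̂^b(a|s) > 0 whenever π^e(a|s) > 0 and p_S(s) > 0, the doubly robust estimating function with the true q is unbiased: E_{P_{π^b}}[(π^e(a|s)/π̂^b(a|s))(r − q(s,a)) + q(s,π^e)] = E_{P_{π^e}}[r], where q(s,π^e) = Σ_{a∈𝒜} π^e(a|s) q(s,a). In particular the doubly robust estimator is consistent whenever the outcome model is correct, regardless of the propensity model π̂^b. -/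
open Finset

/-- Non-dynamic setting, finite spaces, weak positivity. Let
`q(s,a) = E_{P_{π^b}}[r | S = s, A = a]` be the true outcome regression. For any propensity
model `π̂^b` with `π̂^b(a|s) > 0` whenever `π^e(a|s) > 0` and `p_S(s) > 0`, the doubly robust
estimating function built with the true `q` is unbiased:
`E_{P_{π^b}}[(π^e(a|s)/π̂^b(a|s))(r − q(s,a)) + q(s,π^e)] = E_{P_{π^e}}[r]`. -/
theorem dr_unbiased_with_true_outcome_regression
    {S A R : Type} [Fintype S] [Fintype A] [Fintype R]
    (rval : R → ℝ)
    (pS : S → ℝ) (pib pie : S → A → ℝ) (pR : S → A → R → ℝ)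
    (hpS0 : ∀ s, 0 ≤ pS s) (hpS1 : ∑ s, pS s = 1)
    (hpib0 : ∀ s a, 0 ≤ pib s a) (hpib1 : ∀ s, ∑ a, pib s a = 1)
    (hpie0 : ∀ s a, 0 ≤ pie s a) (hpie1 : ∀ s, ∑ a, pie s a = 1)
    (hpR0 : ∀ s a r, 0 ≤ pR s a r) (hpR1 : ∀ s a, ∑ r, pR s a r = 1)
    (hpos : ∀ s a, 0 < pS s → 0 < pie s a → 0 < pib s a)
    (q : S → A → ℝ) (hq : ∀ s a, q s a = ∑ r, pR s a r * rval r)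
    (pibhat : S → A → ℝ)
    (hpibhatpos : ∀ s a, 0 < pS s → 0 < pie s a → 0 < pibhat s a) :
    (∑ s, ∑ a, ∑ r, pS s * pib s a * pR s a r *
        ((pie s a / pibhat s a) * (rval r - q s a) + ∑ a', pie s a' * q s a'))
      = ∑ s, ∑ a, ∑ r, pS s * pie s a * pR s a r * rval r := by
  have key : ∀ s a, (∑ r, pS s * pib s a * pR s a r *
        ((pie s a / pibhat s a) * (rval r - q s a) + ∑ a', pie s a' * q s a'))
      = pS s * pib s a * (∑ a', pie s a' * q s a') := by
    intro s a
    have h1 := hpR1 s a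
    have h2 := hq s a
    calc (∑ r, pS s * pib s a * pR s a r *
            ((pie s a / pibhat s a) * (rval r - q s a) + ∑ a', pie s a' * q s a'))
        = pS s * pib s a * ((pie s a / pibhat s a) *
            ((∑ r, pR s a r * rval r) - (∑ r, pR s a r) * q s a)
            + (∑ r, pR s a r) * (∑ a', pie s a' * q s a')) := by
          have : (∑ r, pS s * pib s a * pR s a r *
              ((pie s a / pibhat s a) * (rval r - q s a) + ∑ a', pie s a' * q s a'))
              = (∑ r, (pS s * pib s a * (pie s a / pibhat s a)) * (pR s a r * rval r))
                - (∑ r, (pS s * pib s a * (pie s a / pibhat s a) * q s a) * pR s a r)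
                + (∑ r, (pS s * pib s a * (∑ a', pie s a' * q s a')) * pR s a r) := by
            rw [← Finset.sum_sub_distrib, ← Finset.sum_add_distrib]
            exact Finset.sum_congr rfl fun r _ => by ring
          rw [this, ← Finset.mul_sum, ← Finset.mul_sum, ← Finset.mul_sum]
          ring
      _ = pS s * pib s a * (∑ a', pie s a' * q s a') := by
          rw [h1, ← h2]; ring
  calc (∑ s, ∑ a, ∑ r, pS s * pib s a * pR s a r *
        ((pie s a / pibhat s a) * (rval r - q s a) + ∑ a', pie s a' * q s a'))
      = ∑ s, ∑ a, pS s * pib s a * (∑ a', pie s a' * q s a') := by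
        exact Finset.sum_congr rfl fun s _ => Finset.sum_congr rfl fun a _ => key s a
    _ = ∑ s, pS s * (∑ a', pie s a' * q s a') := by
        refine Finset.sum_congr rfl fun s _ => ?_
        rw [← Finset.sum_mul, ← Finset.mul_sum, hpib1 s, mul_one]
    _ = ∑ s, ∑ a, ∑ r, pS s * pie s a * pR s a r * rval r := by
        refine Finset.sum_congr rfl fun s _ => ?_
        rw [Finset.mul_sum]
        refine Finset.sum_congr rfl fun a _ => ?_
        rw [hq s a, Finset.mul_sum, Finset.mul_sum]
        exact Finset.sum_congr rfl fun r _ => by ring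
end

section
/- In the finite-horizon nonstationary (NMDP) setting with positivity, the random variable Φ = Σ_{t=1}^H γ^{t−1}(λ_t(r_t − Q_t(𝒿_{a_t})) + λ_{t−1} V_t(𝒿_{s_t})) satisfies E_{P_{π^b}}[Φ] = J^{(H)} and Var_{P_{π^b}}[Φ] = Var_{P_{π^b}}[V_1(s_1)] + Σ_{t=1}^H E_{P_{π^b}}[γ^{2(t−1)} λ_t² var(r_t + γ V_{t+1}(𝒿_{s_{t+1}}) | 𝒿_{a_t})], where var(·|𝒿_{a_t}) denotes the conditional variance given the history up to a_t. This expresses the efficiency bound V(𝓜_NMDP) of Theorem 3 as the variance of the efficient influence function. -/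
open Finset

/-- A trajectory of horizon `H`: the triples `(s_t, a_t, r_t)` for `t = 1, …, H`
(0-indexed) together with the final state `s_{H+1}`. -/
abbrev Traj (S A R : Type) (H : ℕ) : Type := (Fin H → S × A × R) × S

variable {S A R : Type} {H : ℕ}

/-- State `s_t` of a trajectory. -/
def stateAt (τ : Traj S A R H) (t : Fin H) : S := (τ.1 t).1

/-- Action `a_t` of a trajectory. -/
def actAt (τ : Traj S A R H) (t : Fin H) : A := (τ.1 t).2.1

/-- Reward `r_t` of a trajectory. -/
def rewAt (τ : Traj S A R H) (t : Fin H) : R := (τ.1 t).2.2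

/-- State `s_{t+1}` of a trajectory. -/
def nextStateAt (τ : Traj S A R H) (t : Fin H) : S :=
  if h : (t : ℕ) + 1 < H then (τ.1 ⟨(t : ℕ) + 1, h⟩).1 else τ.2

/-- Two trajectories share the same history `𝒿_{s_t} = (s_1,a_1,r_1,…,s_t)`. -/
def agreeS (t : Fin H) (τ τ' : Traj S A R H) : Prop :=
  (∀ k : Fin H, k < t → τ.1 k = τ'.1 k) ∧ stateAt τ t = stateAt τ' t

/-- Two trajectories share the same history `𝒿_{a_t} = (s_1,a_1,r_1,…,s_t,a_t)`. -/
def agreeA (t : Fin H) (τ τ' : Traj S A R H) : Prop :=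
  (∀ k : Fin H, k < t → τ.1 k = τ'.1 k) ∧ stateAt τ t = stateAt τ' t ∧ actAt τ t = actAt τ' t

/-- Probability of a trajectory under initial distribution `p1`, (history-dependent)
policy `pol` and (history-dependent) transition/reward kernels `p`. -/
noncomputable def trajProb [NeZero H] (p1 : S → ℝ)
    (pol : Fin H → Traj S A R H → A → ℝ) (p : Fin H → Traj S A R H → S × R → ℝ)
    (τ : Traj S A R H) : ℝ :=
  p1 (stateAt τ 0) *
    ∏ t : Fin H, (pol t τ (actAt τ t) * p t τ (nextStateAt τ t, rewAt τ t))

/-- Expectation of `f` over trajectories. -/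
noncomputable def Eexp [NeZero H] [Fintype S] [Fintype A] [Fintype R] (p1 : S → ℝ)
    (pol : Fin H → Traj S A R H → A → ℝ) (p : Fin H → Traj S A R H → S × R → ℝ)
    (f : Traj S A R H → ℝ) : ℝ :=
  ∑ τ : Traj S A R H, trajProb p1 pol p τ * f τ

/-- Cumulative density ratio `λ_t = ∏_{k ≤ t} π^e_k(a_k|𝒿_{s_k}) / π^b_k(a_k|𝒿_{s_k})`. -/
noncomputable def cumRatio (pib pie : Fin H → Traj S A R H → A → ℝ) (t : Fin H)
    (τ : Traj S A R H) : ℝ :=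
  ∏ k : Fin H, if k ≤ t then pie k τ (actAt τ k) / pib k τ (actAt τ k) else 1

/-- Replace the action at time `t` by `a`. -/
def setAct (t : Fin H) (a : A) (τ : Traj S A R H) : Traj S A R H :=
  (fun k => if k = t then ((τ.1 k).1, a, (τ.1 k).2.2) else τ.1 k, τ.2)

/-- Replace the pair `(s_{t+1}, r_t)` of the trajectory by `sr`. -/
def updNext (t : Fin H) (sr : S × R) (τ : Traj S A R H) : Traj S A R H :=
  if h : (t : ℕ) + 1 < H then
    (fun k => if k = t then ((τ.1 k).1, (τ.1 k).2.1, sr.2)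
      else if k = (⟨(t : ℕ) + 1, h⟩ : Fin H) then (sr.1, (τ.1 k).2.1, (τ.1 k).2.2)
      else τ.1 k, τ.2)
  else
    (fun k => if k = t then ((τ.1 k).1, (τ.1 k).2.1, sr.2) else τ.1 k, sr.1)

/-- `g_{t-1}` when `t > 0`, and `1` for `t = 0` (the convention `λ_0 = 1`). -/
noncomputable def predOr1 (g : Fin H → Traj S A R H → ℝ) (t : Fin H)
    (τ : Traj S A R H) : ℝ :=
  if _ : 0 < (t : ℕ) then
    g ⟨(t : ℕ) - 1, Nat.lt_of_le_of_lt (Nat.sub_le _ _) t.isLt⟩ τ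
  else 1

open scoped Classical

namespace NMDPaux

variable {S A R : Type} {H : ℕ}

/-- state at stage `m`, where `m = H` means the final state. -/
def sN (m : ℕ) (τ : Traj S A R H) : S :=
  if h : m < H then (τ.1 ⟨m, h⟩).1 else τ.2

lemma sN_of_ge {m : ℕ} (h : H ≤ m) (τ : Traj S A R H) : sN m τ = τ.2 :=
  dif_neg (by omega)

lemma sN_of_lt {m : ℕ} (h : m < H) (τ : Traj S A R H) : sN m τ = (τ.1 ⟨m, h⟩).1 :=
  dif_pos h

/-- Agreement of two trajectories up to the state at stage `m`. -/
def compatN (m : ℕ) (τ τ' : Traj S A R H) : Prop :=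
  (∀ k : Fin H, (k : ℕ) < m → τ.1 k = τ'.1 k) ∧ sN m τ = sN m τ'

lemma compatN_refl (m : ℕ) (τ : Traj S A R H) : compatN m τ τ := ⟨fun _ _ => rfl, rfl⟩

lemma compatN_symm {m : ℕ} {τ τ' : Traj S A R H} (h : compatN m τ τ') : compatN m τ' τ :=
  ⟨fun k hk => (h.1 k hk).symm, h.2.symm⟩

lemma compatN_trans {m : ℕ} {τ τ' τ'' : Traj S A R H} (h : compatN m τ τ')
    (h' : compatN m τ' τ'') : compatN m τ τ'' :=
  ⟨fun k hk => (h.1 k hk).trans (h'.1 k hk), h.2.trans h'.2⟩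

lemma compatN_sN {m j : ℕ} (hj : j ≤ m) {τ τ' : Traj S A R H} (h : compatN m τ τ') :
    sN j τ = sN j τ' := by
  rcases eq_or_lt_of_le hj with rfl | hlt
  · exact h.2
  · by_cases hH : j < H
    · rw [sN_of_lt hH, sN_of_lt hH]
      exact congrArg Prod.fst (h.1 ⟨j, hH⟩ hlt)
    · push_neg at hH
      rw [sN_of_ge hH, sN_of_ge hH]
      have hm : H ≤ m := le_trans hH (le_of_lt hlt)
      have := h.2
      rwa [sN_of_ge hm, sN_of_ge hm] at this

lemma compatN_of_le {m m' : ℕ} (hmm : m ≤ m') {τ τ' : Traj S A R H}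
    (h : compatN m' τ τ') : compatN m τ τ' :=
  ⟨fun k hk => h.1 k (lt_of_lt_of_le hk hmm), compatN_sN hmm h⟩

lemma compatN_top {τ τ' : Traj S A R H} : compatN H τ τ' ↔ τ = τ' := by
  constructor
  · rintro ⟨h1, h2⟩
    refine Prod.ext ?_ ?_
    · funext k; exact h1 k k.isLt
    · rwa [sN_of_ge le_rfl, sN_of_ge le_rfl] at h2
  · rintro rfl; exact compatN_refl _ _

lemma nextStateAt_eq_sN (τ : Traj S A R H) (t : Fin H) :
    nextStateAt τ t = sN ((t : ℕ) + 1) τ := rfl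

lemma stateAt_eq_sN (τ : Traj S A R H) (t : Fin H) : stateAt τ t = sN (t : ℕ) τ := by
  rw [sN_of_lt t.isLt]; rfl

lemma agreeS_iff_compatN (t : Fin H) (τ τ' : Traj S A R H) :
    agreeS t τ τ' ↔ compatN (t : ℕ) τ τ' := by
  unfold agreeS compatN
  rw [stateAt_eq_sN, stateAt_eq_sN]
  exact Iff.rfl

lemma compatN_stateAt {m : ℕ} {τ τ' : Traj S A R H} (h : compatN m τ τ') {t : Fin H}
    (ht : (t : ℕ) ≤ m) : stateAt τ t = stateAt τ' t := by
  rw [stateAt_eq_sN, stateAt_eq_sN]; exact compatN_sN ht h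

lemma compatN_agreeS {m : ℕ} {τ τ' : Traj S A R H} (h : compatN m τ τ') {t : Fin H}
    (ht : (t : ℕ) ≤ m) : agreeS t τ τ' :=
  (agreeS_iff_compatN t τ τ').2 (compatN_of_le ht h)

lemma compatN_agreeA {m : ℕ} {τ τ' : Traj S A R H} (h : compatN m τ τ') {t : Fin H}
    (ht : (t : ℕ) < m) : agreeA t τ τ' := by
  have hc := h.1 t ht
  exact ⟨fun k hk => h.1 k (lt_trans hk ht), congrArg Prod.fst hc,
    congrArg (fun x => x.2.1) hc⟩

lemma compatN_actAt {m : ℕ} {τ τ' : Traj S A R H} (h : compatN m τ τ') {t : Fin H}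
    (ht : (t : ℕ) < m) : actAt τ t = actAt τ' t :=
  congrArg (fun x => x.2.1) (h.1 t ht)

lemma compatN_rewAt {m : ℕ} {τ τ' : Traj S A R H} (h : compatN m τ τ') {t : Fin H}
    (ht : (t : ℕ) < m) : rewAt τ t = rewAt τ' t :=
  congrArg (fun x => x.2.2) (h.1 t ht)

/-- Set the action at `t` to `a` and the pair `(s_{t+1}, r_t)` to `sr`. -/
def modAt (t : Fin H) (a : A) (sr : S × R) (τ : Traj S A R H) : Traj S A R H :=
  updNext t sr (setAct t a τ)

lemma setAct_fst_ne {t k : Fin H} (h : k ≠ t) (a : A) (τ : Traj S A R H) :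
    (setAct t a τ).1 k = τ.1 k := if_neg h

lemma setAct_fst_self (t : Fin H) (a : A) (τ : Traj S A R H) :
    (setAct t a τ).1 t = ((τ.1 t).1, a, (τ.1 t).2.2) := if_pos rfl

lemma setAct_self (t : Fin H) (τ : Traj S A R H) : setAct t (actAt τ t) τ = τ := by
  refine Prod.ext ?_ rfl
  funext k
  by_cases h : k = t
  · subst h; simp [setAct, actAt]
  · simp [setAct, h]

lemma modAt_fst_of_ne {t k : Fin H} (h1 : k ≠ t) (h2 : (k : ℕ) ≠ (t : ℕ) + 1) (a : A)
    (sr : S × R) (τ : Traj S A R H) : (modAt t a sr τ).1 k = τ.1 k := by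
  unfold modAt updNext
  split
  · simp only [h1, if_false]
    rw [if_neg, setAct_fst_ne h1]
    intro hk
    exact h2 (by rw [hk])
  · simp only [h1, if_false]
    exact setAct_fst_ne h1 a τ

lemma modAt_fst_self (t : Fin H) (a : A) (sr : S × R) (τ : Traj S A R H) :
    (modAt t a sr τ).1 t = ((τ.1 t).1, a, sr.2) := by
  unfold modAt updNext
  split <;> simp [setAct_fst_self]

lemma modAt_sN_next (t : Fin H) (a : A) (sr : S × R) (τ : Traj S A R H) :
    sN ((t : ℕ) + 1) (modAt t a sr τ) = sr.1 := by
  by_cases h : (t : ℕ) + 1 < H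
  · rw [sN_of_lt h]
    unfold modAt updNext
    rw [dif_pos h]
    have hne : (⟨(t : ℕ) + 1, h⟩ : Fin H) ≠ t := by
      intro hk
      have : (t : ℕ) + 1 = (t : ℕ) := by simpa using congrArg Fin.val hk
      omega
    simp [hne]
  · rw [sN_of_ge (by omega)]
    unfold modAt updNext
    rw [dif_neg h]

lemma modAt_reconstruct (t : Fin H) (τ : Traj S A R H) :
    modAt t (actAt τ t) (nextStateAt τ t, rewAt τ t) τ = τ := by
  unfold modAt
  rw [setAct_self]
  unfold updNext nextStateAt
  by_cases h : (t : ℕ) + 1 < H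
  · rw [dif_pos h, dif_pos h]
    refine Prod.ext ?_ rfl
    funext k
    by_cases hk : k = t
    · subst hk; simp [rewAt]
    · by_cases hk2 : k = (⟨(t : ℕ) + 1, h⟩ : Fin H)
      · subst hk2; simp [hk]
      · simp [hk, hk2]
  · rw [dif_neg h, dif_neg h]
    refine Prod.ext ?_ rfl
    funext k
    by_cases hk : k = t
    · subst hk; simp [rewAt]
    · simp [hk]

lemma modAt_stateAt_self (t : Fin H) (a : A) (sr : S × R) (τ : Traj S A R H) :
    stateAt (modAt t a sr τ) t = stateAt τ t := by
  unfold stateAt; rw [modAt_fst_self]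

lemma modAt_actAt_self (t : Fin H) (a : A) (sr : S × R) (τ : Traj S A R H) :
    actAt (modAt t a sr τ) t = a := by
  unfold actAt; rw [modAt_fst_self]

lemma modAt_rewAt_self (t : Fin H) (a : A) (sr : S × R) (τ : Traj S A R H) :
    rewAt (modAt t a sr τ) t = sr.2 := by
  unfold rewAt; rw [modAt_fst_self]

/-- `modAt` only changes the slot `t` and the state at `t+1`. -/
lemma modAt_compat (t : Fin H) (a : A) (sr : S × R) (τ : Traj S A R H) :
    compatN (t : ℕ) (modAt t a sr τ) τ := by
  constructor
  · intro k hk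
    exact modAt_fst_of_ne (by intro h; subst h; omega) (by omega) a sr τ
  · rw [← stateAt_eq_sN, ← stateAt_eq_sN]
    exact modAt_stateAt_self t a sr τ

lemma modAt_eq_updNext (t : Fin H) (a : A) (sr : S × R) (τ : Traj S A R H) :
    modAt t a sr τ = updNext t sr (setAct t a τ) := rfl

lemma updNext_eq_modAt (t : Fin H) (sr : S × R) (τ : Traj S A R H) :
    updNext t sr τ = modAt t (actAt τ t) sr τ := by
  rw [modAt_eq_updNext, setAct_self]

/-- Canonical representative of the class of trajectories sharing a history up to `s_m`. -/
def canonN (dS : S) (dA : A) (dR : R) (m : ℕ) (τ : Traj S A R H) : Traj S A R H :=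
  (fun k => if (k : ℕ) < m then τ.1 k
    else if (k : ℕ) = m then ((τ.1 k).1, dA, dR) else (dS, dA, dR),
   if H ≤ m then τ.2 else dS)

variable {dS : S} {dA : A} {dR : R}

lemma canonN_congr {m : ℕ} {τ τ' : Traj S A R H} (h : compatN m τ τ') :
    canonN dS dA dR m τ = canonN dS dA dR m τ' := by
  unfold canonN
  refine Prod.ext ?_ ?_
  · funext k
    by_cases h1 : (k : ℕ) < m
    · simp only [h1, if_true]; exact h.1 k h1
    · by_cases h2 : (k : ℕ) = m
      · have hm : m < H := h2 ▸ k.isLt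
        have hs := h.2
        rw [sN_of_lt hm, sN_of_lt hm] at hs
        have hk : k = (⟨m, hm⟩ : Fin H) := Fin.ext h2
        simp only [h1, h2, if_true, if_false]
        rw [hk, hs]
        simp
      · simp [h1, h2]
  · by_cases hm : H ≤ m
    · simp only [hm, if_true]
      have := h.2
      rwa [sN_of_ge hm, sN_of_ge hm] at this
    · simp [hm]

lemma compatN_canonN {m : ℕ} (hm : m ≤ H) (τ : Traj S A R H) :
    compatN m (canonN dS dA dR m τ) τ := by
  constructor
  · intro k hk
    simp [canonN, hk]
  · by_cases hH : m < H
    · rw [sN_of_lt hH, sN_of_lt hH]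
      simp [canonN, lt_irrefl]
    · have hm' : m = H := by omega
      subst hm'
      rw [sN_of_ge le_rfl, sN_of_ge le_rfl]
      simp [canonN]

lemma canonN_idem {m : ℕ} (hm : m ≤ H) (τ : Traj S A R H) :
    canonN dS dA dR m (canonN dS dA dR m τ) = canonN dS dA dR m τ :=
  canonN_congr (compatN_canonN hm τ)

lemma canonN_eq_iff {m : ℕ} (hm : m ≤ H) (τ σ : Traj S A R H) :
    canonN dS dA dR m τ = σ ↔
      (canonN dS dA dR m σ = σ ∧ compatN m σ τ) := by
  constructor
  · rintro rfl
    exact ⟨canonN_idem hm τ, compatN_canonN hm τ⟩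
  · rintro ⟨h1, h2⟩
    rw [← canonN_congr h2, h1]

/-- Single-step weight of a trajectory. -/
noncomputable def wgt (pol : Fin H → Traj S A R H → A → ℝ)
    (p : Fin H → Traj S A R H → S × R → ℝ) (t : Fin H) (τ : Traj S A R H) : ℝ :=
  pol t τ (actAt τ t) * p t τ (nextStateAt τ t, rewAt τ t)

lemma trajProb_eq_wgt [NeZero H] (p1 : S → ℝ) (pol : Fin H → Traj S A R H → A → ℝ)
    (p : Fin H → Traj S A R H → S × R → ℝ) (τ : Traj S A R H) :
    trajProb p1 pol p τ = p1 (stateAt τ 0) * ∏ t : Fin H, wgt pol p t τ := rfl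

section Core
set_option linter.unusedSectionVars false

variable [Fintype S] [Fintype A] [Fintype R]
variable {pol : Fin H → Traj S A R H → A → ℝ} {p : Fin H → Traj S A R H → S × R → ℝ}
variable (hpolAd : ∀ t τ τ', agreeS t τ τ' → pol t τ = pol t τ')
variable (hpAd : ∀ t τ τ', agreeA t τ τ' → p t τ = p t τ')

include hpolAd hpAd in
lemma wgt_congr {m : ℕ} {k : Fin H} (hk : (k : ℕ) + 1 ≤ m) {τ τ' : Traj S A R H}
    (h : compatN m τ τ') : wgt pol p k τ = wgt pol p k τ' := by
  unfold wgt
  rw [hpolAd k τ τ' (compatN_agreeS h (by omega)),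
    hpAd k τ τ' (compatN_agreeA h (by omega)),
    compatN_actAt h (by omega), compatN_rewAt h (by omega),
    nextStateAt_eq_sN, nextStateAt_eq_sN, compatN_sN hk h]

include hpolAd hpAd in
lemma wgt_modAt (t : Fin H) (a : A) (sr : S × R) (τ : Traj S A R H) :
    wgt pol p t (modAt t a sr τ) = pol t τ a * p t (setAct t a τ) sr := by
  unfold wgt
  rw [modAt_actAt_self, modAt_rewAt_self, nextStateAt_eq_sN, modAt_sN_next]
  have h1 : pol t (modAt t a sr τ) = pol t τ :=
    hpolAd _ _ _ ((agreeS_iff_compatN _ _ _).2 (modAt_compat t a sr τ))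
  have h2 : p t (modAt t a sr τ) = p t (setAct t a τ) := by
    refine hpAd _ _ _ ⟨fun k hk => ?_, ?_, ?_⟩
    · rw [modAt_fst_of_ne (by intro h; subst h; exact absurd hk (lt_irrefl _))
        (by have := hk; omega) a sr τ, setAct_fst_ne (ne_of_lt hk)]
    · rw [modAt_stateAt_self]
      unfold stateAt
      rw [setAct_fst_self]
    · rw [modAt_actAt_self]
      unfold actAt
      rw [setAct_fst_self]
  rw [h1, h2]

/-- agreement at stage `t+1` with a modified trajectory. -/
lemma compatN_modAt_iff (t : Fin H) (a : A) (sr : S × R) (τ τ' : Traj S A R H) :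
    compatN ((t : ℕ) + 1) (modAt t a sr τ) τ' ↔
      compatN (t : ℕ) τ τ' ∧ a = actAt τ' t ∧ sr = (nextStateAt τ' t, rewAt τ' t) := by
  constructor
  · rintro ⟨h1, h2⟩
    have ht := h1 t (by omega)
    rw [modAt_fst_self] at ht
    refine ⟨⟨fun k hk => ?_, ?_⟩, ?_, ?_⟩
    · rw [← h1 k (by omega), modAt_fst_of_ne (by intro h; subst h; exact absurd hk (lt_irrefl _))
        (by omega) a sr τ]
    · rw [sN_of_lt t.isLt, sN_of_lt t.isLt]
      have h0 := congrArg Prod.fst ht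
      simp only [Prod.fst] at h0
      exact h0
    · exact congrArg (fun x => x.2.1) ht
    · have hs := h2
      rw [modAt_sN_next] at hs
      rw [nextStateAt_eq_sN, ← hs]
      have hr : sr.2 = rewAt τ' t := congrArg (fun x => x.2.2) ht
      exact Prod.ext rfl hr
  · rintro ⟨⟨h1, h2⟩, rfl, rfl⟩
    constructor
    · intro k hk
      by_cases hkt : k = t
      · subst hkt
        rw [modAt_fst_self]
        have : τ'.1 k = ((τ'.1 k).1, (τ'.1 k).2.1, (τ'.1 k).2.2) := rfl
        rw [this]
        have hst : (τ.1 k).1 = (τ'.1 k).1 := by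
          have := h2
          rw [sN_of_lt k.isLt, sN_of_lt k.isLt] at this
          simpa using this
        rw [hst]; rfl
      · have hklt : (k : ℕ) < (t : ℕ) := by
          rcases lt_or_eq_of_le (Nat.lt_succ_iff.1 hk) with h | h
          · exact h
          · exact absurd (Fin.ext h) hkt
        rw [modAt_fst_of_ne hkt (by omega) _ _ τ]
        exact h1 k hklt
    · rw [modAt_sN_next, nextStateAt_eq_sN]

end Core
end NMDPaux
section SumHelpers

variable {α β γ' : Type*} [Fintype α] [Fintype β] [Fintype γ']

lemma sum_sum_ite_pair (P : Prop) [Decidable P] (a₀ : α) (b₀ : β) (x : ℝ) :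
    (∑ a : α, ∑ b : β, if P ∧ a = a₀ ∧ b = b₀ then x else 0) = if P then x else 0 := by
  classical
  by_cases hP : P
  · simp only [hP, true_and, ← ite_and]
    rw [Finset.sum_eq_single a₀]
    · simp [Finset.sum_ite_eq']
    · intro b _ hb
      apply Finset.sum_eq_zero
      intro sr _
      simp [hb]
    · intro h; exact absurd (Finset.mem_univ a₀) h
  · simp [hP]

lemma sum_ite_eq_left' (P : Prop) [Decidable P] (c : α) (h : α → ℝ) :
    (∑ σ : α, if P ∧ c = σ then h σ else 0) = if P then h c else 0 := by
  classical
  by_cases hP : P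
  · simp only [hP, true_and]
    rw [Finset.sum_ite_eq]
    simp
  · simp [hP]

lemma sum3_ite (P : Prop) [Decidable P] (a₀ : α) (b₀ : β) (c₀ : γ') (x : ℝ) :
    (∑ a : α, ∑ b : β, ∑ c : γ', if P ∧ a = a₀ ∧ b = b₀ ∧ c = c₀ then x else 0)
      = if P then x else 0 := by
  classical
  by_cases hP : P
  · simp only [hP, true_and]
    rw [Finset.sum_eq_single a₀]
    · simp only [true_and, eq_self_iff_true]
      rw [Finset.sum_eq_single b₀]
      · simp [Finset.sum_ite_eq']
      · intro b _ hb
        apply Finset.sum_eq_zero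
        intro c _
        simp [hb]
      · intro h; exact absurd (Finset.mem_univ b₀) h
    · intro a _ ha
      apply Finset.sum_eq_zero; intro b _
      apply Finset.sum_eq_zero; intro c _
      simp [ha]
    · intro h; exact absurd (Finset.mem_univ a₀) h
  · simp [hP]

end SumHelpers
namespace NMDPaux

section Core2
set_option linter.unusedSectionVars false
set_option maxHeartbeats 1000000

variable {S A R : Type} {H : ℕ} [Fintype S] [Fintype A] [Fintype R]
variable {pol : Fin H → Traj S A R H → A → ℝ} {p : Fin H → Traj S A R H → S × R → ℝ}

lemma norm_suffix
    (hpol1 : ∀ t τ, ∑ a, pol t τ a = 1)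
    (hpolAd : ∀ t τ τ', agreeS t τ τ' → pol t τ = pol t τ')
    (hpsum : ∀ t τ, ∑ sr : S × R, p t τ sr = 1)
    (hpAd : ∀ t τ τ', agreeA t τ τ' → p t τ = p t τ')
    (m : ℕ) (hm : m ≤ H) (τ : Traj S A R H) :
    ∑ τ' : Traj S A R H, (if compatN m τ τ' then
        ∏ k : Fin H, (if m ≤ (k : ℕ) then wgt pol p k τ' else 1) else 0) = 1 := by
  rcases eq_or_lt_of_le hm with heq | hlt
  · have h1 : ∀ τ' : Traj S A R H,
        (∏ k : Fin H, (if m ≤ (k : ℕ) then wgt pol p k τ' else 1)) = 1 :=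
      fun τ' => Finset.prod_eq_one (fun k _ => if_neg (by have := k.isLt; omega))
    simp only [h1, heq, compatN_top]
    rw [Finset.sum_ite_eq]
    simp
    exact Finset.prod_eq_one (fun k _ => if_neg (not_le.2 k.isLt))
  · set t : Fin H := ⟨m, hlt⟩ with htdef
    have hmt : (t : ℕ) = m := rfl
    have IH : ∀ (a : A) (sr : S × R),
        ∑ τ' : Traj S A R H, (if compatN (m + 1) (modAt t a sr τ) τ' then
          ∏ k : Fin H, (if m + 1 ≤ (k : ℕ) then wgt pol p k τ' else 1) else 0) = 1 :=
      fun a sr => norm_suffix hpol1 hpolAd hpsum hpAd (m + 1) (by omega) _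
    have hsplit : ∀ τ' : Traj S A R H,
        (∏ k : Fin H, (if m ≤ (k : ℕ) then wgt pol p k τ' else 1))
          = wgt pol p t τ' * ∏ k : Fin H, (if m + 1 ≤ (k : ℕ) then wgt pol p k τ' else 1) := by
      intro τ'
      have hpt : ∀ k : Fin H, (if m ≤ (k : ℕ) then wgt pol p k τ' else 1)
          = (if k = t then wgt pol p k τ' else 1)
            * (if m + 1 ≤ (k : ℕ) then wgt pol p k τ' else 1) := by
        intro k
        by_cases hk : k = t
        · subst hk
          rw [if_pos (le_of_eq hmt.symm), if_pos rfl, if_neg (by omega), mul_one]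
        · have hne : (k : ℕ) ≠ m := fun h => hk (Fin.ext (h.trans hmt.symm))
          by_cases h2 : m ≤ (k : ℕ)
          · rw [if_pos h2, if_neg hk, if_pos (by omega), one_mul]
          · rw [if_neg h2, if_neg hk, if_neg (by omega), one_mul]
      rw [Finset.prod_congr rfl (fun k _ => hpt k), Finset.prod_mul_distrib]
      congr 1
      rw [Finset.prod_ite_eq']
      simp
    have hexp : ∀ (τ' : Traj S A R H) (X : ℝ),
        (∑ a : A, ∑ sr : S × R, (if compatN (m + 1) (modAt t a sr τ) τ' then X else 0))
          = (if compatN m τ τ' then X else 0) := by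
      intro τ' X
      have hiff : ∀ (a : A) (sr : S × R), compatN (m + 1) (modAt t a sr τ) τ'
          ↔ (compatN m τ τ' ∧ a = actAt τ' t ∧ sr = (nextStateAt τ' t, rewAt τ' t)) := by
        intro a sr
        have := compatN_modAt_iff t a sr τ τ'
        rwa [hmt] at this
      by_cases hc : compatN m τ τ'
      · rw [if_pos hc]
        rw [Finset.sum_eq_single (actAt τ' t)
          (fun a _ ha => Finset.sum_eq_zero fun sr _ =>
            if_neg (fun hcc => ha (((hiff a sr).1 hcc).2.1)))
          (fun h => absurd (Finset.mem_univ _) h)]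
        rw [Finset.sum_eq_single ((nextStateAt τ' t, rewAt τ' t) : S × R)
          (fun sr _ hsr => if_neg (fun hcc => hsr (((hiff _ sr).1 hcc).2.2)))
          (fun h => absurd (Finset.mem_univ _) h)]
        exact if_pos ((hiff _ _).2 ⟨hc, rfl, rfl⟩)
      · rw [if_neg hc]
        apply Finset.sum_eq_zero; intro a _
        apply Finset.sum_eq_zero; intro sr _
        exact if_neg (fun hcc => hc ((hiff a sr).1 hcc).1)
    calc ∑ τ' : Traj S A R H, (if compatN m τ τ' then
            ∏ k : Fin H, (if m ≤ (k : ℕ) then wgt pol p k τ' else 1) else 0)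
        = ∑ τ' : Traj S A R H, ∑ a : A, ∑ sr : S × R,
            (if compatN (m + 1) (modAt t a sr τ) τ' then
              wgt pol p t τ' * ∏ k : Fin H, (if m + 1 ≤ (k : ℕ) then wgt pol p k τ' else 1)
            else 0) := by
          refine Finset.sum_congr rfl (fun τ' _ => ?_)
          rw [hsplit τ']
          exact (hexp τ' _).symm
      _ = ∑ a : A, ∑ sr : S × R, ∑ τ' : Traj S A R H,
            (if compatN (m + 1) (modAt t a sr τ) τ' then
              wgt pol p t τ' * ∏ k : Fin H, (if m + 1 ≤ (k : ℕ) then wgt pol p k τ' else 1)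
            else 0) := by
          rw [Finset.sum_comm]
          exact Finset.sum_congr rfl (fun a _ => Finset.sum_comm)
      _ = ∑ a : A, ∑ sr : S × R, pol t τ a * p t (setAct t a τ) sr := by
          refine Finset.sum_congr rfl (fun a _ => Finset.sum_congr rfl (fun sr _ => ?_))
          have hterm : ∀ τ' : Traj S A R H,
              (if compatN (m + 1) (modAt t a sr τ) τ' then
                wgt pol p t τ' * ∏ k : Fin H, (if m + 1 ≤ (k : ℕ) then wgt pol p k τ' else 1)
              else 0)
              = pol t τ a * p t (setAct t a τ) sr *
                (if compatN (m + 1) (modAt t a sr τ) τ' then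
                  ∏ k : Fin H, (if m + 1 ≤ (k : ℕ) then wgt pol p k τ' else 1) else 0) := by
            intro τ'
            by_cases hc : compatN (m + 1) (modAt t a sr τ) τ'
            · rw [if_pos hc, if_pos hc]
              have h1 : wgt pol p t τ' = pol t τ a * p t (setAct t a τ) sr :=
                ((wgt_congr hpolAd hpAd (by rw [hmt]) hc).symm).trans
                  (wgt_modAt hpolAd hpAd t a sr τ)
              rw [h1]
            · simp [hc]
          simp only [hterm]
          rw [← Finset.mul_sum, IH a sr, mul_one]
      _ = 1 := by
          rw [Finset.sum_congr rfl (fun a (_ : a ∈ Finset.univ) => by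
            rw [← Finset.mul_sum, hpsum t (setAct t a τ), mul_one])]
          exact hpol1 t τ
termination_by H - m

variable [NeZero H] {p1 : S → ℝ}

lemma exp_canon (dS : S) (dA : A) (dR : R)
    (hpol1 : ∀ t τ, ∑ a, pol t τ a = 1)
    (hpolAd : ∀ t τ τ', agreeS t τ τ' → pol t τ = pol t τ')
    (hpsum : ∀ t τ, ∑ sr : S × R, p t τ sr = 1)
    (hpAd : ∀ t τ τ', agreeA t τ τ' → p t τ = p t τ')
    (m : ℕ) (hm : m ≤ H) (F : Traj S A R H → ℝ)
    (hF : ∀ τ τ', compatN m τ τ' → F τ = F τ') :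
    Eexp p1 pol p F = ∑ σ : Traj S A R H, (if canonN dS dA dR m σ = σ then
      p1 (stateAt σ 0) * (∏ k : Fin H, (if (k : ℕ) < m then wgt pol p k σ else 1)) * F σ
    else 0) := by
  have step1 : ∀ σ : Traj S A R H, (if canonN dS dA dR m σ = σ then
      p1 (stateAt σ 0) * (∏ k : Fin H, (if (k : ℕ) < m then wgt pol p k σ else 1)) * F σ
    else 0)
      = ∑ τ' : Traj S A R H, (if canonN dS dA dR m σ = σ then
          (if compatN m σ τ' then
            p1 (stateAt σ 0) * (∏ k : Fin H, (if (k : ℕ) < m then wgt pol p k σ else 1)) * F σ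
              * ∏ k : Fin H, (if m ≤ (k : ℕ) then wgt pol p k τ' else 1)
          else 0) else 0) := by
    intro σ
    by_cases hc : canonN dS dA dR m σ = σ
    · rw [if_pos hc]
      simp only [if_pos hc]
      have hpush : ∀ τ' : Traj S A R H, (if compatN m σ τ' then
            p1 (stateAt σ 0) * (∏ k : Fin H, (if (k : ℕ) < m then wgt pol p k σ else 1)) * F σ
              * ∏ k : Fin H, (if m ≤ (k : ℕ) then wgt pol p k τ' else 1)
          else 0)
          = p1 (stateAt σ 0) * (∏ k : Fin H, (if (k : ℕ) < m then wgt pol p k σ else 1)) * F σ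
            * (if compatN m σ τ' then
                ∏ k : Fin H, (if m ≤ (k : ℕ) then wgt pol p k τ' else 1) else 0) := by
        intro τ'
        by_cases h : compatN m σ τ' <;> simp [h]
      rw [Finset.sum_congr rfl fun τ' _ => hpush τ', ← Finset.mul_sum,
        norm_suffix hpol1 hpolAd hpsum hpAd m hm σ, mul_one]
    · simp [hc]
  have step2 : ∀ τ' : Traj S A R H,
      (∑ σ : Traj S A R H, (if canonN dS dA dR m σ = σ then
          (if compatN m σ τ' then
            p1 (stateAt σ 0) * (∏ k : Fin H, (if (k : ℕ) < m then wgt pol p k σ else 1)) * F σ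
              * ∏ k : Fin H, (if m ≤ (k : ℕ) then wgt pol p k τ' else 1)
          else 0) else 0))
        = trajProb p1 pol p τ' * F τ' := by
    intro τ'
    have hterm : ∀ σ : Traj S A R H, (if canonN dS dA dR m σ = σ then
          (if compatN m σ τ' then
            p1 (stateAt σ 0) * (∏ k : Fin H, (if (k : ℕ) < m then wgt pol p k σ else 1)) * F σ
              * ∏ k : Fin H, (if m ≤ (k : ℕ) then wgt pol p k τ' else 1)
          else 0) else 0)
        = (if canonN dS dA dR m τ' = σ then trajProb p1 pol p τ' * F τ' else 0) := by
      intro σ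
      by_cases hc : canonN dS dA dR m τ' = σ
      · rw [if_pos hc]
        obtain ⟨h1, h2⟩ := (canonN_eq_iff hm τ' σ).1 hc
        rw [if_pos h1, if_pos h2]
        have hs : stateAt σ 0 = stateAt τ' 0 :=
          compatN_stateAt h2 (by simp)
        have hprod : (∏ k : Fin H, (if (k : ℕ) < m then wgt pol p k σ else 1))
            = ∏ k : Fin H, (if (k : ℕ) < m then wgt pol p k τ' else 1) := by
          refine Finset.prod_congr rfl fun k _ => ?_
          by_cases hk : (k : ℕ) < m
          · rw [if_pos hk, if_pos hk, wgt_congr hpolAd hpAd (by omega) h2]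
          · rw [if_neg hk, if_neg hk]
        have hmul : (∏ k : Fin H, (if (k : ℕ) < m then wgt pol p k τ' else 1))
            * (∏ k : Fin H, (if m ≤ (k : ℕ) then wgt pol p k τ' else 1))
            = ∏ k : Fin H, wgt pol p k τ' := by
          rw [← Finset.prod_mul_distrib]
          refine Finset.prod_congr rfl fun k _ => ?_
          by_cases hk : (k : ℕ) < m
          · rw [if_pos hk, if_neg (by omega), mul_one]
          · rw [if_neg hk, if_pos (by omega), one_mul]
        rw [hs, hprod, hF σ τ' h2, trajProb_eq_wgt, ← hmul]
        ring
      · rw [if_neg hc]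
        by_cases h1 : canonN dS dA dR m σ = σ
        · rw [if_pos h1, if_neg (fun h2 => hc ((canonN_eq_iff hm τ' σ).2 ⟨h1, h2⟩))]
        · rw [if_neg h1]
    rw [Finset.sum_congr rfl fun σ _ => hterm σ, Finset.sum_ite_eq]
    simp
  symm
  calc ∑ σ : Traj S A R H, (if canonN dS dA dR m σ = σ then
        p1 (stateAt σ 0) * (∏ k : Fin H, (if (k : ℕ) < m then wgt pol p k σ else 1)) * F σ
      else 0)
      = ∑ σ : Traj S A R H, ∑ τ' : Traj S A R H, (if canonN dS dA dR m σ = σ then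
          (if compatN m σ τ' then
            p1 (stateAt σ 0) * (∏ k : Fin H, (if (k : ℕ) < m then wgt pol p k σ else 1)) * F σ
              * ∏ k : Fin H, (if m ≤ (k : ℕ) then wgt pol p k τ' else 1)
          else 0) else 0) := Finset.sum_congr rfl fun σ _ => step1 σ
    _ = ∑ τ' : Traj S A R H, ∑ σ : Traj S A R H, (if canonN dS dA dR m σ = σ then
          (if compatN m σ τ' then
            p1 (stateAt σ 0) * (∏ k : Fin H, (if (k : ℕ) < m then wgt pol p k σ else 1)) * F σ
              * ∏ k : Fin H, (if m ≤ (k : ℕ) then wgt pol p k τ' else 1)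
          else 0) else 0) := Finset.sum_comm
    _ = ∑ τ' : Traj S A R H, trajProb p1 pol p τ' * F τ' :=
        Finset.sum_congr rfl fun τ' _ => step2 τ'
    _ = Eexp p1 pol p F := rfl

lemma tower (dS : S) (dA : A) (dR : R)
    (hpol1 : ∀ t τ, ∑ a, pol t τ a = 1)
    (hpolAd : ∀ t τ τ', agreeS t τ τ' → pol t τ = pol t τ')
    (hpsum : ∀ t τ, ∑ sr : S × R, p t τ sr = 1)
    (hpAd : ∀ t τ τ', agreeA t τ τ' → p t τ = p t τ')
    (t : Fin H) (G : Traj S A R H → ℝ)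
    (hG : ∀ τ τ', compatN ((t : ℕ) + 1) τ τ' → G τ = G τ') :
    Eexp p1 pol p G = Eexp p1 pol p (fun τ => ∑ a : A, pol t τ a *
      ∑ sr : S × R, p t (setAct t a τ) sr * G (modAt t a sr τ)) := by
  set m : ℕ := (t : ℕ) with hmdef
  have hm : m < H := t.isLt
  have hmt : (t : ℕ) = m := rfl
  have htm : t = ⟨m, hm⟩ := by exact Fin.ext rfl
  -- measurability of the conditioned function
  have hGhat : ∀ τ τ', compatN m τ τ' →
      (∑ a : A, pol t τ a * ∑ sr : S × R, p t (setAct t a τ) sr * G (modAt t a sr τ))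
        = ∑ a : A, pol t τ' a * ∑ sr : S × R, p t (setAct t a τ') sr * G (modAt t a sr τ') := by
    intro τ τ' h
    refine Finset.sum_congr rfl fun a _ => ?_
    have hpol : pol t τ = pol t τ' := hpolAd t τ τ' (compatN_agreeS h (le_of_eq hmt))
    have hstate : (τ.1 t).1 = (τ'.1 t).1 := by
      have := compatN_stateAt h (le_of_eq hmt)
      exact this
    have hsetA : agreeA t (setAct t a τ) (setAct t a τ') := by
      refine ⟨fun k hk => ?_, ?_, ?_⟩
      · rw [setAct_fst_ne (ne_of_lt hk), setAct_fst_ne (ne_of_lt hk)]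
        exact h.1 k hk
      · unfold stateAt
        rw [setAct_fst_self, setAct_fst_self]
        exact hstate
      · unfold actAt
        rw [setAct_fst_self, setAct_fst_self]
    have hp : p t (setAct t a τ) = p t (setAct t a τ') := hpAd _ _ _ hsetA
    have hmod : ∀ sr : S × R, compatN (m + 1) (modAt t a sr τ) (modAt t a sr τ') := by
      intro sr
      constructor
      · intro k hk
        by_cases hkt : k = t
        · subst hkt
          rw [modAt_fst_self, modAt_fst_self, hstate]
        · have hklt : (k : ℕ) < m := by
            have hne : (k : ℕ) ≠ m := fun hh => hkt (Fin.ext (hh.trans hmt.symm))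
            omega
          rw [modAt_fst_of_ne hkt (by omega), modAt_fst_of_ne hkt (by omega)]
          exact h.1 k hklt
      · rw [show m + 1 = (t : ℕ) + 1 from by rw [hmt], modAt_sN_next, modAt_sN_next]
    rw [hpol, hp]
    congr 1
    exact Finset.sum_congr rfl fun sr _ => by rw [hG _ _ (hmod sr)]
  rw [exp_canon dS dA dR hpol1 hpolAd hpsum hpAd (m + 1) (by omega) G
    (by rw [← hmt] at *; exact hG),
    exp_canon dS dA dR hpol1 hpolAd hpsum hpAd m (le_of_lt hm) _ hGhat]
  -- the splitting bijection
  have splitiff : ∀ (σ σ₀ : Traj S A R H) (a : A) (sr : S × R),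
      (canonN dS dA dR m σ₀ = σ₀ ∧ canonN dS dA dR (m + 1) (modAt t a sr σ₀) = σ)
        ↔ (canonN dS dA dR (m + 1) σ = σ ∧ σ₀ = canonN dS dA dR m σ ∧ a = actAt σ t
            ∧ sr = (nextStateAt σ t, rewAt σ t)) := by
    intro σ σ₀ a sr
    constructor
    · rintro ⟨h1, h2⟩
      obtain ⟨hcanσ, hcomp⟩ := (canonN_eq_iff (by omega) _ σ).1 h2
      have hcomp' : compatN (m + 1) (modAt t a sr σ₀) σ := compatN_symm hcomp
      have h3 := compatN_modAt_iff t a sr σ₀ σ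
      rw [hmt] at h3
      obtain ⟨hc0, ha, hsr⟩ := h3.1 hcomp'
      refine ⟨hcanσ, ?_, ha, hsr⟩
      exact ((canonN_congr (compatN_symm hc0)).trans h1).symm
    · rintro ⟨h1, rfl, rfl, rfl⟩
      refine ⟨canonN_idem (le_of_lt hm) σ, ?_⟩
      apply (canonN_eq_iff (by omega) _ σ).2
      refine ⟨h1, ?_⟩
      apply compatN_symm
      have h3 := compatN_modAt_iff t (actAt σ t) (nextStateAt σ t, rewAt σ t)
        (canonN dS dA dR m σ) σ
      rw [hmt] at h3
      exact h3.2 ⟨compatN_canonN (le_of_lt hm) σ, rfl, rfl⟩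
  -- expand each canonical-(m+1) term into a triple sum
  have hexp2 : ∀ σ : Traj S A R H, (if canonN dS dA dR (m + 1) σ = σ then
        p1 (stateAt σ 0) * (∏ k : Fin H, (if (k : ℕ) < m + 1 then wgt pol p k σ else 1)) * G σ
      else 0)
      = ∑ σ₀ : Traj S A R H, ∑ a : A, ∑ sr : S × R,
          (if canonN dS dA dR m σ₀ = σ₀ ∧ canonN dS dA dR (m + 1) (modAt t a sr σ₀) = σ then
            p1 (stateAt σ 0) * (∏ k : Fin H, (if (k : ℕ) < m + 1 then wgt pol p k σ else 1)) * G σ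
          else 0) := by
    intro σ
    by_cases hc : canonN dS dA dR (m + 1) σ = σ
    · rw [if_pos hc]
      symm
      rw [Finset.sum_eq_single (canonN dS dA dR m σ)
        (fun σ₀ _ hσ₀ => by
          apply Finset.sum_eq_zero; intro a _
          apply Finset.sum_eq_zero; intro sr _
          exact if_neg (fun hcc => hσ₀ (((splitiff σ σ₀ a sr).1 hcc).2.1)))
        (fun h => absurd (Finset.mem_univ _) h)]
      rw [Finset.sum_eq_single (actAt σ t)
        (fun a _ ha => by
          apply Finset.sum_eq_zero; intro sr _
          exact if_neg (fun hcc => ha (((splitiff σ _ a sr).1 hcc).2.2.1)))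
        (fun h => absurd (Finset.mem_univ _) h)]
      rw [Finset.sum_eq_single ((nextStateAt σ t, rewAt σ t) : S × R)
        (fun sr _ hsr => if_neg (fun hcc => hsr (((splitiff σ _ _ sr).1 hcc).2.2.2)))
        (fun h => absurd (Finset.mem_univ _) h)]
      exact if_pos ((splitiff σ _ _ _).2 ⟨hc, rfl, rfl, rfl⟩)
    · rw [if_neg hc]
      symm
      apply Finset.sum_eq_zero; intro σ₀ _
      apply Finset.sum_eq_zero; intro a _
      apply Finset.sum_eq_zero; intro sr _
      exact if_neg (fun hcc => hc ((splitiff σ σ₀ a sr).1 hcc).1)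
  rw [Finset.sum_congr rfl fun σ _ => hexp2 σ]
  rw [Finset.sum_comm]
  rw [Finset.sum_congr rfl fun σ₀ _ => Finset.sum_comm]
  rw [Finset.sum_congr rfl fun σ₀ _ => Finset.sum_congr rfl fun a _ => Finset.sum_comm]
  -- now the goal is a triple sum over (σ₀, a, sr) of a collapsed σ-sum
  refine Finset.sum_congr rfl fun σ₀ _ => ?_
  by_cases hC1 : canonN dS dA dR m σ₀ = σ₀
  · rw [if_pos hC1]
    have hcollapse : ∀ (a : A) (sr : S × R),
        (∑ σ : Traj S A R H, (if canonN dS dA dR m σ₀ = σ₀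
            ∧ canonN dS dA dR (m + 1) (modAt t a sr σ₀) = σ then
          p1 (stateAt σ 0) * (∏ k : Fin H, (if (k : ℕ) < m + 1 then wgt pol p k σ else 1)) * G σ
        else 0))
        = p1 (stateAt σ₀ 0) * (∏ k : Fin H, (if (k : ℕ) < m then wgt pol p k σ₀ else 1))
            * (pol t σ₀ a * (p t (setAct t a σ₀) sr * G (modAt t a sr σ₀))) := by
      intro a sr
      set x : Traj S A R H := modAt t a sr σ₀ with hxdef
      rw [Finset.sum_eq_single (canonN dS dA dR (m + 1) x)
        (fun σ _ hσ => if_neg (fun hcc => hσ hcc.2.symm))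
        (fun h => absurd (Finset.mem_univ _) h)]
      rw [if_pos ⟨hC1, rfl⟩]
      -- transport along `compatN (m+1) (canonN (m+1) x) x`
      have hcx : compatN (m + 1) (canonN dS dA dR (m + 1) x) x :=
        compatN_canonN (by omega) x
      have hs0 : stateAt (canonN dS dA dR (m + 1) x) 0 = stateAt x 0 :=
        compatN_stateAt hcx (by simp)
      have hprod1 : (∏ k : Fin H, (if (k : ℕ) < m + 1 then
            wgt pol p k (canonN dS dA dR (m + 1) x) else 1))
          = ∏ k : Fin H, (if (k : ℕ) < m + 1 then wgt pol p k x else 1) := by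
        refine Finset.prod_congr rfl fun k _ => ?_
        by_cases hk : (k : ℕ) < m + 1
        · rw [if_pos hk, if_pos hk, wgt_congr hpolAd hpAd (by omega) hcx]
        · rw [if_neg hk, if_neg hk]
      have hGx : G (canonN dS dA dR (m + 1) x) = G x := hG _ _ hcx
      rw [hs0, hprod1, hGx]
      -- now transport from `x = modAt t a sr σ₀` to `σ₀`
      have hcompx : compatN m x σ₀ := by
        have := modAt_compat t a sr σ₀
        rwa [hmt] at this
      have hs1 : stateAt x 0 = stateAt σ₀ 0 := compatN_stateAt hcompx (by simp)
      have hsplitp : (∏ k : Fin H, (if (k : ℕ) < m + 1 then wgt pol p k x else 1))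
          = (∏ k : Fin H, (if (k : ℕ) < m then wgt pol p k σ₀ else 1)) * wgt pol p t x := by
        have hpt : ∀ k : Fin H, (if (k : ℕ) < m + 1 then wgt pol p k x else 1)
            = (if (k : ℕ) < m then wgt pol p k x else 1) * (if k = t then wgt pol p k x else 1) := by
          intro k
          by_cases hk : k = t
          · subst hk
            rw [if_pos (by omega), if_neg (by omega), if_pos rfl, one_mul]
          · have hne : (k : ℕ) ≠ m := fun hh => hk (Fin.ext (hh.trans hmt.symm))
            by_cases h2 : (k : ℕ) < m
            · rw [if_pos (by omega), if_pos h2, if_neg hk, mul_one]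
            · rw [if_neg (by omega), if_neg h2, if_neg hk, mul_one]
        rw [Finset.prod_congr rfl fun k _ => hpt k, Finset.prod_mul_distrib]
        congr 1
        · refine Finset.prod_congr rfl fun k _ => ?_
          by_cases hk : (k : ℕ) < m
          · rw [if_pos hk, if_pos hk, wgt_congr hpolAd hpAd (by omega) hcompx]
          · rw [if_neg hk, if_neg hk]
        · rw [Finset.prod_ite_eq']
          simp
      have hwt : wgt pol p t x = pol t σ₀ a * p t (setAct t a σ₀) sr :=
        wgt_modAt hpolAd hpAd t a sr σ₀
      rw [hs1, hsplitp, hwt]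
      ring
    rw [Finset.sum_congr rfl fun a _ => Finset.sum_congr rfl fun sr _ => hcollapse a sr]
    simp only [Finset.mul_sum]
  · rw [if_neg hC1]
    apply Finset.sum_eq_zero; intro a _
    apply Finset.sum_eq_zero; intro sr _
    apply Finset.sum_eq_zero; intro σ _
    exact if_neg (fun hcc => hC1 hcc.1)

end Core2

section Apps
set_option linter.unusedSectionVars false
set_option maxHeartbeats 1000000

variable {S A R : Type} {H : ℕ}

/-- `V_{t+1}` evaluated at a trajectory, with the convention `V_{H+1} = 0`. -/
noncomputable def vnx (V : Fin H → Traj S A R H → ℝ) (t : Fin H) (τ : Traj S A R H) : ℝ :=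
  if h2 : (t : ℕ) + 1 < H then V ⟨(t : ℕ) + 1, h2⟩ τ else 0

lemma agreeA_setAct {t : Fin H} {τ τ' : Traj S A R H} (h : agreeS t τ τ') (a : A) :
    agreeA t (setAct t a τ) (setAct t a τ') := by
  refine ⟨fun k hk => ?_, ?_, ?_⟩
  · rw [setAct_fst_ne (ne_of_lt hk), setAct_fst_ne (ne_of_lt hk)]
    exact h.1 k hk
  · unfold stateAt
    rw [setAct_fst_self, setAct_fst_self]
    exact h.2
  · unfold actAt
    rw [setAct_fst_self, setAct_fst_self]

lemma agreeA_modAt_setAct (t : Fin H) (a : A) (sr : S × R) (τ : Traj S A R H) :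
    agreeA t (modAt t a sr τ) (setAct t a τ) := by
  refine ⟨fun k hk => ?_, ?_, ?_⟩
  · rw [setAct_fst_ne (ne_of_lt hk)]
    exact modAt_fst_of_ne (ne_of_lt hk) (by have : (k:ℕ) < (t:ℕ) := hk; omega) a sr τ
  · rw [modAt_stateAt_self]
    unfold stateAt
    rw [setAct_fst_self]
  · rw [modAt_actAt_self]
    unfold actAt
    rw [setAct_fst_self]

lemma agreeS_updNext {t : Fin H} (h2 : (t : ℕ) + 1 < H) (sr : S × R) {τ τ' : Traj S A R H}
    (h : agreeA t τ τ') :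
    agreeS ⟨(t : ℕ) + 1, h2⟩ (updNext t sr τ) (updNext t sr τ') := by
  rw [updNext_eq_modAt, updNext_eq_modAt, ← h.2.2]
  set a := actAt τ t
  refine ⟨fun k hk => ?_, ?_⟩
  · have hk' : (k : ℕ) < (t : ℕ) + 1 := hk
    by_cases hkt : k = t
    · subst hkt
      rw [modAt_fst_self, modAt_fst_self]
      have := h.2.1
      unfold stateAt at this
      rw [this]
    · have hklt : (k : ℕ) < (t : ℕ) := by
        have : (k : ℕ) ≠ (t : ℕ) := fun hh => hkt (Fin.ext hh)
        omega
      rw [modAt_fst_of_ne hkt (by omega), modAt_fst_of_ne hkt (by omega)]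
      exact h.1 k hklt
  · rw [stateAt_eq_sN, stateAt_eq_sN]
    have hv : ((⟨(t : ℕ) + 1, h2⟩ : Fin H) : ℕ) = (t : ℕ) + 1 := rfl
    rw [hv, modAt_sN_next, modAt_sN_next]

section Meas

variable {pie : Fin H → Traj S A R H → A → ℝ} {p : Fin H → Traj S A R H → S × R → ℝ}
variable [Fintype S] [Fintype A] [Fintype R]

lemma Q_meas (rval : R → ℝ) (γ : ℝ) (Q V : Fin H → Traj S A R H → ℝ)
    (hpieAd : ∀ t τ τ', agreeS t τ τ' → pie t τ = pie t τ')
    (hpAd : ∀ t τ τ', agreeA t τ τ' → p t τ = p t τ')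
    (hQ : ∀ t τ, Q t τ = ∑ sr : S × R, p t τ sr *
        (rval sr.2 + γ * vnx V t (updNext t sr τ)))
    (hV : ∀ t τ, V t τ = ∑ a, pie t τ a * Q t (setAct t a τ)) :
    ∀ (n : ℕ) (t : Fin H), H - (t : ℕ) ≤ n →
      ∀ τ τ', agreeA t τ τ' → Q t τ = Q t τ' := by
  intro n
  induction n with
  | zero =>
    intro t ht
    exact absurd ht (by have := t.isLt; omega)
  | succ n IH =>
    intro t ht τ τ' h
    rw [hQ t τ, hQ t τ', hpAd t τ τ' h]
    refine Finset.sum_congr rfl fun sr _ => ?_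
    have hvv : vnx V t (updNext t sr τ) = vnx V t (updNext t sr τ') := by
      unfold vnx
      by_cases h2 : (t : ℕ) + 1 < H
      · rw [dif_pos h2, dif_pos h2]
        have hagree : agreeS (⟨(t : ℕ) + 1, h2⟩ : Fin H) (updNext t sr τ) (updNext t sr τ') :=
          agreeS_updNext h2 sr h
        rw [hV (⟨(t : ℕ) + 1, h2⟩ : Fin H) (updNext t sr τ),
          hV (⟨(t : ℕ) + 1, h2⟩ : Fin H) (updNext t sr τ'),
          hpieAd (⟨(t : ℕ) + 1, h2⟩ : Fin H) _ _ hagree]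
        refine Finset.sum_congr rfl fun a _ => ?_
        congr 1
        exact IH (⟨(t : ℕ) + 1, h2⟩ : Fin H) (by have := t.isLt; simp only [Fin.val_mk]; omega)
          _ _ (agreeA_setAct hagree a)
      · rw [dif_neg h2, dif_neg h2]
    rw [hvv]

lemma V_meas (rval : R → ℝ) (γ : ℝ) (Q V : Fin H → Traj S A R H → ℝ)
    (hpieAd : ∀ t τ τ', agreeS t τ τ' → pie t τ = pie t τ')
    (hpAd : ∀ t τ τ', agreeA t τ τ' → p t τ = p t τ')
    (hQ : ∀ t τ, Q t τ = ∑ sr : S × R, p t τ sr *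
        (rval sr.2 + γ * vnx V t (updNext t sr τ)))
    (hV : ∀ t τ, V t τ = ∑ a, pie t τ a * Q t (setAct t a τ)) :
    ∀ (t : Fin H) τ τ', agreeS t τ τ' → V t τ = V t τ' := by
  intro t τ τ' h
  rw [hV t τ, hV t τ', hpieAd t τ τ' h]
  refine Finset.sum_congr rfl fun a _ => ?_
  congr 1
  exact Q_meas rval γ Q V hpieAd hpAd hQ hV H t (by omega) _ _ (agreeA_setAct h a)

lemma vnx_meas (V : Fin H → Traj S A R H → ℝ)
    (hVm : ∀ (t : Fin H) τ τ', agreeS t τ τ' → V t τ = V t τ')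
    (t : Fin H) {τ τ' : Traj S A R H} (h : compatN ((t : ℕ) + 1) τ τ') :
    vnx V t τ = vnx V t τ' := by
  unfold vnx
  by_cases h2 : (t : ℕ) + 1 < H
  · rw [dif_pos h2, dif_pos h2]
    exact hVm ⟨(t : ℕ) + 1, h2⟩ τ τ' ((agreeS_iff_compatN _ _ _).2 h)
  · rw [dif_neg h2, dif_neg h2]

end Meas

section Ratio

variable {pib pie : Fin H → Traj S A R H → A → ℝ}
variable [Fintype S] [Fintype A] [Fintype R]

lemma cumRatio_meas
    (hpibAd : ∀ t τ τ', agreeS t τ τ' → pib t τ = pib t τ')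
    (hpieAd : ∀ t τ τ', agreeS t τ τ' → pie t τ = pie t τ')
    (t : Fin H) {τ τ' : Traj S A R H} (h : compatN ((t : ℕ) + 1) τ τ') :
    cumRatio pib pie t τ = cumRatio pib pie t τ' := by
  unfold cumRatio
  refine Finset.prod_congr rfl fun k _ => ?_
  by_cases hk : k ≤ t
  · have hkn : (k : ℕ) ≤ (t : ℕ) := hk
    rw [if_pos hk, if_pos hk,
      hpibAd k τ τ' (compatN_agreeS h (by omega)),
      hpieAd k τ τ' (compatN_agreeS h (by omega)),
      compatN_actAt h (by omega)]
  · rw [if_neg hk, if_neg hk]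

lemma predOr1_cumRatio (t : Fin H) (τ : Traj S A R H) :
    predOr1 (cumRatio pib pie) t τ = ∏ k : Fin H,
      (if (k : ℕ) < (t : ℕ) then pie k τ (actAt τ k) / pib k τ (actAt τ k) else 1) := by
  unfold predOr1
  split
  · next h0 =>
    unfold cumRatio
    refine Finset.prod_congr rfl fun k _ => ?_
    by_cases hk : (k : ℕ) < (t : ℕ)
    · rw [if_pos (show k ≤ ⟨(t : ℕ) - 1, _⟩ from by
        rw [Fin.le_def]; simp only; omega), if_pos hk]
    · rw [if_neg (show ¬ k ≤ ⟨(t : ℕ) - 1, _⟩ from by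
        rw [Fin.le_def]; simp only; omega), if_neg hk]
  · next h0 =>
    symm
    exact Finset.prod_eq_one fun k _ => if_neg (by omega)

lemma cumRatio_modAt
    (hpibAd : ∀ t τ τ', agreeS t τ τ' → pib t τ = pib t τ')
    (hpieAd : ∀ t τ τ', agreeS t τ τ' → pie t τ = pie t τ')
    (t : Fin H) (a : A) (sr : S × R) (τ : Traj S A R H) :
    cumRatio pib pie t (modAt t a sr τ)
      = predOr1 (cumRatio pib pie) t τ * (pie t τ a / pib t τ a) := by
  set x : Traj S A R H := modAt t a sr τ with hx
  have hcomp : compatN (t : ℕ) x τ := modAt_compat t a sr τ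
  have hAS : agreeS t x τ := (agreeS_iff_compatN _ _ _).2 hcomp
  have hterm : ∀ k : Fin H, (if k ≤ t then pie k x (actAt x k) / pib k x (actAt x k) else 1)
      = (if (k : ℕ) < (t : ℕ) then pie k τ (actAt τ k) / pib k τ (actAt τ k) else 1)
        * (if k = t then pie t τ a / pib t τ a else 1) := by
    intro k
    by_cases hkt : k = t
    · subst hkt
      rw [if_pos le_rfl, if_neg (by omega), if_pos rfl, one_mul,
        hpibAd k x τ hAS, hpieAd k x τ hAS, modAt_actAt_self]
    · have hne : (k : ℕ) ≠ (t : ℕ) := fun hh => hkt (Fin.ext hh)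
      by_cases hk : k ≤ t
      · have hklt : (k : ℕ) < (t : ℕ) := by have : (k : ℕ) ≤ (t : ℕ) := hk; omega
        rw [if_pos hk, if_pos hklt, if_neg hkt, mul_one,
          hpibAd k x τ (compatN_agreeS hcomp (by omega)),
          hpieAd k x τ (compatN_agreeS hcomp (by omega)),
          compatN_actAt hcomp (by omega)]
      · rw [if_neg hk, if_neg (by rw [Fin.le_def] at hk; omega), if_neg hkt, mul_one]
  have hsplit : cumRatio pib pie t x
      = (∏ k : Fin H, (if (k : ℕ) < (t : ℕ) then pie k τ (actAt τ k) / pib k τ (actAt τ k) else 1))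
        * ∏ k : Fin H, (if k = t then pie t τ a / pib t τ a else 1) := by
    unfold cumRatio
    rw [Finset.prod_congr rfl fun k _ => hterm k, Finset.prod_mul_distrib]
  rw [hsplit, predOr1_cumRatio]
  congr 1
  rw [Finset.prod_ite_eq']
  simp

end Ratio

section Ealg

variable [Fintype S] [Fintype A] [Fintype R] [NeZero H]
variable {p1 : S → ℝ} {pol : Fin H → Traj S A R H → A → ℝ}
variable {p : Fin H → Traj S A R H → S × R → ℝ}

lemma Eexp_congr {f g : Traj S A R H → ℝ} (h : ∀ τ, f τ = g τ) :
    Eexp p1 pol p f = Eexp p1 pol p g := by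
  unfold Eexp
  exact Finset.sum_congr rfl fun τ _ => by rw [h τ]

lemma Eexp_add (f g : Traj S A R H → ℝ) :
    Eexp p1 pol p (fun τ => f τ + g τ) = Eexp p1 pol p f + Eexp p1 pol p g := by
  unfold Eexp
  rw [← Finset.sum_add_distrib]
  exact Finset.sum_congr rfl fun τ _ => by ring

lemma Eexp_sub (f g : Traj S A R H → ℝ) :
    Eexp p1 pol p (fun τ => f τ - g τ) = Eexp p1 pol p f - Eexp p1 pol p g := by
  unfold Eexp
  rw [← Finset.sum_sub_distrib]
  exact Finset.sum_congr rfl fun τ _ => by ring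

lemma Eexp_zero : Eexp p1 pol p (fun _ => (0 : ℝ)) = 0 := by
  unfold Eexp
  simp

lemma Eexp_sum {ι : Type*} (s : Finset ι) (f : ι → Traj S A R H → ℝ) :
    Eexp p1 pol p (fun τ => ∑ i ∈ s, f i τ) = ∑ i ∈ s, Eexp p1 pol p (f i) := by
  unfold Eexp
  rw [Finset.sum_comm]
  exact Finset.sum_congr rfl fun τ _ => by rw [Finset.mul_sum]

end Ealg

lemma sum_range_shift (G : ℕ → ℝ) (n : ℕ) :
    ∑ i ∈ Finset.range n, G (i + 1) = (∑ i ∈ Finset.range n, G i) + G n - G 0 := by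
  have h1 := Finset.sum_range_succ' G n
  have h2 := Finset.sum_range_succ G n
  rw [h2] at h1
  linarith

section TowerApps
set_option linter.unusedSectionVars false
set_option maxHeartbeats 1000000

variable [Fintype S] [Fintype A] [Fintype R] [NeZero H]
variable {p1 : S → ℝ} {pol : Fin H → Traj S A R H → A → ℝ}
variable {p : Fin H → Traj S A R H → S × R → ℝ}

lemma inner_zero (rval : R → ℝ) (γ : ℝ) (Q V : Fin H → Traj S A R H → ℝ)
    (hpsum : ∀ t τ, ∑ sr : S × R, p t τ sr = 1)
    (hQ : ∀ t τ, Q t τ = ∑ sr : S × R, p t τ sr *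
        (rval sr.2 + γ * vnx V t (updNext t sr τ)))
    (hQm : ∀ t τ τ', agreeA t τ τ' → Q t τ = Q t τ')
    (t : Fin H) (a : A) (τ : Traj S A R H) :
    ∑ sr : S × R, p t (setAct t a τ) sr *
      (rval (rewAt (modAt t a sr τ) t) + γ * vnx V t (modAt t a sr τ)
        - Q t (modAt t a sr τ)) = 0 := by
  have hstep : ∀ sr : S × R, p t (setAct t a τ) sr *
      (rval (rewAt (modAt t a sr τ) t) + γ * vnx V t (modAt t a sr τ)
        - Q t (modAt t a sr τ))
      = p t (setAct t a τ) sr * (rval sr.2 + γ * vnx V t (updNext t sr (setAct t a τ)))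
        - p t (setAct t a τ) sr * Q t (setAct t a τ) := by
    intro sr
    rw [modAt_rewAt_self, hQm t _ _ (agreeA_modAt_setAct t a sr τ)]
    have hmod : modAt t a sr τ = updNext t sr (setAct t a τ) := rfl
    rw [hmod]
    ring
  rw [Finset.sum_congr rfl fun sr _ => hstep sr, Finset.sum_sub_distrib,
    ← hQ t (setAct t a τ), ← Finset.sum_mul, hpsum t (setAct t a τ), one_mul, sub_self]

lemma exp_weighted_D_zero (dS : S) (dA : A) (dR : R)
    (hpol1 : ∀ t τ, ∑ a, pol t τ a = 1)
    (hpolAd : ∀ t τ τ', agreeS t τ τ' → pol t τ = pol t τ')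
    (hpsum : ∀ t τ, ∑ sr : S × R, p t τ sr = 1)
    (hpAd : ∀ t τ τ', agreeA t τ τ' → p t τ = p t τ')
    (rval : R → ℝ) (γ : ℝ) (Q V : Fin H → Traj S A R H → ℝ)
    (hQ : ∀ t τ, Q t τ = ∑ sr : S × R, p t τ sr *
        (rval sr.2 + γ * vnx V t (updNext t sr τ)))
    (hQm : ∀ t τ τ', agreeA t τ τ' → Q t τ = Q t τ')
    (hVm : ∀ t τ τ', agreeS t τ τ' → V t τ = V t τ')
    (t : Fin H) (W : Traj S A R H → ℝ)
    (hWmeas : ∀ τ τ', compatN ((t : ℕ) + 1) τ τ' → W τ = W τ')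
    (ℓ : Traj S A R H → A → ℝ)
    (hW : ∀ τ a sr, W (modAt t a sr τ) = ℓ τ a) :
    Eexp p1 pol p (fun τ => W τ * (rval (rewAt τ t) + γ * vnx V t τ - Q t τ)) = 0 := by
  have hG : ∀ τ τ', compatN ((t : ℕ) + 1) τ τ' →
      W τ * (rval (rewAt τ t) + γ * vnx V t τ - Q t τ)
        = W τ' * (rval (rewAt τ' t) + γ * vnx V t τ' - Q t τ') := by
    intro τ τ' h
    rw [hWmeas τ τ' h, compatN_rewAt h (by omega), vnx_meas V hVm t h,
      hQm t τ τ' (compatN_agreeA h (by omega))]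
  rw [tower dS dA dR hpol1 hpolAd hpsum hpAd t _ hG]
  have hzero : ∀ τ : Traj S A R H, (∑ a : A, pol t τ a * ∑ sr : S × R,
      p t (setAct t a τ) sr * (W (modAt t a sr τ) *
        (rval (rewAt (modAt t a sr τ) t) + γ * vnx V t (modAt t a sr τ)
          - Q t (modAt t a sr τ)))) = 0 := by
    intro τ
    apply Finset.sum_eq_zero; intro a _
    have hpull : (∑ sr : S × R, p t (setAct t a τ) sr * (W (modAt t a sr τ) *
        (rval (rewAt (modAt t a sr τ) t) + γ * vnx V t (modAt t a sr τ)
          - Q t (modAt t a sr τ))))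
        = ℓ τ a * ∑ sr : S × R, p t (setAct t a τ) sr *
          (rval (rewAt (modAt t a sr τ) t) + γ * vnx V t (modAt t a sr τ)
            - Q t (modAt t a sr τ)) := by
      rw [Finset.mul_sum]
      refine Finset.sum_congr rfl fun sr _ => ?_
      rw [hW τ a sr]
      ring
    rw [hpull, inner_zero rval γ Q V hpsum hQ hQm t a τ, mul_zero, mul_zero]
  exact (Eexp_congr hzero).trans Eexp_zero

lemma exp_weighted_sq (dS : S) (dA : A) (dR : R)
    (hpol1 : ∀ t τ, ∑ a, pol t τ a = 1)
    (hpolAd : ∀ t τ τ', agreeS t τ τ' → pol t τ = pol t τ')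
    (hpsum : ∀ t τ, ∑ sr : S × R, p t τ sr = 1)
    (hpAd : ∀ t τ τ', agreeA t τ τ' → p t τ = p t τ')
    (rval : R → ℝ) (γ : ℝ) (Q V cvar : Fin H → Traj S A R H → ℝ)
    (hQ : ∀ t τ, Q t τ = ∑ sr : S × R, p t τ sr *
        (rval sr.2 + γ * vnx V t (updNext t sr τ)))
    (hQm : ∀ t τ τ', agreeA t τ τ' → Q t τ = Q t τ')
    (hVm : ∀ t τ τ', agreeS t τ τ' → V t τ = V t τ')
    (hcvar : ∀ t τ, cvar t τ = (∑ sr : S × R, p t τ sr *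
          (rval sr.2 + γ * vnx V t (updNext t sr τ)) ^ 2)
        - (∑ sr : S × R, p t τ sr * (rval sr.2 + γ * vnx V t (updNext t sr τ))) ^ 2)
    (hcvarm : ∀ t τ τ', agreeA t τ τ' → cvar t τ = cvar t τ')
    (t : Fin H) (W : Traj S A R H → ℝ)
    (hWmeas : ∀ τ τ', compatN ((t : ℕ) + 1) τ τ' → W τ = W τ')
    (ℓ : Traj S A R H → A → ℝ)
    (hW : ∀ τ a sr, W (modAt t a sr τ) = ℓ τ a) :
    Eexp p1 pol p (fun τ => W τ ^ 2 * (rval (rewAt τ t) + γ * vnx V t τ - Q t τ) ^ 2)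
      = Eexp p1 pol p (fun τ => W τ ^ 2 * cvar t τ) := by
  have hG1 : ∀ τ τ', compatN ((t : ℕ) + 1) τ τ' →
      W τ ^ 2 * (rval (rewAt τ t) + γ * vnx V t τ - Q t τ) ^ 2
        = W τ' ^ 2 * (rval (rewAt τ' t) + γ * vnx V t τ' - Q t τ') ^ 2 := by
    intro τ τ' h
    rw [hWmeas τ τ' h, compatN_rewAt h (by omega), vnx_meas V hVm t h,
      hQm t τ τ' (compatN_agreeA h (by omega))]
  have hG2 : ∀ τ τ', compatN ((t : ℕ) + 1) τ τ' →
      W τ ^ 2 * cvar t τ = W τ' ^ 2 * cvar t τ' := by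
    intro τ τ' h
    rw [hWmeas τ τ' h, hcvarm t τ τ' (compatN_agreeA h (by omega))]
  rw [tower dS dA dR hpol1 hpolAd hpsum hpAd t _ hG1,
    tower dS dA dR hpol1 hpolAd hpsum hpAd t _ hG2]
  apply Eexp_congr
  intro τ
  refine Finset.sum_congr rfl fun a _ => ?_
  congr 1
  set σa : Traj S A R H := setAct t a τ with hσa
  have hq : Q t σa = ∑ sr : S × R, p t σa sr *
      (rval sr.2 + γ * vnx V t (updNext t sr σa)) := hQ t σa
  have key : (∑ sr : S × R, p t σa sr *
      (rval sr.2 + γ * vnx V t (updNext t sr σa) - Q t σa) ^ 2) = cvar t σa := by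
    have hsq : ∀ sr : S × R, p t σa sr *
        (rval sr.2 + γ * vnx V t (updNext t sr σa) - Q t σa) ^ 2
        = p t σa sr * (rval sr.2 + γ * vnx V t (updNext t sr σa)) ^ 2
          - 2 * Q t σa * (p t σa sr * (rval sr.2 + γ * vnx V t (updNext t sr σa)))
          + (Q t σa) ^ 2 * p t σa sr := by
      intro sr
      ring
    rw [Finset.sum_congr rfl fun sr _ => hsq sr, Finset.sum_add_distrib,
      Finset.sum_sub_distrib, ← Finset.mul_sum, ← Finset.mul_sum, ← hq,
      hpsum t σa, hcvar t σa, ← hq]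
    ring
  calc (∑ sr : S × R, p t σa sr * (W (modAt t a sr τ) ^ 2 *
        (rval (rewAt (modAt t a sr τ) t) + γ * vnx V t (modAt t a sr τ)
          - Q t (modAt t a sr τ)) ^ 2))
      = ℓ τ a ^ 2 * ∑ sr : S × R, p t σa sr *
          (rval sr.2 + γ * vnx V t (updNext t sr σa) - Q t σa) ^ 2 := by
        rw [Finset.mul_sum]
        refine Finset.sum_congr rfl fun sr _ => ?_
        rw [hW τ a sr, modAt_rewAt_self, hQm t _ _ (agreeA_modAt_setAct t a sr τ)]
        have hmod : modAt t a sr τ = updNext t sr (setAct t a τ) := rfl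
        rw [hmod]
        ring
    _ = ℓ τ a ^ 2 * cvar t σa := by rw [key]
    _ = ∑ sr : S × R, p t σa sr * (W (modAt t a sr τ) ^ 2 * cvar t (modAt t a sr τ)) := by
        have hc : ∀ sr : S × R, cvar t (modAt t a sr τ) = cvar t σa :=
          fun sr => hcvarm t _ _ (agreeA_modAt_setAct t a sr τ)
        have : ∀ sr : S × R, p t σa sr * (W (modAt t a sr τ) ^ 2 * cvar t (modAt t a sr τ))
            = (ℓ τ a ^ 2 * cvar t σa) * p t σa sr := by
          intro sr
          rw [hW τ a sr, hc sr]
          ring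
        rw [Finset.sum_congr rfl fun sr _ => this sr, ← Finset.mul_sum, hpsum t σa, mul_one]

lemma exp_QV_zero (dS : S) (dA : A) (dR : R)
    (hpol1 : ∀ t τ, ∑ a, pol t τ a = 1)
    (hpolAd : ∀ t τ τ', agreeS t τ τ' → pol t τ = pol t τ')
    (hpsum : ∀ t τ, ∑ sr : S × R, p t τ sr = 1)
    (hpAd : ∀ t τ τ', agreeA t τ τ' → p t τ = p t τ')
    (Q V : Fin H → Traj S A R H → ℝ)
    (hVpol : ∀ t τ, V t τ = ∑ a, pol t τ a * Q t (setAct t a τ))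
    (hQm : ∀ t τ τ', agreeA t τ τ' → Q t τ = Q t τ')
    (hVm : ∀ t τ τ', agreeS t τ τ' → V t τ = V t τ')
    (t : Fin H) (c : ℝ) :
    Eexp p1 pol p (fun τ => c * (Q t τ - V t τ)) = 0 := by
  have hG : ∀ τ τ', compatN ((t : ℕ) + 1) τ τ' →
      c * (Q t τ - V t τ) = c * (Q t τ' - V t τ') := by
    intro τ τ' h
    rw [hQm t τ τ' (compatN_agreeA h (by omega)),
      hVm t τ τ' (compatN_agreeS h (by omega))]
  rw [tower dS dA dR hpol1 hpolAd hpsum hpAd t _ hG]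
  have hzero : ∀ τ : Traj S A R H, (∑ a : A, pol t τ a * ∑ sr : S × R,
      p t (setAct t a τ) sr * (c * (Q t (modAt t a sr τ) - V t (modAt t a sr τ)))) = 0 := by
    intro τ
    have hstep : ∀ a : A, pol t τ a * (∑ sr : S × R,
        p t (setAct t a τ) sr * (c * (Q t (modAt t a sr τ) - V t (modAt t a sr τ))))
        = c * (pol t τ a * Q t (setAct t a τ)) - (c * V t τ) * pol t τ a := by
      intro a
      have hinner : ∀ sr : S × R,
          p t (setAct t a τ) sr * (c * (Q t (modAt t a sr τ) - V t (modAt t a sr τ)))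
          = (c * (Q t (setAct t a τ) - V t τ)) * p t (setAct t a τ) sr := by
        intro sr
        rw [hQm t _ _ (agreeA_modAt_setAct t a sr τ),
          hVm t (modAt t a sr τ) τ ((agreeS_iff_compatN _ _ _).2 (modAt_compat t a sr τ))]
        ring
      rw [Finset.sum_congr rfl fun sr _ => hinner sr, ← Finset.mul_sum,
        hpsum t (setAct t a τ), mul_one]
      ring
    rw [Finset.sum_congr rfl fun a _ => hstep a, Finset.sum_sub_distrib,
      ← Finset.mul_sum, ← hVpol t τ, ← Finset.mul_sum, hpol1 t τ, mul_one]
    ring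
  exact (Eexp_congr hzero).trans Eexp_zero

lemma exp_first_state (dS : S) (dA : A) (dR : R)
    {pol' : Fin H → Traj S A R H → A → ℝ}
    (hpol1 : ∀ t τ, ∑ a, pol t τ a = 1)
    (hpolAd : ∀ t τ τ', agreeS t τ τ' → pol t τ = pol t τ')
    (hpol1' : ∀ t τ, ∑ a, pol' t τ a = 1)
    (hpolAd' : ∀ t τ τ', agreeS t τ τ' → pol' t τ = pol' t τ')
    (hpsum : ∀ t τ, ∑ sr : S × R, p t τ sr = 1)
    (hpAd : ∀ t τ τ', agreeA t τ τ' → p t τ = p t τ')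
    (F : Traj S A R H → ℝ)
    (hF : ∀ τ τ', compatN 0 τ τ' → F τ = F τ') :
    Eexp p1 pol p F = Eexp p1 pol' p F := by
  rw [exp_canon dS dA dR hpol1 hpolAd hpsum hpAd 0 (Nat.zero_le H) F hF,
    exp_canon dS dA dR hpol1' hpolAd' hpsum hpAd 0 (Nat.zero_le H) F hF]
  refine Finset.sum_congr rfl fun σ _ => ?_
  by_cases hc : canonN dS dA dR 0 σ = σ
  · rw [if_pos hc, if_pos hc]
    have e1 : (∏ k : Fin H, (if (k : ℕ) < 0 then wgt pol p k σ else 1)) = 1 :=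
      Finset.prod_eq_one fun k _ => if_neg (by omega)
    have e2 : (∏ k : Fin H, (if (k : ℕ) < 0 then wgt pol' p k σ else 1)) = 1 :=
      Finset.prod_eq_one fun k _ => if_neg (by omega)
    rw [e1, e2]
  · rw [if_neg hc, if_neg hc]

end TowerApps
end Apps
end NMDPaux
open NMDPaux in
/-- Finite-horizon NMDP with positivity: the efficient influence function
`Φ = Σ_{t=1}^H γ^{t−1}(λ_t(r_t − Q_t(𝒿_{a_t})) + λ_{t−1} V_t(𝒿_{s_t}))` satisfies
`E_{P_{π^b}}[Φ] = J^{(H)}` and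
`Var_{P_{π^b}}[Φ] = Var_{P_{π^b}}[V_1(s_1)]
   + Σ_{t=1}^H E_{P_{π^b}}[γ^{2(t−1)} λ_t² var(r_t + γ V_{t+1}(𝒿_{s_{t+1}}) | 𝒿_{a_t})]`,
the efficiency bound `V(𝓜_NMDP)` of Theorem 3. -/
theorem nmdp_eif_mean_and_variance [Fintype S] [Fintype A] [Fintype R] [NeZero H]
    (rval : R → ℝ) (γ : ℝ) (hγ0 : 0 ≤ γ) (hγ1 : γ ≤ 1)
    (p1 : S → ℝ) (pib pie : Fin H → Traj S A R H → A → ℝ)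
    (p : Fin H → Traj S A R H → S × R → ℝ)
    (hp10 : ∀ s, 0 ≤ p1 s) (hp11 : ∑ s, p1 s = 1)
    (hpib0 : ∀ t τ a, 0 ≤ pib t τ a) (hpib1 : ∀ t τ, ∑ a, pib t τ a = 1)
    (hpibAd : ∀ t τ τ', agreeS t τ τ' → pib t τ = pib t τ')
    (hpie0 : ∀ t τ a, 0 ≤ pie t τ a) (hpie1 : ∀ t τ, ∑ a, pie t τ a = 1)
    (hpieAd : ∀ t τ τ', agreeS t τ τ' → pie t τ = pie t τ')
    (hp0 : ∀ t τ sr, 0 ≤ p t τ sr) (hpsum : ∀ t τ, ∑ sr : S × R, p t τ sr = 1)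
    (hpAd : ∀ t τ τ', agreeA t τ τ' → p t τ = p t τ')
    (hpos : ∀ (t : Fin H) (τ : Traj S A R H) (a : A),
        (∃ τ', agreeS t τ τ' ∧ 0 < trajProb p1 pib p τ') →
        0 < pie t τ a → 0 < pib t τ a)
    (Q V : Fin H → Traj S A R H → ℝ)
    (hQ : ∀ t τ, Q t τ = ∑ sr : S × R, p t τ sr *
        (rval sr.2 + γ *
          (if h2 : (t : ℕ) + 1 < H then V ⟨(t : ℕ) + 1, h2⟩ (updNext t sr τ) else 0)))
    (hV : ∀ t τ, V t τ = ∑ a, pie t τ a * Q t (setAct t a τ))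
    (cvar : Fin H → Traj S A R H → ℝ)
    (hcvar : ∀ t τ, cvar t τ =
      (∑ sr : S × R, p t τ sr *
          (rval sr.2 + γ *
            (if h2 : (t : ℕ) + 1 < H then V ⟨(t : ℕ) + 1, h2⟩ (updNext t sr τ) else 0)) ^ 2)
        - (∑ sr : S × R, p t τ sr *
            (rval sr.2 + γ *
              (if h2 : (t : ℕ) + 1 < H then V ⟨(t : ℕ) + 1, h2⟩ (updNext t sr τ) else 0))) ^ 2)
    (Φ : Traj S A R H → ℝ)
    (hΦ : ∀ τ, Φ τ = ∑ t : Fin H, γ ^ (t : ℕ) *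
        (cumRatio pib pie t τ * (rval (rewAt τ t) - Q t τ)
          + predOr1 (cumRatio pib pie) t τ * V t τ))
    (Jval : ℝ)
    (hJ : Jval = Eexp p1 pie p (fun τ => ∑ t : Fin H, γ ^ (t : ℕ) * rval (rewAt τ t))) :
    Eexp p1 pib p Φ = Jval
      ∧ Eexp p1 pib p (fun τ => Φ τ ^ 2) - (Eexp p1 pib p Φ) ^ 2
          = (Eexp p1 pib p (fun τ => V 0 τ ^ 2)
              - (Eexp p1 pib p (fun τ => V 0 τ)) ^ 2)
            + ∑ t : Fin H, Eexp p1 pib p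
                (fun τ => γ ^ (2 * (t : ℕ)) * cumRatio pib pie t τ ^ 2 * cvar t τ) := by
    classical
  by_cases hempty : IsEmpty (Traj S A R H)
  · have hE : ∀ (pol : Fin H → Traj S A R H → A → ℝ) (f : Traj S A R H → ℝ),
        Eexp p1 pol p f = 0 := by
      intro pol f
      unfold Eexp
      simp
    constructor
    · rw [hE, hJ, hE]
    · simp [hE]
  · rw [not_isEmpty_iff] at hempty
    obtain ⟨τ₀⟩ := hempty
    set dS : S := stateAt τ₀ 0 with hdS
    set dA : A := actAt τ₀ 0 with hdA
    set dR : R := rewAt τ₀ 0 with hdR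
    set lam := cumRatio pib pie with hlamdef
    have hQ' : ∀ t τ, Q t τ = ∑ sr : S × R, p t τ sr *
        (rval sr.2 + γ * vnx V t (updNext t sr τ)) := hQ
    have hcvar' : ∀ t τ, cvar t τ = (∑ sr : S × R, p t τ sr *
          (rval sr.2 + γ * vnx V t (updNext t sr τ)) ^ 2)
        - (∑ sr : S × R, p t τ sr * (rval sr.2 + γ * vnx V t (updNext t sr τ))) ^ 2 := hcvar
    have hQm : ∀ t τ τ', agreeA t τ τ' → Q t τ = Q t τ' :=
      fun t τ τ' h => Q_meas rval γ Q V hpieAd hpAd hQ' hV H t (by omega) τ τ' h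
    have hVm : ∀ t τ τ', agreeS t τ τ' → V t τ = V t τ' :=
      V_meas rval γ Q V hpieAd hpAd hQ' hV
    have hcvarm : ∀ t τ τ', agreeA t τ τ' → cvar t τ = cvar t τ' := by
      intro t τ τ' h
      have hvv : ∀ sr : S × R, vnx V t (updNext t sr τ) = vnx V t (updNext t sr τ') := by
        intro sr
        unfold vnx
        by_cases h2 : (t : ℕ) + 1 < H
        · rw [dif_pos h2, dif_pos h2]
          exact hVm _ _ _ (agreeS_updNext h2 sr h)
        · rw [dif_neg h2, dif_neg h2]
      rw [hcvar' t τ, hcvar' t τ', hpAd t τ τ' h]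
      simp only [hvv]
    have hlmeas : ∀ (t : Fin H) (τ τ' : Traj S A R H), compatN ((t : ℕ) + 1) τ τ' →
        lam t τ = lam t τ' := fun t τ τ' h => cumRatio_meas hpibAd hpieAd t h
    set X : Fin H → Traj S A R H → ℝ := fun t τ =>
      γ ^ (t : ℕ) * (lam t τ * (rval (rewAt τ t) + γ * vnx V t τ - Q t τ)) with hXdef
    have hXmeas : ∀ (t : Fin H) τ τ', compatN ((t : ℕ) + 1) τ τ' → X t τ = X t τ' := by
      intro t τ τ' h
      simp only [hXdef]
      rw [hlmeas t τ τ' h, compatN_rewAt h (by omega),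
        vnx_meas V hVm t h, hQm t τ τ' (compatN_agreeA h (by omega))]
    have hXmod : ∀ (s t : Fin H), (s : ℕ) < (t : ℕ) → ∀ (a : A) (sr : S × R) τ,
        X s (modAt t a sr τ) = X s τ := by
      intro s t hst a sr τ
      exact hXmeas s _ _ (compatN_of_le (by omega) (modAt_compat t a sr τ))
    have hV0meas : ∀ (m : ℕ) τ τ', compatN m τ τ' → V 0 τ = V 0 τ' := by
      intro m τ τ' h
      exact hVm 0 τ τ' (compatN_agreeS h (by simp))
    have hV0mod : ∀ (t : Fin H) (a : A) (sr : S × R) τ, V 0 (modAt t a sr τ) = V 0 τ :=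
      fun t a sr τ => hV0meas (t : ℕ) _ _ (modAt_compat t a sr τ)
    have hlmod : ∀ (t : Fin H) τ (a : A) (sr : S × R),
        lam t (modAt t a sr τ) = predOr1 lam t τ * (pie t τ a / pib t τ a) :=
      fun t τ a sr => cumRatio_modAt hpibAd hpieAd t a sr τ
    -- generic zero-mean fact under the behaviour policy
    have hXzero : ∀ (f : Traj S A R H → ℝ) (t : Fin H),
        (∀ τ τ', compatN ((t : ℕ) + 1) τ τ' → f τ = f τ') →
        (∀ τ (a : A) (sr : S × R), f (modAt t a sr τ) = f τ) →
        Eexp p1 pib p (fun τ => (f τ * (γ ^ (t : ℕ) * lam t τ)) *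
          (rval (rewAt τ t) + γ * vnx V t τ - Q t τ)) = 0 := by
      intro f t hfm hfmod
      refine exp_weighted_D_zero dS dA dR hpib1 hpibAd hpsum hpAd rval γ Q V hQ' hQm hVm t
        (fun τ => f τ * (γ ^ (t : ℕ) * lam t τ)) ?_
        (fun τ a => f τ * (γ ^ (t : ℕ) * (predOr1 lam t τ * (pie t τ a / pib t τ a)))) ?_
      · intro τ τ' h
        show f τ * (γ ^ (t : ℕ) * lam t τ) = f τ' * (γ ^ (t : ℕ) * lam t τ')
        rw [hfm τ τ' h, hlmeas t τ τ' h]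
      · intro τ a sr
        show f (modAt t a sr τ) * (γ ^ (t : ℕ) * lam t (modAt t a sr τ))
          = f τ * (γ ^ (t : ℕ) * (predOr1 lam t τ * (pie t τ a / pib t τ a)))
        rw [hfmod τ a sr, hlmod t τ a sr]
    have hx1 : ∀ t : Fin H, Eexp p1 pib p (X t) = 0 := by
      intro t
      have h0 := hXzero (fun _ => 1) t (fun _ _ _ => rfl) (fun _ _ _ => rfl)
      rw [← h0]
      apply Eexp_congr
      intro τ
      simp only [hXdef]
      ring
    -- telescoping identities
    have tele1 : ∀ τ : Traj S A R H,
        (∑ t : Fin H, γ ^ (t : ℕ) * (predOr1 lam t τ * V t τ))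
          = V 0 τ + ∑ t : Fin H, γ ^ ((t : ℕ) + 1) * (lam t τ * vnx V t τ) := by
      intro τ
      set G : ℕ → ℝ := fun n => if h : 0 < n ∧ n < H then
        γ ^ n * (lam ⟨n - 1, by omega⟩ τ * V ⟨n, h.2⟩ τ) else 0 with hGdef
      have hGa : ∀ t : Fin H, γ ^ ((t : ℕ) + 1) * (lam t τ * vnx V t τ) = G ((t : ℕ) + 1) := by
        intro t
        simp only [hGdef]
        by_cases h2 : (t : ℕ) + 1 < H
        · rw [dif_pos ⟨Nat.succ_pos _, h2⟩]
          unfold vnx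
          rw [dif_pos h2]
          congr 2
        · rw [dif_neg (by omega)]
          unfold vnx
          rw [dif_neg h2]
          ring
      have hGb : ∀ t : Fin H, γ ^ (t : ℕ) * (predOr1 lam t τ * V t τ)
          = G (t : ℕ) + (if (t : ℕ) = 0 then V 0 τ else 0) := by
        intro t
        simp only [hGdef]
        by_cases h0 : 0 < (t : ℕ)
        · rw [dif_pos ⟨h0, t.isLt⟩, if_neg (by omega), add_zero]
          unfold predOr1
          rw [dif_pos h0]
        · have ht0 : (t : ℕ) = 0 := by omega
          rw [dif_neg (by omega), if_pos ht0, zero_add]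
          have ht : t = 0 := Fin.ext (by simp [ht0])
          rw [ht]
          unfold predOr1
          rw [dif_neg (by simp)]
          simp
      calc (∑ t : Fin H, γ ^ (t : ℕ) * (predOr1 lam t τ * V t τ))
          = ∑ t : Fin H, (G (t : ℕ) + (if (t : ℕ) = 0 then V 0 τ else 0)) :=
            Finset.sum_congr rfl fun t _ => hGb t
        _ = (∑ t : Fin H, G (t : ℕ)) + ∑ t : Fin H, (if (t : ℕ) = 0 then V 0 τ else 0) :=
            Finset.sum_add_distrib
        _ = (∑ t : Fin H, G (t : ℕ)) + V 0 τ := by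
            congr 1
            have hcond : ∀ t : Fin H, (if (t : ℕ) = 0 then V 0 τ else 0)
                = (if t = (0 : Fin H) then V 0 τ else 0) := by
              intro t
              by_cases h : (t : ℕ) = 0
              · rw [if_pos h, if_pos (Fin.ext (by simp [h]))]
              · rw [if_neg h, if_neg (fun hh => h (by rw [hh]; simp))]
            rw [Finset.sum_congr rfl fun t _ => hcond t, Finset.sum_ite_eq' Finset.univ (0 : Fin H)]
            simp
        _ = V 0 τ + ∑ t : Fin H, γ ^ ((t : ℕ) + 1) * (lam t τ * vnx V t τ) := by
            rw [Finset.sum_congr rfl fun t _ => hGa t,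
              Fin.sum_univ_eq_sum_range (fun n => G n) H,
              Fin.sum_univ_eq_sum_range (fun n => G (n + 1)) H,
              sum_range_shift]
            have hG0 : G 0 = 0 := by simp only [hGdef]; rw [dif_neg (by omega)]
            have hGH : G H = 0 := by simp only [hGdef]; rw [dif_neg (by omega)]
            rw [hG0, hGH]
            ring
    have tele2 : ∀ τ : Traj S A R H,
        (∑ t : Fin H, γ ^ (t : ℕ) * V t τ)
          = V 0 τ + ∑ t : Fin H, γ ^ ((t : ℕ) + 1) * vnx V t τ := by
      intro τ
      set G : ℕ → ℝ := fun n => if h : n < H then γ ^ n * V ⟨n, h⟩ τ else 0 with hGdef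
      have hGa : ∀ t : Fin H, γ ^ ((t : ℕ) + 1) * vnx V t τ = G ((t : ℕ) + 1) := by
        intro t
        simp only [hGdef]
        by_cases h2 : (t : ℕ) + 1 < H
        · rw [dif_pos h2]
          unfold vnx
          rw [dif_pos h2]
        · rw [dif_neg h2]
          unfold vnx
          rw [dif_neg h2]
          ring
      have hGb : ∀ t : Fin H, γ ^ (t : ℕ) * V t τ = G (t : ℕ) := by
        intro t
        simp only [hGdef]
        rw [dif_pos t.isLt]
      have hG0 : G 0 = V 0 τ := by
        simp only [hGdef]
        rw [dif_pos (Nat.pos_of_ne_zero (NeZero.ne H))]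
        have : (⟨0, Nat.pos_of_ne_zero (NeZero.ne H)⟩ : Fin H) = 0 := Fin.ext (by simp)
        rw [this]
        simp
      have hGH : G H = 0 := by simp only [hGdef]; rw [dif_neg (by omega)]
      rw [Finset.sum_congr rfl fun t _ => hGb t,
        Finset.sum_congr rfl fun t _ => hGa t,
        Fin.sum_univ_eq_sum_range (fun n => G n) H,
        Fin.sum_univ_eq_sum_range (fun n => G (n + 1)) H,
        sum_range_shift, hG0, hGH]
      ring
    -- decomposition of Φ
    have hPhi : ∀ τ, Φ τ = V 0 τ + ∑ t : Fin H, X t τ := by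
      intro τ
      rw [hΦ τ]
      have hterm : ∀ t : Fin H,
          γ ^ (t : ℕ) * (lam t τ * (rval (rewAt τ t) - Q t τ) + predOr1 lam t τ * V t τ)
          = X t τ + (γ ^ (t : ℕ) * (predOr1 lam t τ * V t τ)
              - γ ^ ((t : ℕ) + 1) * (lam t τ * vnx V t τ)) := by
        intro t
        simp only [hXdef]
        rw [pow_succ]
        ring
      rw [Finset.sum_congr rfl fun t _ => hterm t, Finset.sum_add_distrib,
        Finset.sum_sub_distrib, tele1 τ]
      ring
    -- the mean
    have hmean : Eexp p1 pib p Φ = Eexp p1 pib p (fun τ => V 0 τ) := by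
      calc Eexp p1 pib p Φ
          = Eexp p1 pib p (fun τ => V 0 τ + ∑ t : Fin H, X t τ) := Eexp_congr hPhi
        _ = Eexp p1 pib p (fun τ => V 0 τ)
            + ∑ t : Fin H, Eexp p1 pib p (X t) := by
            rw [Eexp_add]
            congr 1
            exact Eexp_sum Finset.univ X
        _ = Eexp p1 pib p (fun τ => V 0 τ) := by
            rw [Finset.sum_eq_zero fun t _ => hx1 t, add_zero]
    -- the value of J
    have hRew : ∀ τ : Traj S A R H, (∑ t : Fin H, γ ^ (t : ℕ) * rval (rewAt τ t))
        = V 0 τ + ∑ t : Fin H,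
            (γ ^ (t : ℕ) * (rval (rewAt τ t) + γ * vnx V t τ - Q t τ)
              + γ ^ (t : ℕ) * (Q t τ - V t τ)) := by
      intro τ
      have hterm : ∀ t : Fin H, γ ^ (t : ℕ) * rval (rewAt τ t)
          = (γ ^ (t : ℕ) * (rval (rewAt τ t) + γ * vnx V t τ - Q t τ)
              + γ ^ (t : ℕ) * (Q t τ - V t τ))
            + (γ ^ (t : ℕ) * V t τ - γ ^ ((t : ℕ) + 1) * vnx V t τ) := by
        intro t
        rw [pow_succ]
        ring
      rw [Finset.sum_congr rfl fun t _ => hterm t, Finset.sum_add_distrib,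
        Finset.sum_sub_distrib, tele2 τ]
      ring
    have hEeD : ∀ t : Fin H, Eexp p1 pie p
        (fun τ => γ ^ (t : ℕ) * (rval (rewAt τ t) + γ * vnx V t τ - Q t τ)) = 0 := by
      intro t
      exact exp_weighted_D_zero dS dA dR hpie1 hpieAd hpsum hpAd rval γ Q V hQ' hQm hVm t
        (fun _ => γ ^ (t : ℕ)) (fun _ _ _ => rfl) (fun _ _ => γ ^ (t : ℕ)) (fun _ _ _ => rfl)
    have hEeQV : ∀ t : Fin H, Eexp p1 pie p
        (fun τ => γ ^ (t : ℕ) * (Q t τ - V t τ)) = 0 := by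
      intro t
      exact exp_QV_zero dS dA dR hpie1 hpieAd hpsum hpAd Q V hV hQm hVm t (γ ^ (t : ℕ))
    have hEbV0 : Eexp p1 pie p (fun τ => V 0 τ) = Eexp p1 pib p (fun τ => V 0 τ) :=
      exp_first_state dS dA dR hpie1 hpieAd hpib1 hpibAd hpsum hpAd (fun τ => V 0 τ)
        (fun τ τ' h => hV0meas 0 τ τ' h)
    have hJv : Jval = Eexp p1 pib p (fun τ => V 0 τ) := by
      rw [hJ]
      calc Eexp p1 pie p (fun τ => ∑ t : Fin H, γ ^ (t : ℕ) * rval (rewAt τ t))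
          = Eexp p1 pie p (fun τ => V 0 τ + ∑ t : Fin H,
              (γ ^ (t : ℕ) * (rval (rewAt τ t) + γ * vnx V t τ - Q t τ)
                + γ ^ (t : ℕ) * (Q t τ - V t τ))) := Eexp_congr hRew
        _ = Eexp p1 pie p (fun τ => V 0 τ)
            + ∑ t : Fin H, Eexp p1 pie p
              (fun τ => γ ^ (t : ℕ) * (rval (rewAt τ t) + γ * vnx V t τ - Q t τ)
                + γ ^ (t : ℕ) * (Q t τ - V t τ)) := by
            rw [Eexp_add]
            congr 1
            exact Eexp_sum Finset.univ _
        _ = Eexp p1 pie p (fun τ => V 0 τ) := by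
            rw [Finset.sum_eq_zero, add_zero]
            intro t _
            rw [Eexp_add, hEeD t, hEeQV t, add_zero]
        _ = Eexp p1 pib p (fun τ => V 0 τ) := hEbV0
    -- second moment
    have hcrossV0 : ∀ t : Fin H, Eexp p1 pib p (fun τ => 2 * (V 0 τ * X t τ)) = 0 := by
      intro t
      have h0 := hXzero (fun τ => 2 * V 0 τ) t
        (fun τ τ' h => by
          show 2 * V 0 τ = 2 * V 0 τ'
          rw [hV0meas ((t : ℕ) + 1) τ τ' h])
        (fun τ a sr => by
          show 2 * V 0 (modAt t a sr τ) = 2 * V 0 τ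
          rw [hV0mod t a sr τ])
      rw [← h0]
      apply Eexp_congr
      intro τ
      simp only [hXdef]
      ring
    have hoff : ∀ t u : Fin H, u ≠ t → Eexp p1 pib p (fun τ => X t τ * X u τ) = 0 := by
      intro t u hne
      rcases Nat.lt_or_ge (u : ℕ) (t : ℕ) with hlt | hge
      · have h0 := hXzero (X u) t
          (fun τ τ' h => hXmeas u τ τ' (compatN_of_le (by omega) h))
          (fun τ a sr => hXmod u t hlt a sr τ)
        rw [← h0]
        apply Eexp_congr
        intro τ
        simp only [hXdef]
        ring
      · have hlt : (t : ℕ) < (u : ℕ) := by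
          have : (u : ℕ) ≠ (t : ℕ) := fun hh => hne (Fin.ext hh)
          omega
        have h0 := hXzero (X t) u
          (fun τ τ' h => hXmeas t τ τ' (compatN_of_le (by omega) h))
          (fun τ a sr => hXmod t u hlt a sr τ)
        rw [← h0]
        apply Eexp_congr
        intro τ
        simp only [hXdef]
        ring
    have hdiag : ∀ t : Fin H, Eexp p1 pib p (fun τ => X t τ * X t τ)
        = Eexp p1 pib p (fun τ => γ ^ (2 * (t : ℕ)) * lam t τ ^ 2 * cvar t τ) := by
      intro t
      have hsq := exp_weighted_sq (p1 := p1) dS dA dR hpib1 hpibAd hpsum hpAd rval γ Q V cvar hQ' hQm hVm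
        hcvar' hcvarm t (fun τ => γ ^ (t : ℕ) * lam t τ)
        (fun τ τ' h => by
          show γ ^ (t : ℕ) * lam t τ = γ ^ (t : ℕ) * lam t τ'
          rw [hlmeas t τ τ' h])
        (fun τ a => γ ^ (t : ℕ) * (predOr1 lam t τ * (pie t τ a / pib t τ a)))
        (fun τ a sr => by
          show γ ^ (t : ℕ) * lam t (modAt t a sr τ)
            = γ ^ (t : ℕ) * (predOr1 lam t τ * (pie t τ a / pib t τ a))
          rw [hlmod t τ a sr])
      calc Eexp p1 pib p (fun τ => X t τ * X t τ)
          = Eexp p1 pib p (fun τ => (γ ^ (t : ℕ) * lam t τ) ^ 2 *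
              (rval (rewAt τ t) + γ * vnx V t τ - Q t τ) ^ 2) := by
            apply Eexp_congr
            intro τ
            simp only [hXdef]
            ring
        _ = Eexp p1 pib p (fun τ => (γ ^ (t : ℕ) * lam t τ) ^ 2 * cvar t τ) := hsq
        _ = Eexp p1 pib p (fun τ => γ ^ (2 * (t : ℕ)) * lam t τ ^ 2 * cvar t τ) := by
            apply Eexp_congr
            intro τ
            rw [two_mul, pow_add]
            ring
    have hdouble : ∀ t : Fin H,
        (∑ u : Fin H, Eexp p1 pib p (fun τ => X t τ * X u τ))
          = Eexp p1 pib p (fun τ => γ ^ (2 * (t : ℕ)) * lam t τ ^ 2 * cvar t τ) := by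
      intro t
      rw [Finset.sum_eq_single t (fun u _ hu => hoff t u hu)
        (fun h => absurd (Finset.mem_univ t) h), hdiag t]
    have hPhiSq : Eexp p1 pib p (fun τ => Φ τ ^ 2)
        = Eexp p1 pib p (fun τ => V 0 τ ^ 2)
          + ∑ t : Fin H, Eexp p1 pib p
            (fun τ => γ ^ (2 * (t : ℕ)) * lam t τ ^ 2 * cvar t τ) := by
      have hdecomp : ∀ τ, Φ τ ^ 2 = V 0 τ ^ 2
          + ((∑ t : Fin H, 2 * (V 0 τ * X t τ))
            + ∑ t : Fin H, ∑ u : Fin H, X t τ * X u τ) := by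
        intro τ
        rw [hPhi τ]
        have h1 : (∑ t : Fin H, X t τ) * (∑ u : Fin H, X u τ)
            = ∑ t : Fin H, ∑ u : Fin H, X t τ * X u τ := Finset.sum_mul_sum _ _ _ _
        have h2 : (2 : ℝ) * (V 0 τ * ∑ t : Fin H, X t τ)
            = ∑ t : Fin H, 2 * (V 0 τ * X t τ) := by
          simp only [Finset.mul_sum]
        rw [← h1, ← h2]
        ring
      calc Eexp p1 pib p (fun τ => Φ τ ^ 2)
          = Eexp p1 pib p (fun τ => V 0 τ ^ 2
            + ((∑ t : Fin H, 2 * (V 0 τ * X t τ))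
              + ∑ t : Fin H, ∑ u : Fin H, X t τ * X u τ)) := Eexp_congr hdecomp
        _ = Eexp p1 pib p (fun τ => V 0 τ ^ 2)
            + (Eexp p1 pib p (fun τ => ∑ t : Fin H, 2 * (V 0 τ * X t τ))
              + Eexp p1 pib p (fun τ => ∑ t : Fin H, ∑ u : Fin H, X t τ * X u τ)) := by
            rw [Eexp_add, Eexp_add]
        _ = Eexp p1 pib p (fun τ => V 0 τ ^ 2)
            + ((∑ t : Fin H, Eexp p1 pib p (fun τ => 2 * (V 0 τ * X t τ)))
              + ∑ t : Fin H, Eexp p1 pib p (fun τ => ∑ u : Fin H, X t τ * X u τ)) := by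
            rw [Eexp_sum, Eexp_sum]
        _ = Eexp p1 pib p (fun τ => V 0 τ ^ 2)
            + ((0 : ℝ) + ∑ t : Fin H, ∑ u : Fin H,
                Eexp p1 pib p (fun τ => X t τ * X u τ)) := by
            rw [Finset.sum_eq_zero fun t _ => hcrossV0 t]
            congr 1
            congr 1
            exact Finset.sum_congr rfl fun t _ =>
              Eexp_sum Finset.univ (fun u τ => X t τ * X u τ)
        _ = Eexp p1 pib p (fun τ => V 0 τ ^ 2)
            + ∑ t : Fin H, Eexp p1 pib p
              (fun τ => γ ^ (2 * (t : ℕ)) * lam t τ ^ 2 * cvar t τ) := by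
            rw [Finset.sum_congr rfl fun t _ => hdouble t, zero_add]
    constructor
    · rw [hmean, hJv]
    · rw [hPhiSq, hmean]
      have hgoal : ∀ t : Fin H, Eexp p1 pib p
          (fun τ => γ ^ (2 * (t : ℕ)) * lam t τ ^ 2 * cvar t τ)
          = Eexp p1 pib p (fun τ => γ ^ (2 * (t : ℕ)) * cumRatio pib pie t τ ^ 2 * cvar t τ) :=
        fun t => rfl
      rw [Finset.sum_congr rfl fun t _ => hgoal t]
      ring
end

section
/- In the finite-horizon time-varying Markov decision process (TMDP) setting with positivity and γ = 1, suppose that rewards satisfy 0 ≤ r ≤ R_max for all r ∈ ℛ with positive probability, and that μ_t(s,a) ≤ C′ for all t and all (s,a) with p_{π^b,t}(s,a) > 0. Then the TMDP efficiency bound satisfies Var_{P_{π^b}}[V_1(s_1)] + Σ_{t=1}^H E_{P_{π^b}}[μ_t(s_t,a_t)² var(r_t + V_{t+1}(s_{t+1}) | s_t,a_t)] ≤ C′ H² R_max², i.e., it grows at most polynomially (quadratically) in the horizon H. -/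
open Finset

variable {S A R : Type} {H : ℕ}

/-- Probability of a trajectory in a time-varying MDP with initial distribution `p1`,
Markov policy `pol` and Markov transition/reward kernels `p`. -/
noncomputable def trajProbT [NeZero H] (p1 : S → ℝ) (pol : Fin H → S → A → ℝ)
    (p : Fin H → S → A → S × R → ℝ) (τ : Traj S A R H) : ℝ :=
  p1 (stateAt τ 0) *
    ∏ t : Fin H,
      (pol t (stateAt τ t) (actAt τ t) *
        p t (stateAt τ t) (actAt τ t) (nextStateAt τ t, rewAt τ t))

/-- Expectation of `f` over trajectories. -/
noncomputable def EexpT [NeZero H] [Fintype S] [Fintype A] [Fintype R] (p1 : S → ℝ)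
    (pol : Fin H → S → A → ℝ) (p : Fin H → S → A → S × R → ℝ)
    (f : Traj S A R H → ℝ) : ℝ :=
  ∑ τ : Traj S A R H, trajProbT p1 pol p τ * f τ

/-- Marginal law `p_{π,t}(s)` of the state `S_t`. -/
noncomputable def margS [NeZero H] [Fintype S] [Fintype A] [Fintype R] [DecidableEq S]
    (p1 : S → ℝ) (pol : Fin H → S → A → ℝ) (p : Fin H → S → A → S × R → ℝ)
    (t : Fin H) (s : S) : ℝ :=
  ∑ τ : Traj S A R H, if stateAt τ t = s then trajProbT p1 pol p τ else 0

/-- Marginal law `p_{π,t}(s,a)` of the pair `(S_t, A_t)`. -/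
noncomputable def margSA [NeZero H] [Fintype S] [Fintype A] [Fintype R]
    [DecidableEq S] [DecidableEq A]
    (p1 : S → ℝ) (pol : Fin H → S → A → ℝ) (p : Fin H → S → A → S × R → ℝ)
    (t : Fin H) (s : S) (a : A) : ℝ :=
  ∑ τ : Traj S A R H, if stateAt τ t = s ∧ actAt τ t = a then trajProbT p1 pol p τ else 0

/-- `g_{t-1}(s_{t-1}, a_{t-1})` when `t > 0`, and `1` for `t = 0`
(the convention `μ_0 = 1`). -/
noncomputable def predTermT (g : Fin H → S → A → ℝ) (t : Fin H)
    (τ : Traj S A R H) : ℝ :=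
  if _ : 0 < (t : ℕ) then
    g ⟨(t : ℕ) - 1, Nat.lt_of_le_of_lt (Nat.sub_le _ _) t.isLt⟩
      (stateAt τ ⟨(t : ℕ) - 1, Nat.lt_of_le_of_lt (Nat.sub_le _ _) t.isLt⟩)
      (actAt τ ⟨(t : ℕ) - 1, Nat.lt_of_le_of_lt (Nat.sub_le _ _) t.isLt⟩)
  else 1

section Aux
set_option linter.unusedSectionVars false
variable [Fintype S] [Fintype A] [Fintype R]

def initState {H : ℕ} (τ : Traj S A R H) : S :=
  if h : 0 < H then (τ.1 ⟨0, h⟩).1 else τ.2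

noncomputable def myP (H : ℕ) (p1 : S → ℝ) (pol : Fin H → S → A → ℝ)
    (p : Fin H → S → A → S × R → ℝ) (τ : Traj S A R H) : ℝ :=
  p1 (initState τ) * ∏ t : Fin H, (pol t (stateAt τ t) (actAt τ t) *
      p t (stateAt τ t) (actAt τ t) (nextStateAt τ t, rewAt τ t))

noncomputable def myE (H : ℕ) (p1 : S → ℝ) (pol : Fin H → S → A → ℝ)
    (p : Fin H → S → A → S × R → ℝ) (f : Traj S A R H → ℝ) : ℝ :=
  ∑ τ : Traj S A R H, myP H p1 pol p τ * f τ

lemma myE_zero (p1 : S → ℝ) (pol : Fin 0 → S → A → ℝ)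
    (p : Fin 0 → S → A → S × R → ℝ) (f : Traj S A R 0 → ℝ) :
    myE 0 p1 pol p f = ∑ s : S, p1 s * f (fun i => i.elim0, s) := by
  rw [myE, Fintype.sum_prod_type]
  rw [Fintype.sum_unique]
  have hd : (default : Fin 0 → S × A × R) = fun i => i.elim0 := by
    funext i; exact i.elim0
  simp [myP, initState, hd]

lemma cons_traj_state (m : ℕ) (x : S × A × R) (g : Fin m → S × A × R) (s' : S) (k : Fin m) :
    stateAt ((Fin.cons x g, s') : Traj S A R (m+1)) k.succ = stateAt ((g, s') : Traj S A R m) k := by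
  simp [stateAt]

lemma cons_traj_next (m : ℕ) (x : S × A × R) (g : Fin m → S × A × R) (s' : S) (k : Fin m) :
    nextStateAt ((Fin.cons x g, s') : Traj S A R (m+1)) k.succ
      = nextStateAt ((g, s') : Traj S A R m) k := by
  simp only [nextStateAt]
  by_cases h : (k : ℕ) + 1 < m
  · rw [dif_pos (by simpa using Nat.succ_lt_succ h), dif_pos h]
    have : (⟨(k.succ : ℕ) + 1, by simpa using Nat.succ_lt_succ h⟩ : Fin (m+1))
        = Fin.succ ⟨(k : ℕ) + 1, h⟩ := by
      ext; simp [Fin.val_succ]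
    rw [this, Fin.cons_succ]
  · rw [dif_neg (by simpa using fun hh => h (Nat.lt_of_succ_lt_succ hh)), dif_neg h]

lemma cons_traj_next_zero (m : ℕ) (x : S × A × R) (g : Fin m → S × A × R) (s' : S) :
    nextStateAt ((Fin.cons x g, s') : Traj S A R (m+1)) 0
      = initState ((g, s') : Traj S A R m) := by
  simp only [nextStateAt, initState]
  by_cases h : 0 < m
  · rw [dif_pos (by simpa using Nat.succ_lt_succ h), dif_pos h]
    have : (⟨((0 : Fin (m+1)) : ℕ) + 1, by simpa using Nat.succ_lt_succ h⟩ : Fin (m+1))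
        = Fin.succ ⟨0, h⟩ := by ext; simp
    rw [this, Fin.cons_succ]
  · rw [dif_neg (by simpa using fun hh => h (Nat.lt_of_succ_lt_succ hh)), dif_neg h]

lemma myP_cons (m : ℕ) (p1 : S → ℝ) (pol : Fin (m+1) → S → A → ℝ)
    (p : Fin (m+1) → S → A → S × R → ℝ) (s0 : S) (a0 : A) (r0 : R)
    (g : Fin m → S × A × R) (s' : S) :
    myP (m+1) p1 pol p (Fin.cons (s0, a0, r0) g, s')
      = p1 s0 * pol 0 s0 a0 *
        myP m (fun s1 => p 0 s0 a0 (s1, r0)) (fun k => pol k.succ) (fun k => p k.succ) (g, s') := by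
  rw [myP, myP, Fin.prod_univ_succ]
  have hstate0 : stateAt ((Fin.cons (s0,a0,r0) g, s') : Traj S A R (m+1)) 0 = s0 := by
    simp [stateAt]
  have hact0 : actAt ((Fin.cons (s0,a0,r0) g, s') : Traj S A R (m+1)) 0 = a0 := by
    simp [actAt]
  have hrew0 : rewAt ((Fin.cons (s0,a0,r0) g, s') : Traj S A R (m+1)) 0 = r0 := by
    simp [rewAt]
  have hinit : initState ((Fin.cons (s0,a0,r0) g, s') : Traj S A R (m+1)) = s0 := by
    have h0 : (⟨0, Nat.succ_pos m⟩ : Fin (m+1)) = 0 := rfl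
    simp [initState, h0]
  rw [hstate0, hact0, hrew0, hinit, cons_traj_next_zero]
  have hprod : ∀ k : Fin m,
      (pol k.succ (stateAt ((Fin.cons (s0,a0,r0) g, s') : Traj S A R (m+1)) k.succ)
          (actAt ((Fin.cons (s0,a0,r0) g, s') : Traj S A R (m+1)) k.succ) *
        p k.succ (stateAt ((Fin.cons (s0,a0,r0) g, s') : Traj S A R (m+1)) k.succ)
          (actAt ((Fin.cons (s0,a0,r0) g, s') : Traj S A R (m+1)) k.succ)
          (nextStateAt ((Fin.cons (s0,a0,r0) g, s') : Traj S A R (m+1)) k.succ,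
            rewAt ((Fin.cons (s0,a0,r0) g, s') : Traj S A R (m+1)) k.succ))
      = (pol k.succ (stateAt ((g,s') : Traj S A R m) k) (actAt ((g,s') : Traj S A R m) k) *
          p k.succ (stateAt ((g,s') : Traj S A R m) k) (actAt ((g,s') : Traj S A R m) k)
            (nextStateAt ((g,s') : Traj S A R m) k, rewAt ((g,s') : Traj S A R m) k)) := by
    intro k
    rw [cons_traj_state, cons_traj_next]
    simp [actAt, rewAt]
  rw [Finset.prod_congr rfl (fun k _ => hprod k)]
  ring

lemma myE_succ (m : ℕ) (p1 : S → ℝ) (pol : Fin (m+1) → S → A → ℝ)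
    (p : Fin (m+1) → S → A → S × R → ℝ) (f : Traj S A R (m+1) → ℝ) :
    myE (m+1) p1 pol p f =
      ∑ s0 : S, ∑ a0 : A, ∑ r0 : R, p1 s0 * pol 0 s0 a0 *
        myE m (fun s1 => p 0 s0 a0 (s1, r0)) (fun k => pol k.succ) (fun k => p k.succ)
          (fun τ' => f (Fin.cons (s0, a0, r0) τ'.1, τ'.2)) := by
  have hsplit : ∀ (F : (Fin (m+1) → S × A × R) → ℝ), (∑ g, F g)
      = ∑ q : (S × A × R) × (Fin m → S × A × R), F (Fin.cons q.1 q.2) := by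
    intro F
    exact (Fintype.sum_equiv (Fin.consEquiv (fun _ => S × A × R))
      (fun q => F (Fin.cons q.1 q.2)) F (fun q => rfl)).symm
  rw [myE, Fintype.sum_prod_type,
    hsplit (fun g => ∑ s' : S, myP (m+1) p1 pol p (g, s') * f (g, s'))]
  simp only [myE, Fintype.sum_prod_type, Finset.mul_sum]
  refine Finset.sum_congr rfl fun s0 _ => Finset.sum_congr rfl fun a0 _ =>
    Finset.sum_congr rfl fun r0 _ => Finset.sum_congr rfl fun g' _ =>
    Finset.sum_congr rfl fun s' _ => ?_
  rw [myP_cons]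
  ring


lemma initState_cons (m : ℕ) (x : S × A × R) (g : Fin m → S × A × R) (s' : S) :
    initState ((Fin.cons x g, s') : Traj S A R (m+1)) = x.1 := by
  have h0 : (⟨0, Nat.succ_pos m⟩ : Fin (m+1)) = 0 := rfl
  simp [initState, h0]

lemma sum_p_pair (m : ℕ) (p : Fin (m+1) → S → A → S × R → ℝ)
    (hpsum : ∀ t s a, ∑ sr : S × R, p t s a sr = 1) (s0 : S) (a0 : A) :
    ∑ r0 : R, ∑ s1 : S, p 0 s0 a0 (s1, r0) = 1 := by
  rw [Finset.sum_comm]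
  simpa [Fintype.sum_prod_type] using hpsum 0 s0 a0

lemma myE_init : ∀ (H : ℕ) (p1 : S → ℝ) (pol : Fin H → S → A → ℝ)
    (p : Fin H → S → A → S × R → ℝ),
    (∀ t s, ∑ a, pol t s a = 1) → (∀ t s a, ∑ sr : S × R, p t s a sr = 1) →
    ∀ g : S → ℝ, myE H p1 pol p (fun τ => g (initState τ)) = ∑ s : S, p1 s * g s := by
  intro H
  induction H with
  | zero =>
    intro p1 pol p _ _ g
    rw [myE_zero]
    refine Finset.sum_congr rfl fun s _ => ?_
    simp [initState]
  | succ m IH =>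
    intro p1 pol p hpol1 hpsum g
    rw [myE_succ]
    have hrw : ∀ (s0 : S) (a0 : A) (r0 : R),
        myE m (fun s1 => p 0 s0 a0 (s1, r0)) (fun k => pol k.succ) (fun k => p k.succ)
          (fun τ' => g (initState ((Fin.cons (s0,a0,r0) τ'.1, τ'.2) : Traj S A R (m+1))))
        = (∑ s1 : S, p 0 s0 a0 (s1, r0)) * g s0 := by
      intro s0 a0 r0
      have h1 : (fun τ' : Traj S A R m =>
          g (initState ((Fin.cons (s0,a0,r0) τ'.1, τ'.2) : Traj S A R (m+1))))
          = fun _ => g s0 := by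
        funext τ'
        rw [initState_cons]
      rw [h1]
      have := IH (fun s1 => p 0 s0 a0 (s1, r0)) (fun k => pol k.succ) (fun k => p k.succ)
        (fun t s => hpol1 t.succ s) (fun t s a => hpsum t.succ s a) (fun _ => g s0)
      rw [this, ← Finset.sum_mul]
    calc ∑ s0 : S, ∑ a0 : A, ∑ r0 : R, p1 s0 * pol 0 s0 a0 *
          myE m (fun s1 => p 0 s0 a0 (s1, r0)) (fun k => pol k.succ) (fun k => p k.succ)
            (fun τ' => g (initState ((Fin.cons (s0,a0,r0) τ'.1, τ'.2) : Traj S A R (m+1))))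
        = ∑ s0 : S, ∑ a0 : A, ∑ r0 : R, p1 s0 * pol 0 s0 a0 *
            ((∑ s1 : S, p 0 s0 a0 (s1, r0)) * g s0) := by
          exact Finset.sum_congr rfl fun s0 _ => Finset.sum_congr rfl fun a0 _ =>
            Finset.sum_congr rfl fun r0 _ => by rw [hrw]
      _ = ∑ s0 : S, p1 s0 * g s0 * ∑ a0 : A, pol 0 s0 a0 *
            (∑ r0 : R, ∑ s1 : S, p 0 s0 a0 (s1, r0)) := by
          simp only [Finset.mul_sum]
          refine Finset.sum_congr rfl fun s0 _ => Finset.sum_congr rfl fun a0 _ =>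
            Finset.sum_congr rfl fun r0 _ => ?_
          rw [Finset.sum_mul, Finset.mul_sum]
          exact Finset.sum_congr rfl fun s1 _ => by ring
      _ = ∑ s0 : S, p1 s0 * g s0 := by
          refine Finset.sum_congr rfl fun s0 _ => ?_
          have : ∑ a0 : A, pol 0 s0 a0 * (∑ r0 : R, ∑ s1 : S, p 0 s0 a0 (s1, r0))
              = 1 := by
            calc ∑ a0 : A, pol 0 s0 a0 * (∑ r0 : R, ∑ s1 : S, p 0 s0 a0 (s1, r0))
                = ∑ a0 : A, pol 0 s0 a0 := by
                  refine Finset.sum_congr rfl fun a0 _ => ?_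
                  rw [sum_p_pair m p hpsum, mul_one]
              _ = 1 := hpol1 0 s0
          rw [this, mul_one]

lemma myE_one (H : ℕ) (p1 : S → ℝ) (pol : Fin H → S → A → ℝ)
    (p : Fin H → S → A → S × R → ℝ)
    (hpol1 : ∀ t s, ∑ a, pol t s a = 1) (hpsum : ∀ t s a, ∑ sr : S × R, p t s a sr = 1) :
    myE H p1 pol p (fun _ => 1) = ∑ s : S, p1 s := by
  simpa using myE_init H p1 pol p hpol1 hpsum (fun _ => 1)

lemma myP_nonneg (H : ℕ) (p1 : S → ℝ) (pol : Fin H → S → A → ℝ)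
    (p : Fin H → S → A → S × R → ℝ) (hp1 : ∀ s, 0 ≤ p1 s)
    (hpol : ∀ t s a, 0 ≤ pol t s a) (hp : ∀ t s a sr, 0 ≤ p t s a sr) (τ : Traj S A R H) :
    0 ≤ myP H p1 pol p τ :=
  mul_nonneg (hp1 _) (Finset.prod_nonneg fun t _ => mul_nonneg (hpol _ _ _) (hp _ _ _ _))

lemma myE_nonneg (H : ℕ) (p1 : S → ℝ) (pol : Fin H → S → A → ℝ)
    (p : Fin H → S → A → S × R → ℝ) (f : Traj S A R H → ℝ)
    (hP : ∀ τ, 0 ≤ myP H p1 pol p τ) (hf : ∀ τ, 0 ≤ f τ) :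
    0 ≤ myE H p1 pol p f :=
  Finset.sum_nonneg fun τ _ => mul_nonneg (hP τ) (hf τ)

lemma myE_mono (H : ℕ) (p1 : S → ℝ) (pol : Fin H → S → A → ℝ)
    (p : Fin H → S → A → S × R → ℝ) (f g : Traj S A R H → ℝ)
    (hP : ∀ τ, 0 ≤ myP H p1 pol p τ) (hfg : ∀ τ, f τ ≤ g τ) :
    myE H p1 pol p f ≤ myE H p1 pol p g :=
  Finset.sum_le_sum fun τ _ => mul_le_mul_of_nonneg_left (hfg τ) (hP τ)

lemma myE_add (H : ℕ) (p1 : S → ℝ) (pol : Fin H → S → A → ℝ)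
    (p : Fin H → S → A → S × R → ℝ) (f g : Traj S A R H → ℝ) :
    myE H p1 pol p (fun τ => f τ + g τ) = myE H p1 pol p f + myE H p1 pol p g := by
  simp [myE, mul_add, Finset.sum_add_distrib]

lemma myE_smul (H : ℕ) (p1 : S → ℝ) (pol : Fin H → S → A → ℝ)
    (p : Fin H → S → A → S × R → ℝ) (c : ℝ) (f : Traj S A R H → ℝ) :
    myE H p1 pol p (fun τ => c * f τ) = c * myE H p1 pol p f := by
  simp [myE, Finset.mul_sum, mul_left_comm]

lemma myE_congr (H : ℕ) (p1 : S → ℝ) (pol : Fin H → S → A → ℝ)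
    (p : Fin H → S → A → S × R → ℝ) (f g : Traj S A R H → ℝ) (h : ∀ τ, f τ = g τ) :
    myE H p1 pol p f = myE H p1 pol p g := by
  simp only [myE]
  exact Finset.sum_congr rfl fun τ _ => by rw [h]


lemma initState_eq {m : ℕ} (τ : Traj S A R (m+1)) : initState τ = stateAt τ 0 := by
  rw [initState, dif_pos (Nat.succ_pos m)]
  rfl

lemma cons_traj_state' {m : ℕ} (x : S × A × R) (τ' : Traj S A R m) (k : Fin m) :
    stateAt ((Fin.cons x τ'.1, τ'.2) : Traj S A R (m+1)) k.succ = stateAt τ' k := by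
  simp [stateAt]

lemma cons_traj_act' {m : ℕ} (x : S × A × R) (τ' : Traj S A R m) (k : Fin m) :
    actAt ((Fin.cons x τ'.1, τ'.2) : Traj S A R (m+1)) k.succ = actAt τ' k := by
  simp [actAt]

lemma cons_traj_rew' {m : ℕ} (x : S × A × R) (τ' : Traj S A R m) (k : Fin m) :
    rewAt ((Fin.cons x τ'.1, τ'.2) : Traj S A R (m+1)) k.succ = rewAt τ' k := by
  simp [rewAt]

lemma cons_traj_state0 {m : ℕ} (x : S × A × R) (τ' : Traj S A R m) :
    stateAt ((Fin.cons x τ'.1, τ'.2) : Traj S A R (m+1)) 0 = x.1 := by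
  simp [stateAt]

lemma cons_traj_act0 {m : ℕ} (x : S × A × R) (τ' : Traj S A R m) :
    actAt ((Fin.cons x τ'.1, τ'.2) : Traj S A R (m+1)) 0 = x.2.1 := by
  simp [actAt]

lemma cons_traj_rew0 {m : ℕ} (x : S × A × R) (τ' : Traj S A R m) :
    rewAt ((Fin.cons x τ'.1, τ'.2) : Traj S A R (m+1)) 0 = x.2.2 := by
  simp [rewAt]

lemma myE_init_act {m : ℕ} (p1 : S → ℝ) (pol : Fin (m+1) → S → A → ℝ)
    (p : Fin (m+1) → S → A → S × R → ℝ)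
    (hpol1 : ∀ t s, ∑ a, pol t s a = 1) (hpsum : ∀ t s a, ∑ sr : S × R, p t s a sr = 1)
    (g : S → A → ℝ) :
    myE (m+1) p1 pol p (fun τ => g (stateAt τ 0) (actAt τ 0))
      = ∑ s : S, ∑ a : A, p1 s * pol 0 s a * g s a := by
  rw [myE_succ]
  refine Finset.sum_congr rfl fun s0 _ => Finset.sum_congr rfl fun a0 _ => ?_
  have hin : ∀ r0 : R,
      myE m (fun s1 => p 0 s0 a0 (s1, r0)) (fun k => pol k.succ) (fun k => p k.succ)
        (fun τ' => g (stateAt ((Fin.cons (s0,a0,r0) τ'.1, τ'.2) : Traj S A R (m+1)) 0)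
          (actAt ((Fin.cons (s0,a0,r0) τ'.1, τ'.2) : Traj S A R (m+1)) 0))
      = (∑ s1 : S, p 0 s0 a0 (s1, r0)) * g s0 a0 := by
    intro r0
    have hfn : (fun τ' : Traj S A R m =>
        g (stateAt ((Fin.cons (s0,a0,r0) τ'.1, τ'.2) : Traj S A R (m+1)) 0)
          (actAt ((Fin.cons (s0,a0,r0) τ'.1, τ'.2) : Traj S A R (m+1)) 0))
        = fun _ => g s0 a0 := by
      funext τ'
      rw [cons_traj_state0, cons_traj_act0]
    rw [hfn]
    have := myE_init m (fun s1 => p 0 s0 a0 (s1, r0)) (fun k => pol k.succ)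
      (fun k => p k.succ) (fun t s => hpol1 t.succ s) (fun t s a => hpsum t.succ s a)
      (fun _ => g s0 a0)
    rw [this, ← Finset.sum_mul]
  calc ∑ r0 : R, p1 s0 * pol 0 s0 a0 *
        myE m (fun s1 => p 0 s0 a0 (s1, r0)) (fun k => pol k.succ) (fun k => p k.succ)
          (fun τ' => g (stateAt ((Fin.cons (s0,a0,r0) τ'.1, τ'.2) : Traj S A R (m+1)) 0)
            (actAt ((Fin.cons (s0,a0,r0) τ'.1, τ'.2) : Traj S A R (m+1)) 0))
      = ∑ r0 : R, p1 s0 * pol 0 s0 a0 * ((∑ s1 : S, p 0 s0 a0 (s1, r0)) * g s0 a0) :=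
        Finset.sum_congr rfl fun r0 _ => by rw [hin]
    _ = p1 s0 * pol 0 s0 a0 * g s0 a0 * (∑ r0 : R, ∑ s1 : S, p 0 s0 a0 (s1, r0)) := by
        rw [Finset.mul_sum]
        refine Finset.sum_congr rfl fun r0 _ => ?_
        rw [Finset.sum_mul, Finset.mul_sum, Finset.mul_sum]
        exact Finset.sum_congr rfl fun s1 _ => by ring
    _ = p1 s0 * pol 0 s0 a0 * g s0 a0 := by
        rw [sum_p_pair m p hpsum, mul_one]

section Ind
variable [DecidableEq S] [DecidableEq A]

noncomputable def indS {H : ℕ} (t : Fin H) (s : S) (τ : Traj S A R H) : ℝ :=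
  if stateAt τ t = s then 1 else 0

noncomputable def indSA {H : ℕ} (t : Fin H) (s : S) (a : A) (τ : Traj S A R H) : ℝ :=
  if stateAt τ t = s ∧ actAt τ t = a then 1 else 0

lemma margSA_fact : ∀ (H : ℕ) (p1 : S → ℝ) (pol : Fin H → S → A → ℝ)
    (p : Fin H → S → A → S × R → ℝ),
    (∀ t s, ∑ a, pol t s a = 1) → (∀ t s a, ∑ sr : S × R, p t s a sr = 1) →
    ∀ (t : Fin H) (s : S) (a : A),
    myE H p1 pol p (indSA t s a) = myE H p1 pol p (indS t s) * pol t s a := by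
  intro H
  induction H with
  | zero => intro _ _ _ _ _ t; exact t.elim0
  | succ m IH =>
    intro p1 pol p hpol1 hpsum t s a
    induction t using Fin.cases with
    | zero =>
      have h1 : myE (m+1) p1 pol p (indSA 0 s a)
          = ∑ s' : S, ∑ a' : A, p1 s' * pol 0 s' a' *
            ((if s' = s then 1 else 0) * (if a' = a then 1 else 0)) := by
        rw [← myE_init_act p1 pol p hpol1 hpsum
          (fun s' a' => (if s' = s then 1 else 0) * (if a' = a then 1 else 0))]
        refine myE_congr _ _ _ _ _ _ fun τ => ?_
        rw [indSA]
        by_cases h : stateAt τ 0 = s ∧ actAt τ 0 = a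
        · rw [if_pos h, if_pos h.1, if_pos h.2]; ring
        · rw [if_neg h]
          rcases Classical.em (stateAt τ 0 = s) with hs | hs
          · have ha : ¬ actAt τ 0 = a := fun ha => h ⟨hs, ha⟩
            rw [if_pos hs, if_neg ha]; ring
          · rw [if_neg hs]; ring
      have h2 : myE (m+1) p1 pol p (indS 0 s)
          = ∑ s' : S, p1 s' * (if s' = s then 1 else 0) := by
        rw [← myE_init (m+1) p1 pol p hpol1 hpsum (fun s' => if s' = s then 1 else 0)]
        refine myE_congr _ _ _ _ _ _ fun τ => ?_
        rw [indS, initState_eq]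
      rw [h1, h2]
      simp [Finset.sum_ite_eq', mul_comm]
    | succ k =>
      rw [myE_succ, myE_succ]
      have hL : ∀ (s0 : S) (a0 : A) (r0 : R),
          myE m (fun s1 => p 0 s0 a0 (s1, r0)) (fun k' => pol k'.succ) (fun k' => p k'.succ)
            (fun τ' => indSA k.succ s a ((Fin.cons (s0,a0,r0) τ'.1, τ'.2) : Traj S A R (m+1)))
          = myE m (fun s1 => p 0 s0 a0 (s1, r0)) (fun k' => pol k'.succ) (fun k' => p k'.succ)
              (indS k s) * pol k.succ s a := by
        intro s0 a0 r0
        have hfn : (fun τ' : Traj S A R m =>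
            indSA k.succ s a ((Fin.cons (s0,a0,r0) τ'.1, τ'.2) : Traj S A R (m+1)))
            = indSA k s a := by
          funext τ'
          rw [indSA, indSA, cons_traj_state', cons_traj_act']
        rw [hfn]
        exact IH (fun s1 => p 0 s0 a0 (s1, r0)) (fun k' => pol k'.succ) (fun k' => p k'.succ)
          (fun t' s' => hpol1 t'.succ s') (fun t' s' a' => hpsum t'.succ s' a') k s a
      have hR : ∀ (s0 : S) (a0 : A) (r0 : R),
          (fun τ' : Traj S A R m =>
            indS k.succ s ((Fin.cons (s0,a0,r0) τ'.1, τ'.2) : Traj S A R (m+1)))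
          = indS k s := by
        intro s0 a0 r0
        funext τ'
        rw [indS, indS, cons_traj_state']
      rw [Finset.sum_mul]
      refine Finset.sum_congr rfl fun s0 _ => ?_
      rw [Finset.sum_mul]
      refine Finset.sum_congr rfl fun a0 _ => ?_
      rw [Finset.sum_mul]
      refine Finset.sum_congr rfl fun r0 _ => ?_
      rw [hL s0 a0 r0]
      have := hR s0 a0 r0
      rw [this]
      ring


lemma indS_nonneg {H : ℕ} (t : Fin H) (s : S) (τ : Traj S A R H) : 0 ≤ indS t s τ := by
  rw [indS]; split <;> norm_num

lemma triple_sum_pos_elim {f : S → A → R → ℝ} (h0 : ∀ s a r, 0 ≤ f s a r)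
    (h : 0 < ∑ s : S, ∑ a : A, ∑ r : R, f s a r) : ∃ s a r, 0 < f s a r := by
  by_contra hc
  push_neg at hc
  have : ∑ s : S, ∑ a : A, ∑ r : R, f s a r ≤ 0 :=
    Finset.sum_nonpos fun s _ => Finset.sum_nonpos fun a _ => Finset.sum_nonpos
      fun r _ => hc s a r
  linarith

lemma triple_sum_pos_intro {f : S → A → R → ℝ} (h0 : ∀ s a r, 0 ≤ f s a r)
    (s : S) (a : A) (r : R) (h : 0 < f s a r) :
    0 < ∑ s' : S, ∑ a' : A, ∑ r' : R, f s' a' r' := by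
  have h1 : 0 < ∑ r' : R, f s a r' :=
    Finset.sum_pos' (fun r' _ => h0 s a r') ⟨r, Finset.mem_univ r, h⟩
  have h2 : 0 < ∑ a' : A, ∑ r' : R, f s a' r' :=
    Finset.sum_pos' (fun a' _ => Finset.sum_nonneg fun r' _ => h0 s a' r')
      ⟨a, Finset.mem_univ a, h1⟩
  exact Finset.sum_pos' (fun s' _ => Finset.sum_nonneg fun a' _ =>
    Finset.sum_nonneg fun r' _ => h0 s' a' r') ⟨s, Finset.mem_univ s, h2⟩

lemma mul3_pos_parts {x y z : ℝ} (hx : 0 ≤ x) (hy : 0 ≤ y) (hz : 0 ≤ z)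
    (h : 0 < x * y * z) : 0 < x ∧ 0 < y ∧ 0 < z := by
  refine ⟨?_, ?_, ?_⟩
  · rcases lt_or_eq_of_le hx with h' | h'
    · exact h'
    · exfalso; rw [← h'] at h; simp at h
  · rcases lt_or_eq_of_le hy with h' | h'
    · exact h'
    · exfalso; rw [← h'] at h; simp at h
  · rcases lt_or_eq_of_le hz with h' | h'
    · exact h'
    · exfalso; rw [← h'] at h; simp at h

lemma pos_transfer : ∀ (H : ℕ) (p1 : S → ℝ) (pib pie : Fin H → S → A → ℝ)
    (p : Fin H → S → A → S × R → ℝ),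
    (∀ s, 0 ≤ p1 s) → (∀ t s a, 0 ≤ pib t s a) → (∀ t s a, 0 ≤ pie t s a) →
    (∀ t s a sr, 0 ≤ p t s a sr) →
    (∀ t s, ∑ a, pib t s a = 1) → (∀ t s, ∑ a, pie t s a = 1) →
    (∀ t s a, ∑ sr : S × R, p t s a sr = 1) →
    (∀ (t : Fin H) (s : S) (a : A),
      0 < myE H p1 pib p (indS t s) → 0 < pie t s a → 0 < pib t s a) →
    ∀ (t : Fin H) (s : S),
      0 < myE H p1 pie p (indS t s) → 0 < myE H p1 pib p (indS t s) := by
  intro H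
  induction H with
  | zero => intro _ _ _ _ _ _ _ _ _ _ _ _ t; exact t.elim0
  | succ m IH =>
    intro p1 pib pie p hp1 hpib0 hpie0 hp0 hpib1 hpie1 hpsum hpos t s
    have hinit : ∀ (pol : Fin (m+1) → S → A → ℝ), (∀ t' s', ∑ a, pol t' s' a = 1) →
        ∀ s', myE (m+1) p1 pol p (indS 0 s') = p1 s' := by
      intro pol hpol1 s'
      have h2 : myE (m+1) p1 pol p (indS 0 s')
          = ∑ s'' : S, p1 s'' * (if s'' = s' then 1 else 0) := by
        rw [← myE_init (m+1) p1 pol p hpol1 hpsum (fun s'' => if s'' = s' then 1 else 0)]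
        refine myE_congr _ _ _ _ _ _ fun τ => ?_
        rw [indS, initState_eq]
      rw [h2]
      simp [Finset.sum_ite_eq', mul_comm]
    induction t using Fin.cases with
    | zero =>
      intro h
      rw [hinit pib hpib1 s]
      rw [hinit pie hpie1 s] at h
      exact h
    | succ k =>
      intro h
      have hfn' : ∀ (pol : Fin (m+1) → S → A → ℝ) (s0 : S) (a0 : A) (r0 : R),
          myE m (fun s1 => p 0 s0 a0 (s1, r0)) (fun k' => pol k'.succ) (fun k' => p k'.succ)
            (fun τ' => indS k.succ s ((Fin.cons (s0,a0,r0) τ'.1, τ'.2) : Traj S A R (m+1)))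
          = myE m (fun s1 => p 0 s0 a0 (s1, r0)) (fun k' => pol k'.succ)
              (fun k' => p k'.succ) (indS k s) := by
        intro pol s0 a0 r0
        refine myE_congr _ _ _ _ _ _ fun τ' => ?_
        rw [indS, indS, cons_traj_state']
      have htail_nonneg : ∀ (pol : Fin (m+1) → S → A → ℝ),
          (∀ t' s' a', 0 ≤ pol t' s' a') → ∀ (s0 : S) (a0 : A) (r0 : R),
          0 ≤ myE m (fun s1 => p 0 s0 a0 (s1, r0)) (fun k' => pol k'.succ)
              (fun k' => p k'.succ) (indS k s) := by
        intro pol hpol0 s0 a0 r0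
        exact myE_nonneg m _ _ _ _
          (myP_nonneg m _ _ _ (fun s1 => hp0 0 s0 a0 (s1, r0))
            (fun t' s' a' => hpol0 t'.succ s' a') (fun t' s' a' sr => hp0 t'.succ s' a' sr))
          (indS_nonneg k s)
      have hnn : ∀ (pol : Fin (m+1) → S → A → ℝ), (∀ t' s' a', 0 ≤ pol t' s' a') →
          ∀ (s0 : S) (a0 : A) (r0 : R),
          0 ≤ p1 s0 * pol 0 s0 a0 *
            myE m (fun s1 => p 0 s0 a0 (s1, r0)) (fun k' => pol k'.succ)
              (fun k' => p k'.succ) (indS k s) := by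
        intro pol hpol0 s0 a0 r0
        exact mul_nonneg (mul_nonneg (hp1 s0) (hpol0 0 s0 a0)) (htail_nonneg pol hpol0 s0 a0 r0)
      rw [myE_succ] at h
      have h' : 0 < ∑ s0 : S, ∑ a0 : A, ∑ r0 : R, p1 s0 * pie 0 s0 a0 *
          myE m (fun s1 => p 0 s0 a0 (s1, r0)) (fun k' => pie k'.succ)
            (fun k' => p k'.succ) (indS k s) := by
        refine lt_of_lt_of_eq h (Finset.sum_congr rfl fun s0 _ => Finset.sum_congr rfl
          fun a0 _ => Finset.sum_congr rfl fun r0 _ => ?_)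
        rw [hfn' pie s0 a0 r0]
      obtain ⟨s0, a0, r0, hterm⟩ := triple_sum_pos_elim (hnn pie hpie0) h'
      obtain ⟨hp1pos, hpiepos, htail⟩ :=
        mul3_pos_parts (hp1 s0) (hpie0 0 s0 a0) (htail_nonneg pie hpie0 s0 a0 r0) hterm
      have hpibpos : 0 < pib 0 s0 a0 := by
        refine hpos 0 s0 a0 ?_ hpiepos
        rw [hinit pib hpib1 s0]
        exact hp1pos
      have hgoal_of_tail : ∀ (htb : 0 < myE m (fun s1 => p 0 s0 a0 (s1, r0))
          (fun k' => pib k'.succ) (fun k' => p k'.succ) (indS k s)),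
          0 < myE (m+1) p1 pib p (indS k.succ s) := by
        intro htb
        rw [myE_succ]
        have heq : (∑ s0' : S, ∑ a0' : A, ∑ r0' : R, p1 s0' * pib 0 s0' a0' *
            myE m (fun s1 => p 0 s0' a0' (s1, r0')) (fun k' => pib k'.succ)
              (fun k' => p k'.succ)
              (fun τ' => indS k.succ s ((Fin.cons (s0',a0',r0') τ'.1, τ'.2) : Traj S A R (m+1))))
            = ∑ s0' : S, ∑ a0' : A, ∑ r0' : R, p1 s0' * pib 0 s0' a0' *
            myE m (fun s1 => p 0 s0' a0' (s1, r0')) (fun k' => pib k'.succ)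
              (fun k' => p k'.succ) (indS k s) :=
          Finset.sum_congr rfl fun s0' _ => Finset.sum_congr rfl
            fun a0' _ => Finset.sum_congr rfl fun r0' _ => by rw [hfn' pib s0' a0' r0']
        rw [heq]
        exact triple_sum_pos_intro (hnn pib hpib0) s0 a0 r0
          (mul_pos (mul_pos hp1pos hpibpos) htb)
      have hpos' : ∀ (t' : Fin m) (s' : S) (a' : A),
          0 < myE m (fun s1 => p 0 s0 a0 (s1, r0)) (fun k' => pib k'.succ)
            (fun k' => p k'.succ) (indS t' s') →
          0 < pie t'.succ s' a' → 0 < pib t'.succ s' a' := by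
        intro t' s' a' htail' hpie'
        refine hpos t'.succ s' a' ?_ hpie'
        rw [myE_succ]
        have hfn2 : ∀ (s0' : S) (a0' : A) (r0' : R),
            myE m (fun s1 => p 0 s0' a0' (s1, r0')) (fun k' => pib k'.succ)
              (fun k' => p k'.succ)
              (fun τ' => indS t'.succ s' ((Fin.cons (s0',a0',r0') τ'.1, τ'.2) : Traj S A R (m+1)))
            = myE m (fun s1 => p 0 s0' a0' (s1, r0')) (fun k' => pib k'.succ)
                (fun k' => p k'.succ) (indS t' s') := by
          intro s0' a0' r0'
          refine myE_congr _ _ _ _ _ _ fun τ'' => ?_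
          rw [indS, indS, cons_traj_state']
        have heq2 : (∑ s0' : S, ∑ a0' : A, ∑ r0' : R, p1 s0' * pib 0 s0' a0' *
            myE m (fun s1 => p 0 s0' a0' (s1, r0')) (fun k' => pib k'.succ)
              (fun k' => p k'.succ)
              (fun τ' => indS t'.succ s' ((Fin.cons (s0',a0',r0') τ'.1, τ'.2) : Traj S A R (m+1))))
            = ∑ s0' : S, ∑ a0' : A, ∑ r0' : R, p1 s0' * pib 0 s0' a0' *
            myE m (fun s1 => p 0 s0' a0' (s1, r0')) (fun k' => pib k'.succ)
              (fun k' => p k'.succ) (indS t' s') :=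
          Finset.sum_congr rfl fun s0' _ => Finset.sum_congr rfl
            fun a0' _ => Finset.sum_congr rfl fun r0' _ => by rw [hfn2 s0' a0' r0']
        rw [heq2]
        have hnn2 : ∀ (s0' : S) (a0' : A) (r0' : R),
            0 ≤ p1 s0' * pib 0 s0' a0' *
              myE m (fun s1 => p 0 s0' a0' (s1, r0')) (fun k' => pib k'.succ)
                (fun k' => p k'.succ) (indS t' s') := by
          intro s0' a0' r0'
          refine mul_nonneg (mul_nonneg (hp1 s0') (hpib0 0 s0' a0')) ?_
          exact myE_nonneg m _ _ _ _
            (myP_nonneg m _ _ _ (fun s1 => hp0 0 s0' a0' (s1, r0'))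
              (fun t'' s'' a'' => hpib0 t''.succ s'' a'')
              (fun t'' s'' a'' sr => hp0 t''.succ s'' a'' sr))
            (indS_nonneg t' s')
        exact triple_sum_pos_intro hnn2 s0 a0 r0
          (mul_pos (mul_pos hp1pos hpibpos) htail')
      have htailb := IH (fun s1 => p 0 s0 a0 (s1, r0)) (fun k' => pib k'.succ)
        (fun k' => pie k'.succ) (fun k' => p k'.succ)
        (fun s1 => hp0 0 s0 a0 (s1, r0)) (fun t' s' a' => hpib0 t'.succ s' a')
        (fun t' s' a' => hpie0 t'.succ s' a') (fun t' s' a' sr => hp0 t'.succ s' a' sr)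
        (fun t' s' => hpib1 t'.succ s') (fun t' s' => hpie1 t'.succ s')
        (fun t' s' a' => hpsum t'.succ s' a') hpos' k s htail
      exact hgoal_of_tail htailb

end Ind

noncomputable def sumRew {H : ℕ} (rval : R → ℝ) (τ : Traj S A R H) : ℝ :=
  ∑ t : Fin H, rval (rewAt τ t)

lemma sumRew_cons {m : ℕ} (rval : R → ℝ) (x : S × A × R) (τ' : Traj S A R m) :
    sumRew rval ((Fin.cons x τ'.1, τ'.2) : Traj S A R (m+1)) = rval x.2.2 + sumRew rval τ' := by
  rw [sumRew, Fin.sum_univ_succ, cons_traj_rew0]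
  congr 1

noncomputable def Vnext (H : ℕ) (V : Fin H → S → ℝ) (n : ℕ) (s : S) : ℝ :=
  if h : n < H then V ⟨n, h⟩ s else 0

lemma Vnext_succ {m : ℕ} (V : Fin (m+1) → S → ℝ) (n : ℕ) (s : S) :
    Vnext m (fun k => V k.succ) n s = Vnext (m+1) V (n+1) s := by
  rw [Vnext, Vnext]
  by_cases h : n < m
  · rw [dif_pos h, dif_pos (Nat.succ_lt_succ h)]
    rfl
  · rw [dif_neg h, dif_neg (fun hh => h (Nat.lt_of_succ_lt_succ hh))]

lemma myE_mean : ∀ (H : ℕ) (p1 : S → ℝ) (pol : Fin H → S → A → ℝ)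
    (p : Fin H → S → A → S × R → ℝ) (rval : R → ℝ)
    (Q : Fin H → S → A → ℝ) (V : Fin H → S → ℝ),
    (∀ t s, ∑ a, pol t s a = 1) → (∀ t s a, ∑ sr : S × R, p t s a sr = 1) →
    (∀ t s a, Q t s a = ∑ sr : S × R, p t s a sr * (rval sr.2 + Vnext H V ((t : ℕ)+1) sr.1)) →
    (∀ t s, V t s = ∑ a, pol t s a * Q t s a) →
    myE H p1 pol p (sumRew rval) = ∑ s : S, p1 s * Vnext H V 0 s := by
  intro H
  induction H with
  | zero =>
    intro p1 pol p rval Q V _ _ _ _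
    rw [myE_zero]
    refine Finset.sum_congr rfl fun s _ => ?_
    rw [sumRew, Vnext]
    simp
  | succ m IH =>
    intro p1 pol p rval Q V hpol1 hpsum hQ hV
    rw [myE_succ]
    have hin : ∀ (s0 : S) (a0 : A) (r0 : R),
        myE m (fun s1 => p 0 s0 a0 (s1, r0)) (fun k => pol k.succ) (fun k => p k.succ)
          (fun τ' => sumRew rval ((Fin.cons (s0,a0,r0) τ'.1, τ'.2) : Traj S A R (m+1)))
        = ∑ s1 : S, p 0 s0 a0 (s1, r0) * (rval r0 + Vnext (m+1) V 1 s1) := by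
      intro s0 a0 r0
      have h1 : myE m (fun s1 => p 0 s0 a0 (s1, r0)) (fun k => pol k.succ) (fun k => p k.succ)
          (fun τ' => sumRew rval ((Fin.cons (s0,a0,r0) τ'.1, τ'.2) : Traj S A R (m+1)))
          = myE m (fun s1 => p 0 s0 a0 (s1, r0)) (fun k => pol k.succ) (fun k => p k.succ)
            (fun τ' => rval r0 + sumRew rval τ') :=
        myE_congr _ _ _ _ _ _ fun τ' => by rw [sumRew_cons]
      rw [h1, myE_add]
      have h2 : myE m (fun s1 => p 0 s0 a0 (s1, r0)) (fun k => pol k.succ) (fun k => p k.succ)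
          (fun _ => rval r0) = ∑ s1 : S, p 0 s0 a0 (s1, r0) * rval r0 :=
        myE_init m _ _ _ (fun t s => hpol1 t.succ s) (fun t s a => hpsum t.succ s a)
          (fun _ => rval r0)
      have h3 : myE m (fun s1 => p 0 s0 a0 (s1, r0)) (fun k => pol k.succ) (fun k => p k.succ)
          (sumRew rval) = ∑ s1 : S, p 0 s0 a0 (s1, r0) * Vnext m (fun k => V k.succ) 0 s1 := by
        refine IH _ _ _ rval (fun k => Q k.succ) (fun k => V k.succ)
          (fun t s => hpol1 t.succ s) (fun t s a => hpsum t.succ s a) ?_ ?_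
        · intro t s a
          have := hQ t.succ s a
          refine this.trans (Finset.sum_congr rfl fun sr _ => ?_)
          congr 1
          rw [Vnext_succ]
          congr 1
        · intro t s
          exact hV t.succ s
      rw [h2, h3, ← Finset.sum_add_distrib]
      refine Finset.sum_congr rfl fun s1 _ => ?_
      rw [Vnext_succ]
      ring
    calc ∑ s0 : S, ∑ a0 : A, ∑ r0 : R, p1 s0 * pol 0 s0 a0 *
          myE m (fun s1 => p 0 s0 a0 (s1, r0)) (fun k => pol k.succ) (fun k => p k.succ)
            (fun τ' => sumRew rval ((Fin.cons (s0,a0,r0) τ'.1, τ'.2) : Traj S A R (m+1)))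
        = ∑ s0 : S, ∑ a0 : A, p1 s0 * pol 0 s0 a0 *
            (∑ r0 : R, ∑ s1 : S, p 0 s0 a0 (s1, r0) * (rval r0 + Vnext (m+1) V 1 s1)) := by
          refine Finset.sum_congr rfl fun s0 _ => Finset.sum_congr rfl fun a0 _ => ?_
          rw [Finset.mul_sum]
          exact Finset.sum_congr rfl fun r0 _ => by rw [hin]
      _ = ∑ s0 : S, ∑ a0 : A, p1 s0 * pol 0 s0 a0 * Q 0 s0 a0 := by
          refine Finset.sum_congr rfl fun s0 _ => Finset.sum_congr rfl fun a0 _ => ?_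
          congr 1
          rw [hQ 0 s0 a0, Fintype.sum_prod_type, Finset.sum_comm]
          rfl
      _ = ∑ s0 : S, p1 s0 * Vnext (m+1) V 0 s0 := by
          refine Finset.sum_congr rfl fun s0 _ => ?_
          have h0 : Vnext (m+1) V 0 s0 = V 0 s0 := by
            rw [Vnext, dif_pos (Nat.succ_pos m)]
            rfl
          rw [h0, hV 0 s0, Finset.mul_sum]
          exact Finset.sum_congr rfl fun a0 _ => by ring


lemma myE_state0 {m : ℕ} (p1 : S → ℝ) (pol : Fin (m+1) → S → A → ℝ)
    (p : Fin (m+1) → S → A → S × R → ℝ)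
    (hpol1 : ∀ t s, ∑ a, pol t s a = 1) (hpsum : ∀ t s a, ∑ sr : S × R, p t s a sr = 1)
    (G : S → ℝ) :
    myE (m+1) p1 pol p (fun τ => G (stateAt τ 0)) = ∑ s : S, p1 s * G s := by
  rw [← myE_init (m+1) p1 pol p hpol1 hpsum G]
  exact myE_congr _ _ _ _ _ _ fun τ => by rw [initState_eq]

lemma myE_mart : ∀ (H : ℕ) (p1 : S → ℝ) (pol : Fin H → S → A → ℝ)
    (p : Fin H → S → A → S × R → ℝ) (rval : R → ℝ)
    (Q : Fin H → S → A → ℝ) (V : Fin H → S → ℝ) (cvar : Fin H → S → A → ℝ),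
    (∀ t s, ∑ a, pol t s a = 1) → (∀ t s a, ∑ sr : S × R, p t s a sr = 1) →
    (∀ t s a, Q t s a = ∑ sr : S × R, p t s a sr * (rval sr.2 + Vnext H V ((t : ℕ)+1) sr.1)) →
    (∀ t s, V t s = ∑ a, pol t s a * Q t s a) →
    (∀ t s a, cvar t s a
      = (∑ sr : S × R, p t s a sr * (rval sr.2 + Vnext H V ((t : ℕ)+1) sr.1) ^ 2)
        - (∑ sr : S × R, p t s a sr * (rval sr.2 + Vnext H V ((t : ℕ)+1) sr.1)) ^ 2) →
    myE H p1 pol p (fun τ => (sumRew rval τ) ^ 2)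
      = (∑ s : S, p1 s * (Vnext H V 0 s) ^ 2)
        + (∑ t : Fin H, myE H p1 pol p (fun τ =>
            (∑ a, pol t (stateAt τ t) a * (Q t (stateAt τ t) a) ^ 2)
              - (V t (stateAt τ t)) ^ 2))
        + (∑ t : Fin H, myE H p1 pol p (fun τ => cvar t (stateAt τ t) (actAt τ t))) := by
  intro H
  induction H with
  | zero =>
    intro p1 pol p rval Q V cvar _ _ _ _ _
    rw [myE_zero]
    simp [sumRew, Vnext]
  | succ m IH =>
    intro p1 pol p rval Q V cvar hpol1 hpsum hQ hV hcvar
    -- tail data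
    have hpol1' : ∀ (t : Fin m) s, ∑ a, pol t.succ s a = 1 := fun t s => hpol1 t.succ s
    have hpsum' : ∀ (t : Fin m) s a, ∑ sr : S × R, p t.succ s a sr = 1 :=
      fun t s a => hpsum t.succ s a
    have hQ' : ∀ (t : Fin m) s a, Q t.succ s a
        = ∑ sr : S × R, p t.succ s a sr
            * (rval sr.2 + Vnext m (fun k => V k.succ) ((t : ℕ)+1) sr.1) := by
      intro t s a
      refine (hQ t.succ s a).trans (Finset.sum_congr rfl fun sr _ => ?_)
      congr 1
      rw [Vnext_succ]
      congr 1
    have hV' : ∀ (t : Fin m) s, V t.succ s = ∑ a, pol t.succ s a * Q t.succ s a :=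
      fun t s => hV t.succ s
    have hcvar' : ∀ (t : Fin m) s a, cvar t.succ s a
        = (∑ sr : S × R, p t.succ s a sr
            * (rval sr.2 + Vnext m (fun k => V k.succ) ((t : ℕ)+1) sr.1) ^ 2)
          - (∑ sr : S × R, p t.succ s a sr
              * (rval sr.2 + Vnext m (fun k => V k.succ) ((t : ℕ)+1) sr.1)) ^ 2 := by
      intro t s a
      refine (hcvar t.succ s a).trans ?_
      congr 1
      · exact Finset.sum_congr rfl fun sr _ => by rw [Vnext_succ]; rfl
      · congr 1
        exact Finset.sum_congr rfl fun sr _ => by rw [Vnext_succ]; rfl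
    -- the inner expectation at fixed (s0, a0, r0)
    have hin : ∀ (s0 : S) (a0 : A) (r0 : R),
        myE m (fun s1 => p 0 s0 a0 (s1, r0)) (fun k => pol k.succ) (fun k => p k.succ)
          (fun τ' => (sumRew rval ((Fin.cons (s0,a0,r0) τ'.1, τ'.2) : Traj S A R (m+1))) ^ 2)
        = (∑ s1 : S, p 0 s0 a0 (s1, r0) * (rval r0 + Vnext (m+1) V 1 s1) ^ 2)
          + (∑ k : Fin m, myE m (fun s1 => p 0 s0 a0 (s1, r0)) (fun k' => pol k'.succ)
              (fun k' => p k'.succ) (fun τ =>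
                (∑ a, pol k.succ (stateAt τ k) a * (Q k.succ (stateAt τ k) a) ^ 2)
                  - (V k.succ (stateAt τ k)) ^ 2))
          + (∑ k : Fin m, myE m (fun s1 => p 0 s0 a0 (s1, r0)) (fun k' => pol k'.succ)
              (fun k' => p k'.succ)
              (fun τ => cvar k.succ (stateAt τ k) (actAt τ k))) := by
      intro s0 a0 r0
      have h1 : myE m (fun s1 => p 0 s0 a0 (s1, r0)) (fun k => pol k.succ) (fun k => p k.succ)
          (fun τ' => (sumRew rval ((Fin.cons (s0,a0,r0) τ'.1, τ'.2) : Traj S A R (m+1))) ^ 2)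
          = myE m (fun s1 => p 0 s0 a0 (s1, r0)) (fun k => pol k.succ) (fun k => p k.succ)
            (fun τ' => (rval r0) ^ 2 + (2 * rval r0 * sumRew rval τ'
              + (sumRew rval τ') ^ 2)) :=
        myE_congr _ _ _ _ _ _ fun τ' => by rw [sumRew_cons]; ring
      rw [h1, myE_add, myE_add]
      have h2 : myE m (fun s1 => p 0 s0 a0 (s1, r0)) (fun k => pol k.succ) (fun k => p k.succ)
          (fun _ => (rval r0) ^ 2) = ∑ s1 : S, p 0 s0 a0 (s1, r0) * (rval r0) ^ 2 :=
        myE_init m _ _ _ hpol1' hpsum' (fun _ => (rval r0) ^ 2)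
      have h3 : myE m (fun s1 => p 0 s0 a0 (s1, r0)) (fun k => pol k.succ) (fun k => p k.succ)
          (fun τ' => 2 * rval r0 * sumRew rval τ')
          = 2 * rval r0 * ∑ s1 : S, p 0 s0 a0 (s1, r0) * Vnext (m+1) V 1 s1 := by
        rw [myE_smul]
        congr 1
        have := myE_mean m (fun s1 => p 0 s0 a0 (s1, r0)) (fun k => pol k.succ)
          (fun k => p k.succ) rval (fun k => Q k.succ) (fun k => V k.succ)
          hpol1' hpsum' hQ' hV'
        rw [this]
        exact Finset.sum_congr rfl fun s1 _ => by rw [Vnext_succ]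
      have h4 := IH (fun s1 => p 0 s0 a0 (s1, r0)) (fun k => pol k.succ) (fun k => p k.succ)
        rval (fun k => Q k.succ) (fun k => V k.succ) (fun k => cvar k.succ)
        hpol1' hpsum' hQ' hV' hcvar'
      rw [h2, h3, h4]
      have h5 : ∑ s1 : S, p 0 s0 a0 (s1, r0) * (Vnext m (fun k => V k.succ) 0 s1) ^ 2
          = ∑ s1 : S, p 0 s0 a0 (s1, r0) * (Vnext (m+1) V 1 s1) ^ 2 :=
        Finset.sum_congr rfl fun s1 _ => by rw [Vnext_succ]
      rw [h5]
      have h6 : (∑ s1 : S, p 0 s0 a0 (s1, r0) * (rval r0) ^ 2)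
            + 2 * rval r0 * (∑ s1 : S, p 0 s0 a0 (s1, r0) * Vnext (m+1) V 1 s1)
            + (∑ s1 : S, p 0 s0 a0 (s1, r0) * (Vnext (m+1) V 1 s1) ^ 2)
          = ∑ s1 : S, p 0 s0 a0 (s1, r0) * (rval r0 + Vnext (m+1) V 1 s1) ^ 2 := by
        rw [Finset.mul_sum, ← Finset.sum_add_distrib, ← Finset.sum_add_distrib]
        exact Finset.sum_congr rfl fun s1 _ => by ring
      linarith [h6]
    -- head identity per (s,a)
    have hsa : ∀ s a, (∑ r0 : R, ∑ s1 : S, p 0 s a (s1, r0)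
          * (rval r0 + Vnext (m+1) V 1 s1) ^ 2)
        = (Q 0 s a) ^ 2 + cvar 0 s a := by
      intro s a
      have h7 : (Q 0 s a) ^ 2 + cvar 0 s a
          = ∑ sr : S × R, p 0 s a sr
              * (rval sr.2 + Vnext (m+1) V (((0 : Fin (m+1)) : ℕ)+1) sr.1) ^ 2 := by
        rw [hcvar 0 s a, ← hQ 0 s a]
        ring
      rw [h7, Fintype.sum_prod_type, Finset.sum_comm]
      rfl
    have hswap : ∀ (G : S → A → R → Fin m → ℝ),
        (∑ s0 : S, ∑ a0 : A, ∑ r0 : R, ∑ k : Fin m, G s0 a0 r0 k)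
          = ∑ k : Fin m, ∑ s0 : S, ∑ a0 : A, ∑ r0 : R, G s0 a0 r0 k := by
      intro G
      have h1 : ∀ s0 a0, (∑ r0 : R, ∑ k : Fin m, G s0 a0 r0 k)
          = ∑ k : Fin m, ∑ r0 : R, G s0 a0 r0 k := fun s0 a0 => Finset.sum_comm
      have h2 : ∀ s0, (∑ a0 : A, ∑ r0 : R, ∑ k : Fin m, G s0 a0 r0 k)
          = ∑ k : Fin m, ∑ a0 : A, ∑ r0 : R, G s0 a0 r0 k := by
        intro s0
        rw [Finset.sum_congr rfl fun a0 _ => h1 s0 a0]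
        exact Finset.sum_comm
      rw [Finset.sum_congr rfl fun s0 _ => h2 s0]
      exact Finset.sum_comm
    rw [myE_succ]
    have hLHS : (∑ s0 : S, ∑ a0 : A, ∑ r0 : R, p1 s0 * pol 0 s0 a0 *
        myE m (fun s1 => p 0 s0 a0 (s1, r0)) (fun k => pol k.succ) (fun k => p k.succ)
          (fun τ' => (sumRew rval ((Fin.cons (s0,a0,r0) τ'.1, τ'.2) : Traj S A R (m+1))) ^ 2))
        = (∑ s0 : S, ∑ a0 : A, p1 s0 * pol 0 s0 a0 * ((Q 0 s0 a0) ^ 2 + cvar 0 s0 a0))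
          + ((∑ k : Fin m, ∑ s0 : S, ∑ a0 : A, ∑ r0 : R, p1 s0 * pol 0 s0 a0 *
              myE m (fun s1 => p 0 s0 a0 (s1, r0)) (fun k' => pol k'.succ) (fun k' => p k'.succ)
                (fun τ => (∑ a, pol k.succ (stateAt τ k) a * (Q k.succ (stateAt τ k) a) ^ 2)
                  - (V k.succ (stateAt τ k)) ^ 2))
          + (∑ k : Fin m, ∑ s0 : S, ∑ a0 : A, ∑ r0 : R, p1 s0 * pol 0 s0 a0 *
              myE m (fun s1 => p 0 s0 a0 (s1, r0)) (fun k' => pol k'.succ) (fun k' => p k'.succ)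
                (fun τ => cvar k.succ (stateAt τ k) (actAt τ k)))) := by
      calc (∑ s0 : S, ∑ a0 : A, ∑ r0 : R, p1 s0 * pol 0 s0 a0 *
            myE m (fun s1 => p 0 s0 a0 (s1, r0)) (fun k => pol k.succ) (fun k => p k.succ)
              (fun τ' => (sumRew rval ((Fin.cons (s0,a0,r0) τ'.1, τ'.2) : Traj S A R (m+1))) ^ 2))
          = ∑ s0 : S, ∑ a0 : A, ∑ r0 : R,
              (p1 s0 * pol 0 s0 a0 * (∑ s1 : S, p 0 s0 a0 (s1, r0)
                  * (rval r0 + Vnext (m+1) V 1 s1) ^ 2)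
                + ((∑ k : Fin m, p1 s0 * pol 0 s0 a0 *
                    myE m (fun s1 => p 0 s0 a0 (s1, r0)) (fun k' => pol k'.succ)
                      (fun k' => p k'.succ)
                      (fun τ => (∑ a, pol k.succ (stateAt τ k) a
                          * (Q k.succ (stateAt τ k) a) ^ 2)
                        - (V k.succ (stateAt τ k)) ^ 2))
                  + (∑ k : Fin m, p1 s0 * pol 0 s0 a0 *
                      myE m (fun s1 => p 0 s0 a0 (s1, r0)) (fun k' => pol k'.succ)
                        (fun k' => p k'.succ)
                        (fun τ => cvar k.succ (stateAt τ k) (actAt τ k))))) := by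
            refine Finset.sum_congr rfl fun s0 _ => Finset.sum_congr rfl fun a0 _ =>
              Finset.sum_congr rfl fun r0 _ => ?_
            rw [hin s0 a0 r0, ← Finset.mul_sum, ← Finset.mul_sum]
            ring
        _ = (∑ s0 : S, ∑ a0 : A, ∑ r0 : R, p1 s0 * pol 0 s0 a0
              * (∑ s1 : S, p 0 s0 a0 (s1, r0) * (rval r0 + Vnext (m+1) V 1 s1) ^ 2))
            + ((∑ s0 : S, ∑ a0 : A, ∑ r0 : R, ∑ k : Fin m, p1 s0 * pol 0 s0 a0 *
                myE m (fun s1 => p 0 s0 a0 (s1, r0)) (fun k' => pol k'.succ)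
                  (fun k' => p k'.succ)
                  (fun τ => (∑ a, pol k.succ (stateAt τ k) a
                      * (Q k.succ (stateAt τ k) a) ^ 2) - (V k.succ (stateAt τ k)) ^ 2))
              + (∑ s0 : S, ∑ a0 : A, ∑ r0 : R, ∑ k : Fin m, p1 s0 * pol 0 s0 a0 *
                  myE m (fun s1 => p 0 s0 a0 (s1, r0)) (fun k' => pol k'.succ)
                    (fun k' => p k'.succ)
                    (fun τ => cvar k.succ (stateAt τ k) (actAt τ k)))) := by
            simp only [Finset.sum_add_distrib]
        _ = (∑ s0 : S, ∑ a0 : A, p1 s0 * pol 0 s0 a0 * ((Q 0 s0 a0) ^ 2 + cvar 0 s0 a0))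
            + ((∑ k : Fin m, ∑ s0 : S, ∑ a0 : A, ∑ r0 : R, p1 s0 * pol 0 s0 a0 *
                myE m (fun s1 => p 0 s0 a0 (s1, r0)) (fun k' => pol k'.succ)
                  (fun k' => p k'.succ)
                  (fun τ => (∑ a, pol k.succ (stateAt τ k) a
                      * (Q k.succ (stateAt τ k) a) ^ 2) - (V k.succ (stateAt τ k)) ^ 2))
            + (∑ k : Fin m, ∑ s0 : S, ∑ a0 : A, ∑ r0 : R, p1 s0 * pol 0 s0 a0 *
                myE m (fun s1 => p 0 s0 a0 (s1, r0)) (fun k' => pol k'.succ)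
                  (fun k' => p k'.succ)
                  (fun τ => cvar k.succ (stateAt τ k) (actAt τ k)))) := by
            rw [hswap, hswap]
            congr 1
            refine Finset.sum_congr rfl fun s0 _ => Finset.sum_congr rfl fun a0 _ => ?_
            rw [← Finset.mul_sum, hsa s0 a0]
    rw [hLHS]
    -- now handle the RHS
    have hv0 : ∀ s, Vnext (m+1) V 0 s = V 0 s := fun s => by
      rw [Vnext, dif_pos (Nat.succ_pos m)]; rfl
    have hY0 : myE (m+1) p1 pol p (fun τ =>
        (∑ a, pol 0 (stateAt τ 0) a * (Q 0 (stateAt τ 0) a) ^ 2) - (V 0 (stateAt τ 0)) ^ 2)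
        = ∑ s : S, p1 s * ((∑ a, pol 0 s a * (Q 0 s a) ^ 2) - (V 0 s) ^ 2) :=
      myE_state0 p1 pol p hpol1 hpsum (fun s => (∑ a, pol 0 s a * (Q 0 s a) ^ 2) - (V 0 s) ^ 2)
    have hC0 : myE (m+1) p1 pol p (fun τ => cvar 0 (stateAt τ 0) (actAt τ 0))
        = ∑ s : S, ∑ a : A, p1 s * pol 0 s a * cvar 0 s a :=
      myE_init_act p1 pol p hpol1 hpsum (fun s a => cvar 0 s a)
    have hYsucc : ∀ k : Fin m, myE (m+1) p1 pol p (fun τ =>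
        (∑ a, pol k.succ (stateAt τ k.succ) a * (Q k.succ (stateAt τ k.succ) a) ^ 2)
          - (V k.succ (stateAt τ k.succ)) ^ 2)
        = ∑ s0 : S, ∑ a0 : A, ∑ r0 : R, p1 s0 * pol 0 s0 a0 *
            myE m (fun s1 => p 0 s0 a0 (s1, r0)) (fun k' => pol k'.succ) (fun k' => p k'.succ)
              (fun τ => (∑ a, pol k.succ (stateAt τ k) a * (Q k.succ (stateAt τ k) a) ^ 2)
                - (V k.succ (stateAt τ k)) ^ 2) := by
      intro k
      rw [myE_succ]
      refine Finset.sum_congr rfl fun s0 _ => Finset.sum_congr rfl fun a0 _ =>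
        Finset.sum_congr rfl fun r0 _ => ?_
      congr 1
    have hCsucc : ∀ k : Fin m, myE (m+1) p1 pol p (fun τ =>
        cvar k.succ (stateAt τ k.succ) (actAt τ k.succ))
        = ∑ s0 : S, ∑ a0 : A, ∑ r0 : R, p1 s0 * pol 0 s0 a0 *
            myE m (fun s1 => p 0 s0 a0 (s1, r0)) (fun k' => pol k'.succ) (fun k' => p k'.succ)
              (fun τ => cvar k.succ (stateAt τ k) (actAt τ k)) := by
      intro k
      rw [myE_succ]
      refine Finset.sum_congr rfl fun s0 _ => Finset.sum_congr rfl fun a0 _ =>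
        Finset.sum_congr rfl fun r0 _ => ?_
      congr 1
    rw [Fin.sum_univ_succ (f := fun t : Fin (m+1) => myE (m+1) p1 pol p (fun τ =>
      (∑ a, pol t (stateAt τ t) a * (Q t (stateAt τ t) a) ^ 2) - (V t (stateAt τ t)) ^ 2))]
    rw [Fin.sum_univ_succ (f := fun t : Fin (m+1) => myE (m+1) p1 pol p (fun τ =>
      cvar t (stateAt τ t) (actAt τ t)))]
    rw [hY0, hC0]
    rw [Finset.sum_congr rfl fun k (_ : k ∈ Finset.univ) => hYsucc k]
    rw [Finset.sum_congr rfl fun k (_ : k ∈ Finset.univ) => hCsucc k]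
    have hHead : (∑ s0 : S, ∑ a0 : A, p1 s0 * pol 0 s0 a0 * ((Q 0 s0 a0) ^ 2 + cvar 0 s0 a0))
        = (∑ s : S, p1 s * (Vnext (m+1) V 0 s) ^ 2)
          + (∑ s : S, p1 s * ((∑ a, pol 0 s a * (Q 0 s a) ^ 2) - (V 0 s) ^ 2))
          + (∑ s : S, ∑ a : A, p1 s * pol 0 s a * cvar 0 s a) := by
      rw [← Finset.sum_add_distrib, ← Finset.sum_add_distrib]
      refine Finset.sum_congr rfl fun s _ => ?_
      rw [hv0 s]
      have e1 : ∑ a, p1 s * pol 0 s a * ((Q 0 s a) ^ 2 + cvar 0 s a)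
          = (∑ a, p1 s * (pol 0 s a * (Q 0 s a) ^ 2)) + ∑ a, p1 s * pol 0 s a * cvar 0 s a := by
        rw [← Finset.sum_add_distrib]
        exact Finset.sum_congr rfl fun a _ => by ring
      rw [e1, ← Finset.mul_sum]
      ring
    rw [hHead]
    ring

section Ind2
variable [DecidableEq S] [DecidableEq A]

lemma myE_pair (H : ℕ) (p1 : S → ℝ) (pol : Fin H → S → A → ℝ)
    (p : Fin H → S → A → S × R → ℝ) (t : Fin H) (h : S → A → ℝ) :
    myE H p1 pol p (fun τ => h (stateAt τ t) (actAt τ t))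
      = ∑ s : S, ∑ a : A, myE H p1 pol p (indSA t s a) * h s a := by
  have hpt : ∀ τ : Traj S A R H,
      (∑ s : S, ∑ a : A, myP H p1 pol p τ * indSA t s a τ * h s a)
        = myP H p1 pol p τ * h (stateAt τ t) (actAt τ t) := by
    intro τ
    simp [indSA, ite_and, mul_ite, mul_one, mul_zero, ite_mul, zero_mul,
      Finset.sum_ite_eq, Finset.sum_ite_eq']
  calc myE H p1 pol p (fun τ => h (stateAt τ t) (actAt τ t))
      = ∑ τ : Traj S A R H, ∑ s : S, ∑ a : A,
          myP H p1 pol p τ * indSA t s a τ * h s a := by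
        rw [myE]
        exact Finset.sum_congr rfl fun τ _ => (hpt τ).symm
    _ = ∑ s : S, ∑ a : A, ∑ τ : Traj S A R H,
          myP H p1 pol p τ * indSA t s a τ * h s a := by
        rw [Finset.sum_comm]
        exact Finset.sum_congr rfl fun s _ => Finset.sum_comm
    _ = ∑ s : S, ∑ a : A, myE H p1 pol p (indSA t s a) * h s a := by
        refine Finset.sum_congr rfl fun s _ => Finset.sum_congr rfl fun a _ => ?_
        rw [myE, Finset.sum_mul]

end Ind2

lemma weighted_sq_le {ι : Type} [Fintype ι] (w z : ι → ℝ)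
    (h0 : ∀ i, 0 ≤ w i) (h1 : ∑ i, w i = 1) :
    (∑ i, w i * z i) ^ 2 ≤ ∑ i, w i * z i ^ 2 := by
  have gen : ∀ M : ℝ, 0 ≤ (∑ i, w i * z i ^ 2) - 2 * M * (∑ i, w i * z i) + M ^ 2 := by
    intro M
    have key : 0 ≤ ∑ i, w i * (z i - M) ^ 2 :=
      Finset.sum_nonneg fun i _ => mul_nonneg (h0 i) (sq_nonneg _)
    have expand : ∑ i, w i * (z i - M) ^ 2
        = (∑ i, w i * z i ^ 2) - 2 * M * (∑ i, w i * z i) + M ^ 2 * (∑ i, w i) := by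
      rw [Finset.mul_sum, Finset.mul_sum, ← Finset.sum_sub_distrib, ← Finset.sum_add_distrib]
      exact Finset.sum_congr rfl fun i _ => by ring
    rw [expand, h1, mul_one] at key
    exact key
  have h2 := gen (∑ i, w i * z i)
  nlinarith [h2]

lemma myP_factor_pos (H : ℕ) (p1 : S → ℝ) (pol : Fin H → S → A → ℝ)
    (p : Fin H → S → A → S × R → ℝ) (hp1 : ∀ s, 0 ≤ p1 s)
    (hpol : ∀ t s a, 0 ≤ pol t s a) (hp : ∀ t s a sr, 0 ≤ p t s a sr)
    (τ : Traj S A R H) (hpos : 0 < myP H p1 pol p τ) (t : Fin H) :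
    0 < p t (stateAt τ t) (actAt τ t) (nextStateAt τ t, rewAt τ t) := by
  rcases lt_or_eq_of_le (hp t (stateAt τ t) (actAt τ t) (nextStateAt τ t, rewAt τ t)) with h | h
  · exact h
  · exfalso
    have hz : (pol t (stateAt τ t) (actAt τ t) *
        p t (stateAt τ t) (actAt τ t) (nextStateAt τ t, rewAt τ t)) = 0 := by
      rw [← h, mul_zero]
    have : (∏ t' : Fin H, (pol t' (stateAt τ t') (actAt τ t') *
        p t' (stateAt τ t') (actAt τ t') (nextStateAt τ t', rewAt τ t'))) = 0 :=
      Finset.prod_eq_zero (Finset.mem_univ t) hz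
    rw [myP, this, mul_zero] at hpos
    exact lt_irrefl 0 hpos

lemma myE_sq_bound (H : ℕ) (p1 : S → ℝ) (pol : Fin H → S → A → ℝ)
    (p : Fin H → S → A → S × R → ℝ) (rval : R → ℝ) (Rmax : ℝ)
    (hp1 : ∀ s, 0 ≤ p1 s) (hpol : ∀ t s a, 0 ≤ pol t s a)
    (hp : ∀ t s a sr, 0 ≤ p t s a sr)
    (hpol1 : ∀ t s, ∑ a, pol t s a = 1) (hpsum : ∀ t s a, ∑ sr : S × R, p t s a sr = 1)
    (hp11 : ∑ s, p1 s = 1) (hRmax : 0 ≤ Rmax)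
    (hR : ∀ (t : Fin H) (s : S) (a : A) (sr : S × R),
        0 < p t s a sr → 0 ≤ rval sr.2 ∧ rval sr.2 ≤ Rmax) :
    myE H p1 pol p (fun τ => (sumRew rval τ) ^ 2) ≤ (H : ℝ) ^ 2 * Rmax ^ 2 := by
  have hpt : ∀ τ : Traj S A R H, myP H p1 pol p τ * (sumRew rval τ) ^ 2
      ≤ myP H p1 pol p τ * ((H : ℝ) ^ 2 * Rmax ^ 2) := by
    intro τ
    rcases lt_or_eq_of_le (myP_nonneg H p1 pol p hp1 hpol hp τ) with h | h
    · refine mul_le_mul_of_nonneg_left ?_ (le_of_lt h)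
      have hb : ∀ t : Fin H, 0 ≤ rval (rewAt τ t) ∧ rval (rewAt τ t) ≤ Rmax := by
        intro t
        exact hR t (stateAt τ t) (actAt τ t) (nextStateAt τ t, rewAt τ t)
          (myP_factor_pos H p1 pol p hp1 hpol hp τ h t)
      have h1 : sumRew rval τ ≤ (H : ℝ) * Rmax := by
        rw [sumRew]
        calc ∑ t : Fin H, rval (rewAt τ t) ≤ ∑ _t : Fin H, Rmax :=
              Finset.sum_le_sum fun t _ => (hb t).2
          _ = (H : ℝ) * Rmax := by simp [Finset.sum_const, Finset.card_univ, nsmul_eq_mul]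
      have h0 : 0 ≤ sumRew rval τ := Finset.sum_nonneg fun t _ => (hb t).1
      have := sq_le_sq' (by linarith [mul_nonneg (Nat.cast_nonneg (α := ℝ) H) hRmax] : -((H : ℝ) * Rmax) ≤ sumRew rval τ) h1
      calc (sumRew rval τ) ^ 2 ≤ ((H : ℝ) * Rmax) ^ 2 := this
        _ = (H : ℝ) ^ 2 * Rmax ^ 2 := by ring
    · rw [← h, zero_mul, zero_mul]
  calc myE H p1 pol p (fun τ => (sumRew rval τ) ^ 2)
      ≤ myE H p1 pol p (fun _ => (H : ℝ) ^ 2 * Rmax ^ 2) := Finset.sum_le_sum fun τ _ => hpt τ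
    _ = (H : ℝ) ^ 2 * Rmax ^ 2 := by
        have := myE_init H p1 pol p hpol1 hpsum (fun _ => (H : ℝ) ^ 2 * Rmax ^ 2)
        rw [this, ← Finset.sum_mul, hp11, one_mul]

lemma exists_myP_pos (H : ℕ) (p1 : S → ℝ) (pol : Fin H → S → A → ℝ)
    (p : Fin H → S → A → S × R → ℝ)
    (hpol1 : ∀ t s, ∑ a, pol t s a = 1) (hpsum : ∀ t s a, ∑ sr : S × R, p t s a sr = 1)
    (hp11 : ∑ s, p1 s = 1) :
    ∃ τ : Traj S A R H, 0 < myP H p1 pol p τ := by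
  by_contra hc
  push_neg at hc
  have h1 : myE H p1 pol p (fun _ => 1) = ∑ s, p1 s := myE_one H p1 pol p hpol1 hpsum
  rw [hp11] at h1
  have h2 : myE H p1 pol p (fun _ => 1) ≤ 0 := by
    rw [myE]
    exact Finset.sum_nonpos fun τ _ => by
      rw [mul_one]; exact hc τ
  linarith

section Conv
variable [DecidableEq S] [DecidableEq A]

lemma trajProb_eq {m : ℕ} (p1 : S → ℝ) (pol : Fin (m+1) → S → A → ℝ)
    (p : Fin (m+1) → S → A → S × R → ℝ) (τ : Traj S A R (m+1)) :
    trajProbT p1 pol p τ = myP (m+1) p1 pol p τ := by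
  rw [trajProbT, myP, initState_eq]

lemma Eexp_eq {m : ℕ} (p1 : S → ℝ) (pol : Fin (m+1) → S → A → ℝ)
    (p : Fin (m+1) → S → A → S × R → ℝ) (f : Traj S A R (m+1) → ℝ) :
    EexpT p1 pol p f = myE (m+1) p1 pol p f := by
  rw [EexpT, myE]
  exact Finset.sum_congr rfl fun τ _ => by rw [trajProb_eq]

lemma margS_eq {m : ℕ} (p1 : S → ℝ) (pol : Fin (m+1) → S → A → ℝ)
    (p : Fin (m+1) → S → A → S × R → ℝ) (t : Fin (m+1)) (s : S) :
    margS p1 pol p t s = myE (m+1) p1 pol p (indS t s) := by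
  rw [margS, myE]
  refine Finset.sum_congr rfl fun τ _ => ?_
  rw [trajProb_eq, indS]
  split <;> simp

lemma margSA_eq {m : ℕ} (p1 : S → ℝ) (pol : Fin (m+1) → S → A → ℝ)
    (p : Fin (m+1) → S → A → S × R → ℝ) (t : Fin (m+1)) (s : S) (a : A) :
    margSA p1 pol p t s a = myE (m+1) p1 pol p (indSA t s a) := by
  rw [margSA, myE]
  refine Finset.sum_congr rfl fun τ _ => ?_
  rw [trajProb_eq, indSA]
  split <;> simp

lemma indSA_nonneg {H : ℕ} (t : Fin H) (s : S) (a : A) (τ : Traj S A R H) :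
    0 ≤ indSA t s a τ := by
  rw [indSA]; split <;> norm_num

end Conv

end Aux

/-- Finite-horizon TMDP with positivity, undiscounted case `γ = 1`.
If rewards occurring with positive probability lie in `[0, R_max]` and
`μ_t(s,a) ≤ C'` on the support of `p_{π^b,t}`, then the TMDP efficiency bound satisfies
`Var_{P_{π^b}}[V_1(s_1)]
  + Σ_{t=1}^H E_{P_{π^b}}[μ_t(s_t,a_t)² var(r_t + V_{t+1}(s_{t+1}) | s_t,a_t)]
  ≤ C' H² R_max²`, i.e. it grows at most quadratically in the horizon. -/
theorem tmdp_efficiency_bound_polynomial_in_horizon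
    [Fintype S] [Fintype A] [Fintype R] [NeZero H] [DecidableEq S] [DecidableEq A]
    (rval : R → ℝ)
    (p1 : S → ℝ) (pib pie : Fin H → S → A → ℝ)
    (p : Fin H → S → A → S × R → ℝ)
    (hp10 : ∀ s, 0 ≤ p1 s) (hp11 : ∑ s, p1 s = 1)
    (hpib0 : ∀ t s a, 0 ≤ pib t s a) (hpib1 : ∀ t s, ∑ a, pib t s a = 1)
    (hpie0 : ∀ t s a, 0 ≤ pie t s a) (hpie1 : ∀ t s, ∑ a, pie t s a = 1)
    (hp0 : ∀ t s a sr, 0 ≤ p t s a sr) (hpsum : ∀ t s a, ∑ sr : S × R, p t s a sr = 1)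
    (hpos : ∀ (t : Fin H) (s : S) (a : A),
        0 < margS p1 pib p t s → 0 < pie t s a → 0 < pib t s a)
    (μ : Fin H → S → A → ℝ)
    (hμ : ∀ t s a, μ t s a = margSA p1 pie p t s a / margSA p1 pib p t s a)
    (Q : Fin H → S → A → ℝ) (V : Fin H → S → ℝ)
    (hQ : ∀ (t : Fin H) (s : S) (a : A), Q t s a = ∑ sr : S × R, p t s a sr *
        (rval sr.2 + (if h2 : (t : ℕ) + 1 < H then V ⟨(t : ℕ) + 1, h2⟩ sr.1 else 0)))
    (hV : ∀ t s, V t s = ∑ a, pie t s a * Q t s a)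
    (cvar : Fin H → S → A → ℝ)
    (hcvar : ∀ (t : Fin H) (s : S) (a : A), cvar t s a =
      (∑ sr : S × R, p t s a sr *
          (rval sr.2 +
            (if h2 : (t : ℕ) + 1 < H then V ⟨(t : ℕ) + 1, h2⟩ sr.1 else 0)) ^ 2)
        - (∑ sr : S × R, p t s a sr *
            (rval sr.2 +
              (if h2 : (t : ℕ) + 1 < H then V ⟨(t : ℕ) + 1, h2⟩ sr.1 else 0))) ^ 2)
    (Rmax C' : ℝ)
    (hR : ∀ (t : Fin H) (s : S) (a : A) (sr : S × R),
        0 < p t s a sr → 0 ≤ rval sr.2 ∧ rval sr.2 ≤ Rmax)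
    (hC' : ∀ (t : Fin H) (s : S) (a : A), 0 < margSA p1 pib p t s a → μ t s a ≤ C') :
    (EexpT p1 pib p (fun τ => V 0 (stateAt τ 0) ^ 2)
        - (EexpT p1 pib p (fun τ => V 0 (stateAt τ 0))) ^ 2)
      + (∑ t : Fin H, EexpT p1 pib p (fun τ =>
          μ t (stateAt τ t) (actAt τ t) ^ 2 * cvar t (stateAt τ t) (actAt τ t)))
      ≤ C' * (H : ℝ) ^ 2 * Rmax ^ 2 := by
  obtain ⟨m, rfl⟩ := Nat.exists_eq_succ_of_ne_zero (NeZero.ne H)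
  have hQv : ∀ (t : Fin (m+1)) (s : S) (a : A), Q t s a = ∑ sr : S × R, p t s a sr *
      (rval sr.2 + Vnext (m+1) V ((t : ℕ)+1) sr.1) := fun t s a => hQ t s a
  have hcvarv : ∀ (t : Fin (m+1)) (s : S) (a : A), cvar t s a =
      (∑ sr : S × R, p t s a sr * (rval sr.2 + Vnext (m+1) V ((t : ℕ)+1) sr.1) ^ 2)
        - (∑ sr : S × R, p t s a sr * (rval sr.2 + Vnext (m+1) V ((t : ℕ)+1) sr.1)) ^ 2 :=
    fun t s a => hcvar t s a
  have hcv0 : ∀ (t : Fin (m+1)) (s : S) (a : A), 0 ≤ cvar t s a := by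
    intro t s a
    rw [hcvarv t s a]
    have := weighted_sq_le (fun sr : S × R => p t s a sr)
      (fun sr => rval sr.2 + Vnext (m+1) V ((t : ℕ)+1) sr.1) (fun sr => hp0 t s a sr)
      (hpsum t s a)
    linarith [this]
  have hPb : ∀ τ, 0 ≤ myP (m+1) p1 pib p τ := myP_nonneg _ _ _ _ hp10 hpib0 hp0
  have hPe : ∀ τ, 0 ≤ myP (m+1) p1 pie p τ := myP_nonneg _ _ _ _ hp10 hpie0 hp0
  have hposm : ∀ (t : Fin (m+1)) (s : S) (a : A),
      0 < myE (m+1) p1 pib p (indS t s) → 0 < pie t s a → 0 < pib t s a := by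
    intro t s a h1 h2
    exact hpos t s a (by rw [margS_eq]; exact h1) h2
  have hAC : ∀ (t : Fin (m+1)) (s : S) (a : A), myE (m+1) p1 pie p (indSA t s a) ≠ 0 →
      0 < myE (m+1) p1 pib p (indSA t s a) := by
    intro t s a hne
    have hfe := margSA_fact (m+1) p1 pie p hpie1 hpsum t s a
    have hfb := margSA_fact (m+1) p1 pib p hpib1 hpsum t s a
    have hSe : 0 < myE (m+1) p1 pie p (indS t s) := by
      rcases lt_or_eq_of_le (myE_nonneg (m+1) p1 pie p _ hPe (indS_nonneg t s)) with h | h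
      · exact h
      · exact absurd (by rw [hfe, ← h, zero_mul]) hne
    have hpie_pos : 0 < pie t s a := by
      rcases lt_or_eq_of_le (hpie0 t s a) with h | h
      · exact h
      · exact absurd (by rw [hfe, ← h, mul_zero]) hne
    have hSb : 0 < myE (m+1) p1 pib p (indS t s) :=
      pos_transfer (m+1) p1 pib pie p hp10 hpib0 hpie0 hp0 hpib1 hpie1 hpsum hposm t s hSe
    rw [hfb]
    exact mul_pos hSb (hposm t s a hSb hpie_pos)
  have hSAe0 : ∀ (t : Fin (m+1)) (s : S) (a : A), 0 ≤ myE (m+1) p1 pie p (indSA t s a) :=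
    fun t s a => myE_nonneg _ _ _ _ _ hPe (indSA_nonneg t s a)
  have hSAb0 : ∀ (t : Fin (m+1)) (s : S) (a : A), 0 ≤ myE (m+1) p1 pib p (indSA t s a) :=
    fun t s a => myE_nonneg _ _ _ _ _ hPb (indSA_nonneg t s a)
  have hμb : ∀ (t : Fin (m+1)) (s : S) (a : A), 0 < myE (m+1) p1 pib p (indSA t s a) →
      myE (m+1) p1 pie p (indSA t s a) = μ t s a * myE (m+1) p1 pib p (indSA t s a)
        ∧ μ t s a ≤ C' ∧ 0 ≤ μ t s a := by
    intro t s a hb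
    have h1 : μ t s a
        = myE (m+1) p1 pie p (indSA t s a) / myE (m+1) p1 pib p (indSA t s a) := by
      rw [hμ t s a, margSA_eq, margSA_eq]
    refine ⟨?_, ?_, ?_⟩
    · rw [h1]
      field_simp
    · exact hC' t s a (by rw [margSA_eq]; exact hb)
    · rw [h1]
      exact div_nonneg (hSAe0 t s a) (le_of_lt hb)
  have hzero_e : ∀ (t : Fin (m+1)) (s : S) (a : A), myE (m+1) p1 pib p (indSA t s a) = 0 →
      myE (m+1) p1 pie p (indSA t s a) = 0 := by
    intro t s a hb
    by_contra hne
    have := hAC t s a hne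
    rw [hb] at this
    exact lt_irrefl 0 this
  have hpointB : ∀ (t : Fin (m+1)) (s : S) (a : A),
      myE (m+1) p1 pib p (indSA t s a) * (μ t s a ^ 2 * cvar t s a)
        ≤ C' * (myE (m+1) p1 pie p (indSA t s a) * cvar t s a) := by
    intro t s a
    rcases lt_or_eq_of_le (hSAb0 t s a) with hb | hb
    · obtain ⟨heq, hle, h0μ⟩ := hμb t s a hb
      rw [heq]
      nlinarith [mul_nonneg (mul_nonneg (mul_nonneg (sub_nonneg.2 hle) h0μ)
        (le_of_lt hb)) (hcv0 t s a)]
    · rw [← hb, hzero_e t s a hb.symm]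
      simp
  -- the B term bound
  have hB : (∑ t : Fin (m+1), EexpT p1 pib p (fun τ =>
        μ t (stateAt τ t) (actAt τ t) ^ 2 * cvar t (stateAt τ t) (actAt τ t)))
      ≤ C' * ∑ t : Fin (m+1),
          myE (m+1) p1 pie p (fun τ => cvar t (stateAt τ t) (actAt τ t)) := by
    rw [Finset.mul_sum]
    refine Finset.sum_le_sum fun t _ => ?_
    have h1 : EexpT p1 pib p (fun τ =>
        μ t (stateAt τ t) (actAt τ t) ^ 2 * cvar t (stateAt τ t) (actAt τ t))
        = ∑ s : S, ∑ a : A, myE (m+1) p1 pib p (indSA t s a) * (μ t s a ^ 2 * cvar t s a) :=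
      (Eexp_eq p1 pib p _).trans
        (myE_pair (m+1) p1 pib p t (fun s a => μ t s a ^ 2 * cvar t s a))
    have h2 : myE (m+1) p1 pie p (fun τ => cvar t (stateAt τ t) (actAt τ t))
        = ∑ s : S, ∑ a : A, myE (m+1) p1 pie p (indSA t s a) * cvar t s a :=
      myE_pair (m+1) p1 pie p t (fun s a => cvar t s a)
    rw [h1, h2, Finset.mul_sum]
    refine Finset.sum_le_sum fun s _ => ?_
    rw [Finset.mul_sum]
    exact Finset.sum_le_sum fun a _ => hpointB t s a
  -- C' ≥ 1
  have hsum_e : ∑ s : S, ∑ a : A, myE (m+1) p1 pie p (indSA 0 s a) = 1 := by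
    have h1 : myE (m+1) p1 pie p (fun _ => (1:ℝ))
        = ∑ s : S, ∑ a : A, myE (m+1) p1 pie p (indSA 0 s a) * 1 :=
      myE_pair (m+1) p1 pie p 0 (fun _ _ => (1:ℝ))
    rw [myE_one (m+1) p1 pie p hpie1 hpsum, hp11] at h1
    simpa using h1.symm
  have hsum_b : ∑ s : S, ∑ a : A, myE (m+1) p1 pib p (indSA 0 s a) = 1 := by
    have h1 : myE (m+1) p1 pib p (fun _ => (1:ℝ))
        = ∑ s : S, ∑ a : A, myE (m+1) p1 pib p (indSA 0 s a) * 1 :=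
      myE_pair (m+1) p1 pib p 0 (fun _ _ => (1:ℝ))
    rw [myE_one (m+1) p1 pib p hpib1 hpsum, hp11] at h1
    simpa using h1.symm
  have hC1 : 1 ≤ C' := by
    have hpt : ∀ s a, myE (m+1) p1 pie p (indSA 0 s a)
        ≤ C' * myE (m+1) p1 pib p (indSA 0 s a) := by
      intro s a
      rcases lt_or_eq_of_le (hSAb0 0 s a) with hb | hb
      · obtain ⟨heq, hle, _⟩ := hμb 0 s a hb
        rw [heq]
        exact mul_le_mul_of_nonneg_right hle (le_of_lt hb)
      · rw [← hb, hzero_e 0 s a hb.symm]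
        simp
    calc (1:ℝ) = ∑ s : S, ∑ a : A, myE (m+1) p1 pie p (indSA 0 s a) := hsum_e.symm
      _ ≤ ∑ s : S, ∑ a : A, C' * myE (m+1) p1 pib p (indSA 0 s a) :=
          Finset.sum_le_sum fun s _ => Finset.sum_le_sum fun a _ => hpt s a
      _ = C' * ∑ s : S, ∑ a : A, myE (m+1) p1 pib p (indSA 0 s a) := by
          rw [Finset.mul_sum]
          exact Finset.sum_congr rfl fun s _ => by rw [Finset.mul_sum]
      _ = C' := by rw [hsum_b, mul_one]
  -- Rmax nonneg
  have hR0 : 0 ≤ Rmax := by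
    obtain ⟨τ, hτ⟩ := exists_myP_pos (m+1) p1 pie p hpie1 hpsum hp11
    have hf := myP_factor_pos (m+1) p1 pie p hp10 hpie0 hp0 τ hτ 0
    exact le_trans (hR 0 _ _ _ hf).1 (hR 0 _ _ _ hf).2
  -- martingale decomposition
  have hmart := myE_mart (m+1) p1 pie p rval Q V cvar hpie1 hpsum hQv hV hcvarv
  have hv0 : ∀ s, Vnext (m+1) V 0 s = V 0 s := fun s => by
    rw [Vnext, dif_pos (Nat.succ_pos m)]; rfl
  have hVb2eq : (∑ s : S, p1 s * (Vnext (m+1) V 0 s) ^ 2)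
      = ∑ s : S, p1 s * (V 0 s) ^ 2 :=
    Finset.sum_congr rfl fun s _ => by rw [hv0 s]
  rw [hVb2eq] at hmart
  have hSY : 0 ≤ ∑ t : Fin (m+1), myE (m+1) p1 pie p (fun τ =>
      (∑ a, pie t (stateAt τ t) a * (Q t (stateAt τ t) a) ^ 2)
        - (V t (stateAt τ t)) ^ 2) := by
    refine Finset.sum_nonneg fun t _ => myE_nonneg _ _ _ _ _ hPe fun τ => ?_
    have := weighted_sq_le (fun a => pie t (stateAt τ t) a) (fun a => Q t (stateAt τ t) a)
      (fun a => hpie0 t (stateAt τ t) a) (hpie1 t (stateAt τ t))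
    rw [← hV t (stateAt τ t)] at this
    linarith [this]
  have hSC : 0 ≤ ∑ t : Fin (m+1), myE (m+1) p1 pie p (fun τ =>
      cvar t (stateAt τ t) (actAt τ t)) :=
    Finset.sum_nonneg fun t _ => myE_nonneg _ _ _ _ _ hPe fun τ =>
      hcv0 t (stateAt τ t) (actAt τ t)
  have hVb2nn : 0 ≤ ∑ s : S, p1 s * (V 0 s) ^ 2 :=
    Finset.sum_nonneg fun s _ => mul_nonneg (hp10 s) (sq_nonneg _)
  have hM2 : myE (m+1) p1 pie p (fun τ => (sumRew rval τ) ^ 2)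
      ≤ ((m+1 : ℕ) : ℝ) ^ 2 * Rmax ^ 2 :=
    myE_sq_bound (m+1) p1 pie p rval Rmax hp10 hpie0 hp0 hpie1 hpsum hp11 hR0 hR
  have hHsq0 : (0:ℝ) ≤ ((m+1 : ℕ) : ℝ) ^ 2 * Rmax ^ 2 :=
    mul_nonneg (sq_nonneg _) (sq_nonneg _)
  -- rewrite the variance terms
  have hVar2 : EexpT p1 pib p (fun τ => V 0 (stateAt τ 0) ^ 2)
      = ∑ s : S, p1 s * (V 0 s) ^ 2 :=
    (Eexp_eq p1 pib p _).trans (myE_state0 p1 pib p hpib1 hpsum (fun s => (V 0 s) ^ 2))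
  have hVar1 : EexpT p1 pib p (fun τ => V 0 (stateAt τ 0))
      = ∑ s : S, p1 s * V 0 s :=
    (Eexp_eq p1 pib p _).trans (myE_state0 p1 pib p hpib1 hpsum (fun s => V 0 s))
  rw [hVar2, hVar1]
  have hSCle : (∑ t : Fin (m+1), myE (m+1) p1 pie p (fun τ =>
      cvar t (stateAt τ t) (actAt τ t))) ≤ ((m+1 : ℕ) : ℝ) ^ 2 * Rmax ^ 2 := by
    linarith [hmart, hM2, hSY, hVb2nn]
  have hprod := mul_le_mul_of_nonneg_left hSCle (sub_nonneg.2 hC1)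
  nlinarith [hB, hmart, hM2, hSY, hSC, sq_nonneg (∑ s : S, p1 s * V 0 s), hprod]
end

section
/- In the finite discounted MDP setting with positivity, the policy value is identified by marginal importance sampling: J(γ) = (1−γ)^{−1} E_{(s,a,r,s′)∼p_b}[μ*(s,a)·r], where μ*(s,a) = p^{(∞)}_{e,γ}(s)π^e(a|s)/(p_b(s)π^b(a|s)) is the marginal density ratio. -/
/-!
Swapping the series over time with the finite sum over states writes `(1 - γ) J(γ)` as the
expected one-step reward of `π^e` under the discounted visitation distribution `p^{(∞)}_{e,γ}`;
the swap is legitimate because every `p_e^{(t)}` is a probability vector, so the series converge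
geometrically. Multiplying by the marginal ratio `μ*` turns `p_b π^b` back into
`p^{(∞)}_{e,γ} π^e`, and positivity guarantees this also where `p_b π^b` vanishes.
-/

open Finset Matrix

section MarkovChain

variable {S : Type*} [Fintype S] [DecidableEq S] {M : Matrix S S ℝ} {q : ℕ → S → ℝ}

theorem nonneg_of_vecMul_rowStochastic (hM : M ∈ rowStochastic ℝ S) (h0 : ∀ s, 0 ≤ q 0 s)
    (hq : ∀ n, q (n + 1) = q n ᵥ* M) (n : ℕ) : ∀ s, 0 ≤ q n s := by
  induction n with
  | zero => exact h0
  | succ n ih => rw [hq]; exact nonneg_vecMul_of_mem_rowStochastic hM ih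

theorem sum_eq_one_of_vecMul_rowStochastic (hM : M ∈ rowStochastic ℝ S) (h0 : ∑ s, q 0 s = 1)
    (hq : ∀ n, q (n + 1) = q n ᵥ* M) (n : ℕ) : ∑ s, q n s = 1 := by
  induction n with
  | zero => exact h0
  | succ n ih =>
    rw [← dotProduct_one] at ih ⊢
    rw [hq]
    exact vecMul_dotProduct_one_eq_one_rowStochastic hM ih

theorem summable_pow_mul_of_abs_le {γ C : ℝ} {f : ℕ → ℝ} (hγ0 : 0 ≤ γ) (hγ1 : γ < 1)
    (hf : ∀ n, |f n| ≤ C) : Summable fun n => γ ^ n * f n :=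
  ((summable_geometric_of_lt_one hγ0 hγ1).mul_right C).of_norm_bounded fun n => by
    rw [norm_mul, norm_pow, Real.norm_of_nonneg hγ0, Real.norm_eq_abs]
    exact mul_le_mul_of_nonneg_left (hf n) (pow_nonneg hγ0 n)

theorem summable_pow_mul_of_vecMul_rowStochastic {γ : ℝ} (hγ0 : 0 ≤ γ) (hγ1 : γ < 1)
    (hM : M ∈ rowStochastic ℝ S) (h0 : ∀ s, 0 ≤ q 0 s) (h1 : ∑ s, q 0 s = 1)
    (hq : ∀ n, q (n + 1) = q n ᵥ* M) (s : S) : Summable fun n => γ ^ n * q n s := by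
  refine summable_pow_mul_of_abs_le (C := 1) hγ0 hγ1 fun n => abs_le.2 ⟨?_, ?_⟩
  · linarith [nonneg_of_vecMul_rowStochastic hM h0 hq n s]
  · rw [← sum_eq_one_of_vecMul_rowStochastic hM h1 hq n]
    exact single_le_sum (fun s _ => nonneg_of_vecMul_rowStochastic hM h0 hq n s) (mem_univ s)

end MarkovChain

theorem sum_tsum_mul_eq_tsum_sum_mul {ι : Type*} [Fintype ι] {f : ℕ → ι → ℝ}
    (hf : ∀ i, Summable fun n => f n i) (c : ι → ℝ) :
    ∑ i, (∑' n, f n i) * c i = ∑' n, ∑ i, f n i * c i := by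
  simp_rw [← tsum_mul_right]
  exact (Summable.tsum_finsetSum fun i _ => (hf i).mul_right (c i)).symm

theorem mul_div_cancel_of_pos_imp_pos {K : Type*} [Field K] [LinearOrder K] [IsStrictOrderedRing K]
    {x y : K} (hx : 0 ≤ x) (h : 0 < x → 0 < y) : y * (x / y) = x :=
  mul_div_cancel_of_imp' fun hy => by
    by_contra hne
    exact (h (hx.lt_of_ne' hne)).ne' hy

section PolicyKernel

variable {S A R : Type*} [Fintype S] [Fintype A] [Fintype R]

/-- The state transition matrix of the Markov chain obtained by running the policy `π` in the
MDP with transition/reward kernel `p`. -/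
def policyKernel (π : S → A → ℝ) (p : S → A → S × R → ℝ) : Matrix S S ℝ :=
  Matrix.of fun s s' => ∑ a, π s a * ∑ r, p s a (s', r)

theorem policyKernel_mem_rowStochastic [DecidableEq S] {π : S → A → ℝ} {p : S → A → S × R → ℝ}
    (hπ0 : ∀ s a, 0 ≤ π s a) (hπ1 : ∀ s, ∑ a, π s a = 1)
    (hp0 : ∀ s a sr, 0 ≤ p s a sr) (hp1 : ∀ s a, ∑ sr, p s a sr = 1) :
    policyKernel π p ∈ rowStochastic ℝ S := by
  refine mem_rowStochastic_iff_sum.2 ⟨fun s s' => ?_, fun s => ?_⟩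
  · exact sum_nonneg fun a _ => mul_nonneg (hπ0 s a) (sum_nonneg fun r _ => hp0 s a (s', r))
  · simp only [policyKernel, of_apply]
    rw [sum_comm]
    simp_rw [← mul_sum, ← Fintype.sum_prod_type', hp1, mul_one, hπ1]

theorem vecMul_policyKernel_apply (d : S → ℝ) (π : S → A → ℝ) (p : S → A → S × R → ℝ) (s' : S) :
    (d ᵥ* policyKernel π p) s' = ∑ s, ∑ a, d s * π s a * ∑ r, p s a (s', r) := by
  simp only [vecMul, dotProduct, policyKernel, of_apply, mul_sum, mul_assoc]

end PolicyKernel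

theorem mdp_marginal_is_identification_general
    {S A R : Type} [Fintype S] [Fintype A] [Fintype R]
    (rval : R → ℝ) (γ : ℝ) (hγ0 : 0 ≤ γ) (hγ1 : γ < 1)
    (p : S → A → S × R → ℝ)
    (hp0 : ∀ s a sr, 0 ≤ p s a sr) (hpsum : ∀ s a, ∑ sr : S × R, p s a sr = 1)
    (pie : S → A → ℝ) (hpie0 : ∀ s a, 0 ≤ pie s a) (hpie1 : ∀ s, ∑ a, pie s a = 1)
    (p1e : S → ℝ) (hp1e0 : ∀ s, 0 ≤ p1e s) (hp1e1 : ∑ s, p1e s = 1)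
    (pb : S → ℝ)
    (pib : S → A → ℝ)
    (pe : ℕ → S → ℝ)
    (hpe0 : ∀ s, pe 0 s = p1e s)
    (hpeS : ∀ n s', pe (n + 1) s' = ∑ s, ∑ a, pe n s * pie s a * ∑ r : R, p s a (s', r))
    (pinf : S → ℝ) (hpinf : ∀ s, pinf s = (1 - γ) * ∑' n : ℕ, γ ^ n * pe n s)
    (J : ℝ)
    (hJ : J = ∑' n : ℕ, γ ^ n *
        ∑ s, ∑ a, ∑ sr : S × R, pe n s * pie s a * p s a sr * rval sr.2)
    (μ : S → A → ℝ) (hμ : ∀ s a, μ s a = pinf s * pie s a / (pb s * pib s a))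
    (hpos : ∀ s a, 0 < pinf s * pie s a → 0 < pb s * pib s a) :
    J = (1 - γ)⁻¹ *
        ∑ s, ∑ a, ∑ sr : S × R, pb s * pib s a * p s a sr * (μ s a * rval sr.2) := by
  classical
  have hK := policyKernel_mem_rowStochastic hpie0 hpie1 hp0 hpsum
  have hstep : ∀ n, pe (n + 1) = pe n ᵥ* policyKernel pie p := fun n =>
    funext fun s' => (hpeS n s').trans (vecMul_policyKernel_apply _ _ _ s').symm
  have hpe0_nonneg : ∀ s, 0 ≤ pe 0 s := fun s => hpe0 s ▸ hp1e0 s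
  have hpe0_sum : ∑ s, pe 0 s = 1 := by simpa only [hpe0] using hp1e1
  have hpe_nonneg := nonneg_of_vecMul_rowStochastic hK hpe0_nonneg hstep
  have hsummable :=
    summable_pow_mul_of_vecMul_rowStochastic hγ0 hγ1 hK hpe0_nonneg hpe0_sum hstep
  have hweight : ∀ s a, pb s * pib s a * μ s a = pinf s * pie s a := fun s a => by
    have hpinf_nonneg : 0 ≤ pinf s := hpinf s ▸ mul_nonneg (by linarith)
      (tsum_nonneg fun n => mul_nonneg (pow_nonneg hγ0 n) (hpe_nonneg n s))
    rw [hμ]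
    exact mul_div_cancel_of_pos_imp_pos (mul_nonneg hpinf_nonneg (hpie0 s a)) (hpos s a)
  set c : S → ℝ := fun s => ∑ a, pie s a * ∑ sr : S × R, p s a sr * rval sr.2
  calc J = ∑' n, ∑ s, γ ^ n * pe n s * c s := by
        rw [hJ]
        refine tsum_congr fun n => ?_
        simp only [c, mul_sum]
        exact sum_congr rfl fun s _ => sum_congr rfl fun a _ => sum_congr rfl fun sr _ => by ring
    _ = (1 - γ)⁻¹ * ∑ s, pinf s * c s := by
        have hγ : 1 - γ ≠ 0 := by linarith
        rw [← sum_tsum_mul_eq_tsum_sum_mul hsummable, mul_sum]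
        exact sum_congr rfl fun s _ => by rw [hpinf]; field_simp
    _ = _ := by
        congr 1
        simp only [c, mul_sum]
        refine sum_congr rfl fun s _ => sum_congr rfl fun a _ => sum_congr rfl fun sr _ => ?_
        linear_combination (-(p s a sr * rval sr.2)) * hweight s a

/-- Finite discounted MDP with positivity. The policy value is identified
by marginal importance sampling:
`J(γ) = (1−γ)⁻¹ E_{(s,a,r,s') ∼ p_b}[μ*(s,a) · r]`, where
`μ*(s,a) = p^{(∞)}_{e,γ}(s) π^e(a|s) / (p_b(s) π^b(a|s))`. -/
theorem mdp_marginal_is_identification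
    {S A R : Type} [Fintype S] [Fintype A] [Fintype R]
    (rval : R → ℝ) (γ : ℝ) (hγ0 : 0 ≤ γ) (hγ1 : γ < 1)
    (p : S → A → S × R → ℝ)
    (hp0 : ∀ s a sr, 0 ≤ p s a sr) (hpsum : ∀ s a, ∑ sr : S × R, p s a sr = 1)
    (pie : S → A → ℝ) (hpie0 : ∀ s a, 0 ≤ pie s a) (hpie1 : ∀ s, ∑ a, pie s a = 1)
    (p1e : S → ℝ) (hp1e0 : ∀ s, 0 ≤ p1e s) (hp1e1 : ∑ s, p1e s = 1)
    (pb : S → ℝ) (hpb0 : ∀ s, 0 ≤ pb s) (hpb1 : ∑ s, pb s = 1)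
    (pib : S → A → ℝ) (hpib0 : ∀ s a, 0 ≤ pib s a) (hpib1 : ∀ s, ∑ a, pib s a = 1)
    (pe : ℕ → S → ℝ)
    (hpe0 : ∀ s, pe 0 s = p1e s)
    (hpeS : ∀ n s', pe (n + 1) s' = ∑ s, ∑ a, pe n s * pie s a * ∑ r : R, p s a (s', r))
    (pinf : S → ℝ) (hpinf : ∀ s, pinf s = (1 - γ) * ∑' n : ℕ, γ ^ n * pe n s)
    (J : ℝ)
    (hJ : J = ∑' n : ℕ, γ ^ n *
        ∑ s, ∑ a, ∑ sr : S × R, pe n s * pie s a * p s a sr * rval sr.2)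
    (μ : S → A → ℝ) (hμ : ∀ s a, μ s a = pinf s * pie s a / (pb s * pib s a))
    (hpos : ∀ s a, 0 < pinf s * pie s a → 0 < pb s * pib s a) :
    J = (1 - γ)⁻¹ *
        ∑ s, ∑ a, ∑ sr : S × R, pb s * pib s a * p s a sr * (μ s a * rval sr.2) :=
  mdp_marginal_is_identification_general rval γ hγ0 hγ1 p hp0 hpsum pie hpie0 hpie1 p1e hp1e0 hp1e1
    pb pib pe hpe0 hpeS pinf hpinf J hJ μ hμ hpos
end
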